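/- arXiv:2105.10655 — 2 statements merged into one kernel-verified Lean document; each statement's English description precedes it below -/
import Mathlib

section
/- Let Γ be a regular nicely distance-balanced graph with valency k = 4, diameter d = 4 and γ(Γ) = 5. Let x_0, x_1, x_2, x_3, x_4 be a shortest path between two vertices x_0 and x_4 at distance 4, and set D^i_j = D^i_j(x_1,x_0). Then |D^1_2| = 2, |D^2_3| = |D^3_4| = 1, and the unique vertex u of D^1_2 different from x_2 is adjacent to both x_2 and x_3. -/
set_option linter.unusedSectionVars false

open SimpleGraph Finset

/-- `W_{u,v}`: the set of vertices strictly closer to `u` than to `v`. -/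
noncomputable def ndbW {V : Type*} [Fintype V] (G : SimpleGraph V) (u v : V) : Finset V :=
  Finset.univ.filter fun x => G.dist x u < G.dist x v

/-- `D^i_j(u,v)`: the set of vertices at distance `i` from `u` and `j` from `v`. -/
noncomputable def ndbD {V : Type*} [Fintype V] (G : SimpleGraph V) (u v : V) (i j : ℕ) : Finset V :=
  Finset.univ.filter fun x => G.dist x u = i ∧ G.dist x v = j

/-- `G` is nicely distance-balanced with constant `γ`. -/
def IsNDB {V : Type*} [Fintype V] (G : SimpleGraph V) (γ : ℕ) : Prop :=
  ∀ u v : V, G.Adj u v → (ndbW G u v).card = γ ∧ (ndbW G v u).card = γ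

/-- `G` has diameter `d`. -/
def HasDiam {V : Type*} [Fintype V] (G : SimpleGraph V) (d : ℕ) : Prop :=
  (∀ u v : V, G.dist u v ≤ d) ∧ ∃ u v : V, G.dist u v = d

namespace NDB14

variable {V : Type*} [Fintype V] [DecidableEq V] {G : SimpleGraph V} [DecidableRel G.Adj]

lemma dist1 {x y : V} (h : G.Adj x y) : G.dist x y = 1 := dist_eq_one_iff_adj.mpr h

lemma adj_of_dist1 {x y : V} (h : G.dist x y = 1) : G.Adj x y := dist_eq_one_iff_adj.mp h

section Conn

variable (hconn : G.Connected)
include hconn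

lemma tri (x y z : V) : G.dist x z ≤ G.dist x y + G.dist y z := hconn.dist_triangle

lemma eq_of_dist0 {x y : V} (h : G.dist x y = 0) : x = y :=
  ((hconn x y).dist_eq_zero_iff).mp h

/-- step from `x` one step along a geodesic towards `a`. -/
lemma step {x a : V} {n : ℕ} (h : G.dist x a = n + 1) :
    ∃ κ, G.Adj x κ ∧ G.dist κ a = n := by
  obtain ⟨p, hp⟩ := hconn.exists_walk_length_eq_dist x a
  rw [h] at hp
  cases p with
  | nil => simp at hp
  | @cons _ κ _ hadj q =>
      refine ⟨κ, hadj, ?_⟩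
      have h1 : G.dist κ a ≤ n := by
        have := SimpleGraph.dist_le q
        simp only [SimpleGraph.Walk.length_cons] at hp
        omega
      have h2 : G.dist x a ≤ G.dist x κ + G.dist κ a := tri hconn ..
      rw [dist1 hadj] at h2
      omega

end Conn

section Card

lemma card4 {m1 m2 m3 m4 : V} (h12 : m1 ≠ m2) (h13 : m1 ≠ m3) (h14 : m1 ≠ m4)
    (h23 : m2 ≠ m3) (h24 : m2 ≠ m4) (h34 : m3 ≠ m4) :
    ({m1, m2, m3, m4} : Finset V).card = 4 := by
  rw [Finset.card_insert_of_notMem (by simp [h12, h13, h14]),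
    Finset.card_insert_of_notMem (by simp [h23, h24]),
    Finset.card_insert_of_notMem (by simp [h34]), Finset.card_singleton]

lemma card5 {m1 m2 m3 m4 m5 : V} (h12 : m1 ≠ m2) (h13 : m1 ≠ m3) (h14 : m1 ≠ m4)
    (h15 : m1 ≠ m5) (h23 : m2 ≠ m3) (h24 : m2 ≠ m4) (h25 : m2 ≠ m5)
    (h34 : m3 ≠ m4) (h35 : m3 ≠ m5) (h45 : m4 ≠ m5) :
    ({m1, m2, m3, m4, m5} : Finset V).card = 5 := by
  rw [Finset.card_insert_of_notMem (by simp [h12, h13, h14, h15]),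
    card4 h23 h24 h25 h34 h35 h45]

end Card

section NDB

variable (hndb : IsNDB G 5)
include hndb

lemma Wcard {a b : V} (hab : G.Adj a b) : (ndbW G a b).card = 5 := (hndb a b hab).1

omit hndb in
lemma mem_W {x a b : V} : x ∈ ndbW G a b ↔ G.dist x a < G.dist x b := by
  simp [ndbW]

omit hndb in
lemma subW {a b : V} {m1 m2 m3 m4 : V}
    (hm1 : G.dist m1 a < G.dist m1 b) (hm2 : G.dist m2 a < G.dist m2 b)
    (hm3 : G.dist m3 a < G.dist m3 b) (hm4 : G.dist m4 a < G.dist m4 b) :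
    ({m1, m2, m3, m4} : Finset V) ⊆ ndbW G a b := by
  intro x hx
  simp only [Finset.mem_insert, Finset.mem_singleton] at hx
  rw [mem_W]
  rcases hx with rfl | rfl | rfl | rfl <;> assumption

/-- a `5`-element `W`-set with four known distinct members has a fifth one. -/
lemma exists_extra {a b : V} (hab : G.Adj a b) (m1 m2 m3 m4 : V)
    (hm1 : G.dist m1 a < G.dist m1 b) (hm2 : G.dist m2 a < G.dist m2 b)
    (hm3 : G.dist m3 a < G.dist m3 b) (hm4 : G.dist m4 a < G.dist m4 b)
    (h12 : m1 ≠ m2) (h13 : m1 ≠ m3) (h14 : m1 ≠ m4)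
    (h23 : m2 ≠ m3) (h24 : m2 ≠ m4) (h34 : m3 ≠ m4) :
    ∃ u, (G.dist u a < G.dist u b) ∧ u ≠ m1 ∧ u ≠ m2 ∧ u ≠ m3 ∧ u ≠ m4 := by
  have hns : ¬ (ndbW G a b ⊆ ({m1, m2, m3, m4} : Finset V)) := by
    intro h
    have := Finset.card_le_card h
    rw [Wcard hndb hab, card4 h12 h13 h14 h23 h24 h34] at this
    omega
  obtain ⟨u, hu, hnot⟩ := Finset.not_subset.mp hns
  simp only [Finset.mem_insert, Finset.mem_singleton, not_or] at hnot
  exact ⟨u, (mem_W).mp hu, hnot.1, hnot.2.1, hnot.2.2.1, hnot.2.2.2⟩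

/-- a `5`-element `W`-set with five known distinct members is exactly those. -/
lemma exact5 {a b : V} (hab : G.Adj a b) (m1 m2 m3 m4 m5 : V)
    (hm1 : G.dist m1 a < G.dist m1 b) (hm2 : G.dist m2 a < G.dist m2 b)
    (hm3 : G.dist m3 a < G.dist m3 b) (hm4 : G.dist m4 a < G.dist m4 b)
    (hm5 : G.dist m5 a < G.dist m5 b)
    (h12 : m1 ≠ m2) (h13 : m1 ≠ m3) (h14 : m1 ≠ m4) (h15 : m1 ≠ m5)
    (h23 : m2 ≠ m3) (h24 : m2 ≠ m4) (h25 : m2 ≠ m5)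
    (h34 : m3 ≠ m4) (h35 : m3 ≠ m5) (h45 : m4 ≠ m5)
    {x : V} (hx : G.dist x a < G.dist x b) :
    x = m1 ∨ x = m2 ∨ x = m3 ∨ x = m4 ∨ x = m5 := by
  have hsub : ({m1, m2, m3, m4, m5} : Finset V) ⊆ ndbW G a b := by
    intro y hy
    simp only [Finset.mem_insert, Finset.mem_singleton] at hy
    rw [mem_W]
    rcases hy with rfl | rfl | rfl | rfl | rfl <;> assumption
  have heq : ({m1, m2, m3, m4, m5} : Finset V) = ndbW G a b :=
    Finset.eq_of_subset_of_card_le hsub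
      (by rw [Wcard hndb hab, card5 h12 h13 h14 h15 h23 h24 h25 h34 h35 h45])
  have hxW : x ∈ ndbW G a b := (mem_W).mpr hx
  rw [← heq] at hxW
  simpa using hxW

/-- six distinct vertices cannot all lie in a `W`-set of size `5`. -/
lemma no_six {a b : V} (hab : G.Adj a b) (m1 m2 m3 m4 m5 m6 : V)
    (hm1 : G.dist m1 a < G.dist m1 b) (hm2 : G.dist m2 a < G.dist m2 b)
    (hm3 : G.dist m3 a < G.dist m3 b) (hm4 : G.dist m4 a < G.dist m4 b)
    (hm5 : G.dist m5 a < G.dist m5 b) (hm6 : G.dist m6 a < G.dist m6 b)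
    (h12 : m1 ≠ m2) (h13 : m1 ≠ m3) (h14 : m1 ≠ m4) (h15 : m1 ≠ m5) (h16 : m1 ≠ m6)
    (h23 : m2 ≠ m3) (h24 : m2 ≠ m4) (h25 : m2 ≠ m5) (h26 : m2 ≠ m6)
    (h34 : m3 ≠ m4) (h35 : m3 ≠ m5) (h36 : m3 ≠ m6)
    (h45 : m4 ≠ m5) (h46 : m4 ≠ m6) (h56 : m5 ≠ m6) : False := by
  rcases exact5 hndb hab m1 m2 m3 m4 m5 hm1 hm2 hm3 hm4 hm5
      h12 h13 h14 h15 h23 h24 h25 h34 h35 h45 hm6 with h | h | h | h | h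
  exacts [h16 h.symm, h26 h.symm, h36 h.symm, h46 h.symm, h56 h.symm]

end NDB

section Reg

variable (hreg : G.IsRegularOfDegree 4)
include hreg

lemma nbr_card (v : V) : (G.neighborFinset v).card = 4 := by
  rw [G.card_neighborFinset_eq_degree]; exact hreg v

/-- a vertex with three known distinct neighbours has a fourth one. -/
lemma nbr_fourth (v a b c : V) (ha : G.Adj v a) (hb : G.Adj v b) (hc : G.Adj v c)
    (hab : a ≠ b) (hac : a ≠ c) (hbc : b ≠ c) :
    ∃ d, G.Adj v d ∧ d ≠ a ∧ d ≠ b ∧ d ≠ c := by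
  have hns : ¬ (G.neighborFinset v ⊆ ({a, b, c} : Finset V)) := by
    intro h
    have h2 := Finset.card_le_card h
    have h3 : ({a, b, c} : Finset V).card ≤ 3 := by
      refine le_trans (Finset.card_insert_le _ _) (Nat.succ_le_succ ?_)
      refine le_trans (Finset.card_insert_le _ _) (Nat.succ_le_succ ?_)
      simp
    rw [nbr_card hreg] at h2
    omega
  obtain ⟨d, hd, hnot⟩ := Finset.not_subset.mp hns
  simp only [Finset.mem_insert, Finset.mem_singleton, not_or] at hnot
  exact ⟨d, (G.mem_neighborFinset v d).mp hd, hnot.1, hnot.2.1, hnot.2.2⟩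

/-- a vertex of degree `4` has exactly its four known distinct neighbours. -/
lemma nbr_exact (v a b c d : V) (ha : G.Adj v a) (hb : G.Adj v b) (hc : G.Adj v c)
    (hd : G.Adj v d) (hab : a ≠ b) (hac : a ≠ c) (had : a ≠ d)
    (hbc : b ≠ c) (hbd : b ≠ d) (hcd : c ≠ d)
    {x : V} (hx : G.Adj v x) : x = a ∨ x = b ∨ x = c ∨ x = d := by
  have hsub : ({a, b, c, d} : Finset V) ⊆ G.neighborFinset v := by
    intro y hy
    simp only [Finset.mem_insert, Finset.mem_singleton] at hy
    rw [G.mem_neighborFinset]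
    rcases hy with rfl | rfl | rfl | rfl <;> assumption
  have heq : ({a, b, c, d} : Finset V) = G.neighborFinset v :=
    Finset.eq_of_subset_of_card_le hsub
      (by rw [nbr_card hreg, card4 hab hac had hbc hbd hcd])
  have hxm : x ∈ G.neighborFinset v := (G.mem_neighborFinset v x).mpr hx
  rw [← heq] at hxm
  simpa using hxm

end Reg

section Geo

variable (hconn : G.Connected)
include hconn

/-- distances along a geodesic of length 4. -/
lemma geo {z0 z1 z2 z3 z4 : V} (a01 : G.Adj z0 z1) (a12 : G.Adj z1 z2)
    (a23 : G.Adj z2 z3) (a34 : G.Adj z3 z4) (d04 : G.dist z0 z4 = 4) :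
    G.dist z0 z1 = 1 ∧ G.dist z0 z2 = 2 ∧ G.dist z0 z3 = 3 ∧
    G.dist z1 z2 = 1 ∧ G.dist z1 z3 = 2 ∧ G.dist z1 z4 = 3 ∧
    G.dist z2 z3 = 1 ∧ G.dist z2 z4 = 2 ∧ G.dist z3 z4 = 1 := by
  have d01 := dist1 a01
  have d12 := dist1 a12
  have d23 := dist1 a23
  have d34 := dist1 a34
  have t02 := tri hconn z0 z1 z2
  have t03 := tri hconn z0 z2 z3
  have t13 := tri hconn z1 z2 z3
  have t24 := tri hconn z2 z3 z4
  have t14 := tri hconn z1 z2 z4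
  have t04a := tri hconn z0 z2 z4
  have t04b := tri hconn z0 z3 z4
  have t04c := tri hconn z0 z1 z4
  have t14b := tri hconn z1 z3 z4
  refine ⟨by omega, by omega, by omega, by omega, by omega, by omega, by omega, by omega, by omega⟩

end Geo


section More

variable (hconn : G.Connected)

/-- every `W(a,b)` has a member other than `a`. -/
lemma exists_ne_mem (hndb : IsNDB G 5) {a b : V} (hab : G.Adj a b) :
    ∃ x, (G.dist x a < G.dist x b) ∧ x ≠ a := by
  have hns : ¬ (ndbW G a b ⊆ {a}) := by
    intro h
    have := Finset.card_le_card h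
    rw [Wcard hndb hab] at this
    simp at this
  obtain ⟨x, hx, hnot⟩ := Finset.not_subset.mp hns
  exact ⟨x, (mem_W).mp hx, by simpa using hnot⟩

include hconn in
/-- if some vertex is strictly closer to `a` than to its neighbour `b`, then `a` has a
neighbour `κ` with `d(κ,a) = 1` and `d(κ,b) = 2`. -/
lemma gateway {a b : V} (hab : G.Adj a b) {x : V}
    (hx : G.dist x a < G.dist x b) (hne : x ≠ a) :
    ∃ κ, G.Adj a κ ∧ G.dist κ a = 1 ∧ G.dist κ b = 2 := by
  have hd : G.dist a b = 1 := dist1 hab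
  obtain ⟨n, hn⟩ : ∃ n, G.dist x a = n := ⟨_, rfl⟩
  induction n generalizing x with
  | zero => exact absurd (eq_of_dist0 hconn hn) hne
  | succ n ih =>
    have hxb : G.dist x b ≤ G.dist x a + 1 := by
      have := tri hconn x a b; omega
    cases n with
    | zero =>
      refine ⟨x, adj_of_dist1 (by rw [SimpleGraph.dist_comm]; exact hn), hn, by omega⟩
    | succ m =>
      obtain ⟨κ, hadjκ, hκ⟩ := step hconn (show G.dist x a = (m + 1) + 1 from hn)
      have h1 : G.dist κ b ≤ m + 2 := by
        have := tri hconn κ a b; omega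
      have h2 : G.dist x b ≤ 1 + G.dist κ b := by
        have := tri hconn x κ b
        rw [dist1 hadjκ] at this; omega
      refine ih (x := κ) (by omega) ?_ hκ
      intro hEq
      rw [hEq, SimpleGraph.dist_self] at hκ
      omega

/-- a vertex with two known distinct neighbours has two further distinct neighbours. -/
lemma nbr_pair (hreg : G.IsRegularOfDegree 4) (v a b : V)
    (ha : G.Adj v a) (hb : G.Adj v b) (hab : a ≠ b) :
    ∃ c d, G.Adj v c ∧ G.Adj v d ∧ c ≠ d ∧ c ≠ a ∧ c ≠ b ∧ d ≠ a ∧ d ≠ b := by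
  have hsub : ({a, b} : Finset V) ⊆ G.neighborFinset v := by
    intro y hy
    simp only [Finset.mem_insert, Finset.mem_singleton] at hy
    rw [G.mem_neighborFinset]
    rcases hy with rfl | rfl <;> assumption
  have hcard : (G.neighborFinset v \ ({a, b} : Finset V)).card = 2 := by
    rw [Finset.card_sdiff_of_subset hsub, nbr_card hreg v]
    rw [Finset.card_insert_of_notMem (by simp [hab]), Finset.card_singleton]
  have h2 : 1 < (G.neighborFinset v \ ({a, b} : Finset V)).card := by omega
  obtain ⟨c, hc, d, hd, hcd⟩ := Finset.one_lt_card.mp h2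
  simp only [Finset.mem_sdiff, G.mem_neighborFinset, Finset.mem_insert,
    Finset.mem_singleton, not_or] at hc hd
  exact ⟨c, d, hc.1, hd.1, hcd, hc.2.1, hc.2.2, hd.2.1, hd.2.2⟩

include hconn in
/-- all distances along a geodesic of length 4, in both orientations, plus self-distances. -/
lemma geo2 {z0 z1 z2 z3 z4 : V} (a01 : G.Adj z0 z1) (a12 : G.Adj z1 z2)
    (a23 : G.Adj z2 z3) (a34 : G.Adj z3 z4) (d04 : G.dist z0 z4 = 4) :
    G.dist z0 z1 = 1 ∧ G.dist z0 z2 = 2 ∧ G.dist z0 z3 = 3 ∧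
    G.dist z1 z2 = 1 ∧ G.dist z1 z3 = 2 ∧ G.dist z1 z4 = 3 ∧
    G.dist z2 z3 = 1 ∧ G.dist z2 z4 = 2 ∧ G.dist z3 z4 = 1 ∧
    G.dist z1 z0 = 1 ∧ G.dist z2 z0 = 2 ∧ G.dist z3 z0 = 3 ∧ G.dist z4 z0 = 4 ∧
    G.dist z2 z1 = 1 ∧ G.dist z3 z1 = 2 ∧ G.dist z4 z1 = 3 ∧
    G.dist z3 z2 = 1 ∧ G.dist z4 z2 = 2 ∧ G.dist z4 z3 = 1 ∧
    G.dist z0 z0 = 0 ∧ G.dist z1 z1 = 0 ∧ G.dist z2 z2 = 0 ∧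
    G.dist z3 z3 = 0 ∧ G.dist z4 z4 = 0 := by
  obtain ⟨h1, h2, h3, h4, h5, h6, h7, h8, h9⟩ := geo hconn a01 a12 a23 a34 d04
  refine ⟨h1, h2, h3, h4, h5, h6, h7, h8, h9, ?_, ?_, ?_, ?_, ?_, ?_, ?_, ?_, ?_, ?_,
    SimpleGraph.dist_self, SimpleGraph.dist_self, SimpleGraph.dist_self,
    SimpleGraph.dist_self, SimpleGraph.dist_self⟩ <;>
    rw [SimpleGraph.dist_comm] <;> assumption

end More

section Patterns

variable {G : SimpleGraph V} [DecidableRel G.Adj]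
variable (hconn : G.Connected) (hreg : G.IsRegularOfDegree 4) (hndb : IsNDB G 5)

set_option maxHeartbeats 1000000 in
include hconn hreg hndb in
/-- Pattern R is impossible: a geodesic `z0 … z4` of length 4 with a vertex `w ≠ z2`
adjacent to `z1`, with `d(w,z0) = 2` and `d(w,z4) = 4`. -/
lemma kill_R (z0 z1 z2 z3 z4 w : V)
    (a01 : G.Adj z0 z1) (a12 : G.Adj z1 z2) (a23 : G.Adj z2 z3) (a34 : G.Adj z3 z4)
    (d04 : G.dist z0 z4 = 4)
    (aw : G.Adj z1 w) (dw0 : G.dist w z0 = 2) (dw4 : G.dist w z4 = 4)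
    (hwz2 : w ≠ z2) : False := by
  obtain ⟨d01, d02, d03, d12, d13, d14, d23, d24, d34, d10, d20, d30, d40, d21, d31, d41,
    d32, d42, d43, s0, s1, s2, s3, s4⟩ := geo2 hconn a01 a12 a23 a34 d04
  have dw1 : G.dist w z1 = 1 := by rw [SimpleGraph.dist_comm]; exact dist1 aw
  have d1w : G.dist z1 w = 1 := dist1 aw
  have sw : G.dist w w = 0 := SimpleGraph.dist_self
  have dw3 : G.dist w z3 = 3 := by
    have t1 := tri hconn w z1 z3
    have t2 := tri hconn w z3 z4
    omega
  have dw2 : G.dist w z2 = 2 := by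
    have t1 := tri hconn w z1 z2
    have t2 := tri hconn w z2 z4
    omega
  have d0w : G.dist z0 w = 2 := by rw [SimpleGraph.dist_comm]; exact dw0
  have d2w : G.dist z2 w = 2 := by rw [SimpleGraph.dist_comm]; exact dw2
  have d3w : G.dist z3 w = 3 := by rw [SimpleGraph.dist_comm]; exact dw3
  have d4w : G.dist z4 w = 4 := by rw [SimpleGraph.dist_comm]; exact dw4
  -- exactness of W(z1, z0)
  have hex1 : ∀ x : V, G.dist x z1 < G.dist x z0 → x = z1 ∨ x = z2 ∨ x = z3 ∨ x = z4 ∨ x = w := by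
    intro x hx
    exact exact5 hndb a01.symm z1 z2 z3 z4 w (by omega) (by omega) (by omega) (by omega)
      (by omega) (by rintro rfl; omega) (by rintro rfl; omega) (by rintro rfl; omega)
      (by rintro rfl; omega) (by rintro rfl; omega) (by rintro rfl; omega)
      (by rintro rfl; omega) (by rintro rfl; omega) (by rintro rfl; omega)
      (by rintro rfl; omega) hx
  -- exactness of W(z1, w)
  have hexw : ∀ x : V, G.dist x z1 < G.dist x w → x = z1 ∨ x = z0 ∨ x = z2 ∨ x = z3 ∨ x = z4 := by
    intro x hx
    exact exact5 hndb aw z1 z0 z2 z3 z4 (by omega) (by omega) (by omega) (by omega)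
      (by omega) (by rintro rfl; omega) (by rintro rfl; omega) (by rintro rfl; omega)
      (by rintro rfl; omega) (by rintro rfl; omega) (by rintro rfl; omega)
      (by rintro rfl; omega) (by rintro rfl; omega) (by rintro rfl; omega)
      (by rintro rfl; omega) hx
  -- fourth neighbour p of z1
  obtain ⟨p, ap, hp0ne, hp2ne, hpwne⟩ := nbr_fourth hreg z1 z0 z2 w a01.symm a12 aw
    (by rintro rfl; omega) (by rintro rfl; omega) (by rintro rfl; omega)
  have dp1 : G.dist p z1 = 1 := by rw [SimpleGraph.dist_comm]; exact dist1 ap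
  have dp0 : G.dist p z0 = 1 := by
    have hle := tri hconn p z1 z0
    have h0 : G.dist p z0 ≠ 0 := fun h => hp0ne (eq_of_dist0 hconn h)
    have h2 : G.dist p z0 ≠ 2 := by
      intro h
      rcases hex1 p (by omega) with rfl | rfl | rfl | rfl | rfl
      · omega
      · exact hp2ne rfl
      · omega
      · omega
      · exact hpwne rfl
    omega
  have dpw : G.dist p w = 1 := by
    have hle := tri hconn p z1 w
    have h0 : G.dist p w ≠ 0 := fun h => hpwne (eq_of_dist0 hconn h)
    have h2 : G.dist p w ≠ 2 := by
      intro h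
      rcases hexw p (by omega) with rfl | rfl | rfl | rfl | rfl
      · omega
      · omega
      · exact hp2ne rfl
      · omega
      · omega
    omega
  have apw : G.Adj p w := adj_of_dist1 dpw
  have ap0 : G.Adj p z0 := adj_of_dist1 dp0
  -- neighbours of z1 are exactly z0, z2, w, p
  have hnbr1 : ∀ x : V, G.Adj z1 x → x = z0 ∨ x = z2 ∨ x = w ∨ x = p := by
    intro x hx
    exact nbr_exact hreg z1 z0 z2 w p a01.symm a12 aw ap
      (by rintro rfl; omega) (by rintro rfl; omega) (by rintro rfl; omega)
      (by rintro rfl; omega) (by rintro rfl; omega) (by rintro rfl; omega) hx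
  by_cases hpy2 : G.Adj p z2
  · -- p ~ z2 : neighbourhood of p is full and provides no gateway towards z1
    obtain ⟨x, hxmem, hxne⟩ := exists_ne_mem hndb (ap.symm : G.Adj p z1)
    obtain ⟨κ, hκadj, hκp, hκ1⟩ := gateway hconn ap.symm hxmem hxne
    rcases nbr_exact hreg p z0 z1 w z2 ap0 ap.symm apw hpy2
      (by rintro rfl; omega) (by rintro rfl; omega) (by rintro rfl; omega)
      (by rintro rfl; omega) (by rintro rfl; omega) (by rintro rfl; omega) hκadj with
      rfl | rfl | rfl | rfl
    · omega
    · omega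
    · omega
    · omega
  · -- p ≁ z2
    have dp2 : G.dist p z2 = 2 := by
      have hle := tri hconn p z1 z2
      have h0 : G.dist p z2 ≠ 0 := fun h => hp2ne (eq_of_dist0 hconn h)
      have h1 : G.dist p z2 ≠ 1 := fun h => hpy2 (adj_of_dist1 h)
      omega
    obtain ⟨r1, r2, ar1, ar2, hr12, hr1z1, hr1z3, hr2z1, hr2z3⟩ :=
      nbr_pair hreg z2 z1 z3 a12.symm a23 (by rintro rfl; omega)
    have dr1_2 : G.dist r1 z2 = 1 := by rw [SimpleGraph.dist_comm]; exact dist1 ar1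
    have dr2_2 : G.dist r2 z2 = 1 := by rw [SimpleGraph.dist_comm]; exact dist1 ar2
    have hrkey : ∀ r : V, G.Adj z2 r → r ≠ z1 → G.dist r z2 = 1 → G.dist r z1 = 2 := by
      intro r ar hrz1 dr2
      have hle := tri hconn r z2 z1
      have h0 : G.dist r z1 ≠ 0 := fun h => hrz1 (eq_of_dist0 hconn h)
      have h1 : G.dist r z1 ≠ 1 := by
        intro h
        rcases hnbr1 r (adj_of_dist1 (by rw [SimpleGraph.dist_comm]; exact h)) with
          rfl | rfl | rfl | rfl
        · omega
        · omega
        · omega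
        · omega
      omega
    have dr1_1 : G.dist r1 z1 = 2 := hrkey r1 ar1 hr1z1 dr1_2
    have dr2_1 : G.dist r2 z1 = 2 := hrkey r2 ar2 hr2z1 dr2_2
    -- exactness of W(z2, z1)
    have hex21 : ∀ x : V, G.dist x z2 < G.dist x z1 →
        x = z2 ∨ x = z3 ∨ x = r1 ∨ x = r2 ∨ x = z4 := by
      intro x hx
      exact exact5 hndb a12.symm z2 z3 r1 r2 z4 (by omega) (by omega) (by omega) (by omega)
        (by omega) (by rintro rfl; omega) ar1.ne ar2.ne (by rintro rfl; omega)
        hr1z3.symm hr2z3.symm (by rintro rfl; omega) hr12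
        (by rintro rfl; omega) (by rintro rfl; omega) hx
    obtain ⟨o1, o2, ao1, ao2, ho12, ho1z2, ho1z4, ho2z2, ho2z4⟩ :=
      nbr_pair hreg z3 z2 z4 a23.symm a34 (by rintro rfl; omega)
    have key : ∀ o : V, G.Adj z3 o → o ≠ z2 → o ≠ z4 →
        G.dist o z3 = 1 ∧ G.dist o z0 = 2 ∧ G.dist o z4 = 2 := by
      intro o ao hoz2 hoz4
      have do3 : G.dist o z3 = 1 := by rw [SimpleGraph.dist_comm]; exact dist1 ao
      have d3o : G.dist z3 o = 1 := dist1 ao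
      have do1le : G.dist o z1 ≤ 3 := by have := tri hconn o z3 z1; omega
      have do0ge : 2 ≤ G.dist o z0 := by have := tri hconn z3 o z0; omega
      have do0le : G.dist o z0 ≤ 4 := by have := tri hconn o z1 z0; omega
      have ho1 : G.dist o z1 ≠ 1 := by
        intro h
        rcases hnbr1 o (adj_of_dist1 (by rw [SimpleGraph.dist_comm]; exact h)) with
          rfl | rfl | rfl | rfl
        · omega
        · exact hoz2 rfl
        · omega
        · omega
      have h3 : G.dist o z0 ≠ 3 := by
        intro h
        have hge : 2 ≤ G.dist o z1 := by have := tri hconn o z1 z0; omega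
        have : G.dist o z1 = 2 ∨ G.dist o z1 = 3 := by omega
        rcases this with h2 | h3'
        · rcases hex1 o (by omega) with rfl | rfl | rfl | rfl | rfl
          · omega
          · exact hoz2 rfl
          · omega
          · exact hoz4 rfl
          · omega
        · have do2 : G.dist o z2 = 2 := by
            have t1 := tri hconn o z2 z1
            have t2 := tri hconn o z3 z2
            omega
          rcases hex21 o (by omega) with rfl | rfl | rfl | rfl | rfl
          · exact hoz2 rfl
          · omega
          · omega
          · omega
          · exact hoz4 rfl
      have h4 : G.dist o z0 ≠ 4 := by
        intro h
        have ho1' : G.dist o z1 = 3 := by have := tri hconn o z1 z0; omega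
        rcases hex1 o (by omega) with rfl | rfl | rfl | rfl | rfl
        · omega
        · exact hoz2 rfl
        · omega
        · exact hoz4 rfl
        · omega
      have do0 : G.dist o z0 = 2 := by omega
      have do4 : G.dist o z4 = 2 := by
        have t1 := tri hconn o z3 z4
        have hc : G.dist z0 o = 2 := by rw [SimpleGraph.dist_comm]; exact do0
        have t2 := tri hconn z0 o z4
        omega
      exact ⟨do3, do0, do4⟩
    obtain ⟨do13, do10, do14⟩ := key o1 ao1 ho1z2 ho1z4
    obtain ⟨do23, do20, do24⟩ := key o2 ao2 ho2z2 ho2z4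
    exact no_six hndb a34 z3 z2 o1 o2 z1 z0
      (by omega) (by omega) (by omega) (by omega) (by omega) (by omega)
      (by rintro rfl; omega) ao1.ne ao2.ne (by rintro rfl; omega) (by rintro rfl; omega)
      ho1z2.symm ho2z2.symm (by rintro rfl; omega) (by rintro rfl; omega)
      ho12 (by rintro rfl; omega) (by rintro rfl; omega)
      (by rintro rfl; omega) (by rintro rfl; omega) (by rintro rfl; omega)

set_option maxHeartbeats 3200000 in
include hconn hreg hndb in
/-- the extra vertex of `W(z1,z0)` cannot lie in `D^3_4`. -/
lemma kill_D34 (z0 z1 z2 z3 z4 u : V)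
    (a01 : G.Adj z0 z1) (a12 : G.Adj z1 z2) (a23 : G.Adj z2 z3) (a34 : G.Adj z3 z4)
    (d04 : G.dist z0 z4 = 4)
    (hex : ∀ x : V, G.dist x z1 < G.dist x z0 → x = z1 ∨ x = z2 ∨ x = z3 ∨ x = z4 ∨ x = u)
    (hu1 : G.dist u z1 = 3) (hu0 : G.dist u z0 = 4) (hune : u ≠ z4) : False := by
  obtain ⟨d01, d02, d03, d12, d13, d14, d23, d24, d34, d10, d20, d30, d40, d21, d31, d41,
    d32, d42, d43, s0, s1, s2, s3, s4⟩ := geo2 hconn a01 a12 a23 a34 d04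
  have su : G.dist u u = 0 := SimpleGraph.dist_self
  have hD23 : ∀ x : V, G.dist x z1 = 2 → G.dist x z0 = 3 → x = z3 := by
    intro x h1 h0
    rcases hex x (by omega) with rfl | rfl | rfl | rfl | rfl
    · omega
    · omega
    · rfl
    · omega
    · omega
  -- u is adjacent to z3
  obtain ⟨κ, hκadj, hκ1⟩ := step hconn (show G.dist u z1 = 2 + 1 from hu1)
  have hκ0 : G.dist κ z0 = 3 := by
    have t1 := tri hconn u κ z0
    have t2 := tri hconn κ z1 z0
    rw [dist1 hκadj] at t1
    omega
  have hκz3 : κ = z3 := hD23 κ hκ1 hκ0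
  have au3 : G.Adj u z3 := by rw [← hκz3]; exact hκadj
  clear hκadj hκ1 hκ0 hκz3
  have du3 : G.dist u z3 = 1 := by rw [SimpleGraph.dist_comm]; exact dist1 au3.symm
  have d3u : G.dist z3 u = 1 := dist1 au3.symm
  have du2 : G.dist u z2 = 2 := by
    have t1 := tri hconn u z3 z2
    have t2 := tri hconn u z2 z1
    omega
  have d2u : G.dist z2 u = 2 := by rw [SimpleGraph.dist_comm]; exact du2
  have d1u : G.dist z1 u = 3 := by rw [SimpleGraph.dist_comm]; exact hu1
  have d0u : G.dist z0 u = 4 := by rw [SimpleGraph.dist_comm]; exact hu0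
  have du4le : G.dist u z4 ≤ 2 := by
    have := tri hconn u z3 z4; omega
  have du4ne : G.dist u z4 ≠ 0 := fun h => hune (eq_of_dist0 hconn h)
  rcases (show G.dist u z4 = 1 ∨ G.dist u z4 = 2 by omega) with du4 | du4
  · -- u is adjacent to z4 (pattern S)
    have au4 : G.Adj u z4 := adj_of_dist1 du4
    have d4u : G.dist z4 u = 1 := by rw [SimpleGraph.dist_comm]; exact du4
    obtain ⟨p, q, apz, aqz, hpq, hpz0, hpz2, hqz0, hqz2⟩ :=
      nbr_pair hreg z1 z0 z2 a01.symm a12 (by rintro rfl; omega)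
    have keyz1 : ∀ t : V, G.Adj z1 t → t ≠ z0 → t ≠ z2 →
        G.dist t z1 = 1 ∧ G.dist t z0 = 1 := by
      intro t at1 ht0 ht2
      have dt1 : G.dist t z1 = 1 := by rw [SimpleGraph.dist_comm]; exact dist1 at1
      refine ⟨dt1, ?_⟩
      have hle := tri hconn t z1 z0
      have h0 : G.dist t z0 ≠ 0 := fun h => ht0 (eq_of_dist0 hconn h)
      have h2 : G.dist t z0 ≠ 2 := by
        intro h
        rcases hex t (by omega) with rfl | rfl | rfl | rfl | rfl
        · omega
        · exact ht2 rfl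
        · omega
        · omega
        · omega
      omega
    obtain ⟨dp1, dp0⟩ := keyz1 p apz hpz0 hpz2
    obtain ⟨dq1, dq0⟩ := keyz1 q aqz hqz0 hqz2
    have hnbr1 : ∀ x : V, G.Adj z1 x → x = z0 ∨ x = z2 ∨ x = p ∨ x = q := by
      intro x hx
      exact nbr_exact hreg z1 z0 z2 p q a01.symm a12 apz aqz
        (by rintro rfl; omega) (by rintro rfl; omega) (by rintro rfl; omega)
        (by rintro rfl; omega) (by rintro rfl; omega) hpq hx
    obtain ⟨e1, e2, ae1, ae2, he12, he1z1, he1z3, he2z1, he2z3⟩ :=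
      nbr_pair hreg z2 z1 z3 a12.symm a23 (by rintro rfl; omega)
    have keyz2 : ∀ e : V, G.Adj z2 e → e ≠ z1 → e ≠ z3 →
        G.dist e z2 = 1 ∧ (G.dist e z0 = 1 ∨ G.dist e z0 = 2) := by
      intro e ae he1 he3
      have de2 : G.dist e z2 = 1 := by rw [SimpleGraph.dist_comm]; exact dist1 ae
      refine ⟨de2, ?_⟩
      have hle : G.dist e z0 ≤ 3 := by have := tri hconn e z2 z0; omega
      have h0 : G.dist e z0 ≠ 0 := by
        intro h
        have := eq_of_dist0 hconn h
        subst this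
        omega
      have h3 : G.dist e z0 ≠ 3 := by
        intro h
        have he1d : G.dist e z1 = 2 := by
          have t1 := tri hconn e z1 z0
          have t2 := tri hconn e z2 z1
          omega
        exact he3 (hD23 e he1d h)
      omega
    obtain ⟨de1_2, de1_0⟩ := keyz2 e1 ae1 he1z1 he1z3
    obtain ⟨de2_2, de2_0⟩ := keyz2 e2 ae2 he2z1 he2z3
    -- killer for a neighbour of z2 at distance 1 from z0
    have killA1 : ∀ e : V, G.Adj z2 e → e ≠ z1 → e ≠ z3 → G.dist e z2 = 1 →
        G.dist e z0 = 1 → False := by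
      intro e ae he1 he3 de2 he0
      have hze : G.dist z0 e = 1 := by rw [SimpleGraph.dist_comm]; exact he0
      have de3 : G.dist e z3 = 2 := by
        have t1 := tri hconn e z2 z3
        have t2 := tri hconn z3 z2 e
        have t3 := tri hconn z0 e z3
        have hc : G.dist z3 e = G.dist e z3 := by rw [SimpleGraph.dist_comm]
        omega
      have he4 : 3 ≤ G.dist e z4 := by
        have t := tri hconn z0 e z4
        omega
      have heu : 3 ≤ G.dist e u := by
        have t := tri hconn z0 e u
        omega
      have hex34 : ∀ x : V, G.dist x z3 < G.dist x z4 →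
          x = z3 ∨ x = z2 ∨ x = z1 ∨ x = z0 ∨ x = e := by
        intro x hx
        exact exact5 hndb a34 z3 z2 z1 z0 e (by omega) (by omega) (by omega) (by omega)
          (by omega) (by rintro rfl; omega) (by rintro rfl; omega) (by rintro rfl; omega)
          (by rintro rfl; omega) (by rintro rfl; omega) (by rintro rfl; omega)
          ae.ne (by rintro rfl; omega) he1.symm (by rintro rfl; omega) hx
      have hex3u : ∀ x : V, G.dist x z3 < G.dist x u →
          x = z3 ∨ x = z2 ∨ x = z1 ∨ x = z0 ∨ x = e := by
        intro x hx
        exact exact5 hndb au3.symm z3 z2 z1 z0 e (by omega) (by omega) (by omega)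
          (by omega) (by omega) (by rintro rfl; omega) (by rintro rfl; omega)
          (by rintro rfl; omega) (by rintro rfl; omega) (by rintro rfl; omega)
          (by rintro rfl; omega) ae.ne (by rintro rfl; omega) he1.symm
          (by rintro rfl; omega) hx
      obtain ⟨w3, aw3, hw3z2, hw3z4, hw3u⟩ := nbr_fourth hreg z3 z2 z4 u a23.symm a34
        au3.symm (by rintro rfl; omega) (by rintro rfl; omega) hune.symm
      have dw33 : G.dist w3 z3 = 1 := by rw [SimpleGraph.dist_comm]; exact dist1 aw3
      have dw34 : G.dist w3 z4 = 1 := by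
        have hle : G.dist w3 z4 ≤ 2 := by have := tri hconn w3 z3 z4; omega
        have h0 : G.dist w3 z4 ≠ 0 := fun h => hw3z4 (eq_of_dist0 hconn h)
        have h2 : G.dist w3 z4 ≠ 2 := by
          intro h
          rcases hex34 w3 (by omega) with rfl | rfl | rfl | rfl | rfl
          · omega
          · exact hw3z2 rfl
          · omega
          · omega
          · omega
        omega
      have dw3u : G.dist w3 u = 1 := by
        have hle : G.dist w3 u ≤ 2 := by have := tri hconn w3 z3 u; omega
        have h0 : G.dist w3 u ≠ 0 := fun h => hw3u (eq_of_dist0 hconn h)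
        have h2 : G.dist w3 u ≠ 2 := by
          intro h
          rcases hex3u w3 (by omega) with rfl | rfl | rfl | rfl | rfl
          · omega
          · exact hw3z2 rfl
          · omega
          · omega
          · omega
        omega
      have hc04 : G.dist z0 w3 = G.dist w3 z0 := by rw [SimpleGraph.dist_comm]
      have dw30ge : 3 ≤ G.dist w3 z0 := by
        have t := tri hconn z0 w3 z4
        omega
      have dw30le : G.dist w3 z0 ≤ 4 := by
        have := tri hconn w3 z3 z0; omega
      have dw30 : G.dist w3 z0 = 3 := by
        by_contra hcon
        have h4 : G.dist w3 z0 = 4 := by omega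
        have hge : 3 ≤ G.dist w3 z1 := by have := tri hconn w3 z1 z0; omega
        have hle : G.dist w3 z1 ≤ 3 := by have := tri hconn w3 z3 z1; omega
        rcases hex w3 (by omega) with rfl | rfl | rfl | rfl | rfl
        · omega
        · exact hw3z2 rfl
        · omega
        · exact hw3z4 rfl
        · exact hw3u rfl
      have dw31 : G.dist w3 z1 = 3 := by
        have hge : 2 ≤ G.dist w3 z1 := by have := tri hconn w3 z1 z0; omega
        have hle : G.dist w3 z1 ≤ 3 := by have := tri hconn w3 z3 z1; omega
        have h2 : G.dist w3 z1 ≠ 2 := by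
          intro h
          have heq := hD23 w3 h dw30
          subst heq
          omega
        omega
      have dw32 : G.dist w3 z2 = 2 := by
        have t1 := tri hconn w3 z2 z1
        have t2 := tri hconn w3 z3 z2
        omega
      have hnbr3 : ∀ x : V, G.Adj z3 x → x = z2 ∨ x = z4 ∨ x = u ∨ x = w3 := by
        intro x hx
        exact nbr_exact hreg z3 z2 z4 u w3 a23.symm a34 au3.symm aw3
          (by rintro rfl; omega) (by rintro rfl; omega) hw3z2.symm hune.symm
          (by rintro rfl; omega) (by rintro rfl; omega) hx
      have hex21 : ∀ x : V, G.dist x z2 < G.dist x z1 →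
          x = z2 ∨ x = z3 ∨ x = z4 ∨ x = u ∨ x = w3 := by
        intro x hx
        exact exact5 hndb a12.symm z2 z3 z4 u w3 (by omega) (by omega) (by omega)
          (by omega) (by omega) (by rintro rfl; omega) (by rintro rfl; omega)
          (by rintro rfl; omega) hw3z2.symm (by rintro rfl; omega)
          (by rintro rfl; omega) (by rintro rfl; omega) hune.symm
          (by rintro rfl; omega) (by rintro rfl; omega) hx
      obtain ⟨n, a4n, hnz3, hnu, hnw3⟩ := nbr_fourth hreg z4 z3 u w3 a34.symm au4.symm
        (adj_of_dist1 dw34).symm (by rintro rfl; omega) (by rintro rfl; omega)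
        (by rintro rfl; omega)
      obtain ⟨m, aum, hmz3, hmz4, hmw3⟩ := nbr_fourth hreg u z3 z4 w3 au3 au4
        (adj_of_dist1 dw3u).symm (by rintro rfl; omega) (by rintro rfl; omega)
        (by rintro rfl; omega)
      have dmu : G.dist m u = 1 := by rw [SimpleGraph.dist_comm]; exact dist1 aum
      have dn4 : G.dist n z4 = 1 := by rw [SimpleGraph.dist_comm]; exact dist1 a4n
      by_cases hnm : n = m
      · -- common fourth neighbour: no gateway from z4 towards u
        obtain ⟨x, hxmem, hxne⟩ := exists_ne_mem hndb (au4.symm : G.Adj z4 u)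
        obtain ⟨κ2, hκ2adj, hκ2a, hκ2b⟩ := gateway hconn au4.symm hxmem hxne
        subst hnm
        rcases nbr_exact hreg z4 z3 u w3 n a34.symm au4.symm (adj_of_dist1 dw34).symm a4n
          (by rintro rfl; omega) (by rintro rfl; omega) hnz3.symm
          (by rintro rfl; omega) hnu.symm hnw3.symm hκ2adj with rfl | rfl | rfl | rfl
        · omega
        · omega
        · omega
        · omega
      · -- two distinct far neighbours n, m
        have key2 : ∀ (X t : V), G.dist X z0 = 4 → G.dist X z1 = 3 → G.dist X z2 = 2 →
            G.dist X z3 = 1 → G.dist t X = 1 → t ≠ z3 → t ≠ w3 → t ≠ z4 → t ≠ u →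
            G.dist t z3 = 2 ∧ G.dist t z1 = 3 ∧ G.dist t z0 = 3 ∧ G.dist t z2 = 3 := by
        -- derive all facts about the far neighbours
          intro X t hX0 hX1 hX2 hX3 htX ht3 htw3 htz4 htu
          have hc2X : G.dist z2 X = 2 := by rw [SimpleGraph.dist_comm]; exact hX2
          have hcXt : G.dist X t = 1 := by rw [SimpleGraph.dist_comm]; exact htX
          have hc0X : G.dist z0 X = 4 := by rw [SimpleGraph.dist_comm]; exact hX0
          have hc0t : G.dist z0 t = G.dist t z0 := by rw [SimpleGraph.dist_comm]
          have hcX3 : G.dist z3 X = G.dist X z3 := by rw [SimpleGraph.dist_comm]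
          have dt3 : G.dist t z3 = 2 := by
            have hle : G.dist t z3 ≤ 2 := by have := tri hconn t X z3; omega
            have h0 : G.dist t z3 ≠ 0 := fun h => ht3 (eq_of_dist0 hconn h)
            have h1 : G.dist t z3 ≠ 1 := by
              intro h
              rcases hnbr3 t (adj_of_dist1 (by rw [SimpleGraph.dist_comm]; exact h)) with
                rfl | rfl | rfl | rfl
              · omega
              · exact htz4 rfl
              · exact htu rfl
              · exact htw3 rfl
            omega
          have ht0ge : 3 ≤ G.dist t z0 := by
            have t' := tri hconn z0 t X
            omega
          have ht1ge : 2 ≤ G.dist t z1 := by have := tri hconn t z1 z0; omega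
          have ht1le : G.dist t z1 ≤ 4 := by
            have t' := tri hconn t z3 z1
            omega
          have ht2ge : 0 ≤ G.dist t z2 := Nat.zero_le _
          have ht1n2 : G.dist t z1 ≠ 2 := by
            intro h
            have h0' : G.dist t z0 = 3 := by
              have := tri hconn t z1 z0; omega
            have heq := hD23 t h h0'
            subst heq
            omega
          have ht2le : G.dist t z2 ≤ 3 := by have := tri hconn t z3 z2; omega
          have ht2ge2 : 2 ≤ G.dist t z2 := by have := tri hconn t z2 z1; omega
          have ht2ne : G.dist t z2 ≠ 2 := by
            intro h
            have hlt : G.dist t z2 < G.dist t z1 := by omega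
            rcases hex21 t hlt with rfl | rfl | rfl | rfl | rfl
            · omega
            · omega
            · exact htz4 rfl
            · exact htu rfl
            · exact htw3 rfl
          have ht2 : G.dist t z2 = 3 := by omega
          have ht1 : G.dist t z1 = 3 := by
            have h4 : G.dist t z1 ≠ 4 := by
              intro h
              have hlt : G.dist t z2 < G.dist t z1 := by omega
              rcases hex21 t hlt with rfl | rfl | rfl | rfl | rfl
              · omega
              · omega
              · exact htz4 rfl
              · exact htu rfl
              · exact htw3 rfl
            omega
          have ht0 : G.dist t z0 = 3 := by
            have hle : G.dist t z0 ≤ 4 := by have := tri hconn t z1 z0; omega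
            have h4 : G.dist t z0 ≠ 4 := by
              intro h
              rcases hex t (by omega) with rfl | rfl | rfl | rfl | rfl
              · omega
              · omega
              · omega
              · exact htz4 rfl
              · exact htu rfl
            omega
          exact ⟨dt3, ht1, ht0, ht2⟩
        obtain ⟨dn3, dn1, dn0, dn2⟩ := key2 z4 n d40 d41 d42 d43 dn4 hnz3 hnw3
          a4n.ne' hnu
        obtain ⟨dm3, dm1, dm0, dm2⟩ := key2 u m hu0 hu1 du2 du3 dmu hmz3 hmw3
          hmz4 aum.ne'
        exact no_six hndb a23.symm z3 z4 u w3 n m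
          (by omega) (by omega) (by omega) (by omega) (by omega) (by omega)
          (by rintro rfl; omega) (by rintro rfl; omega) (by rintro rfl; omega)
          (by rintro rfl; omega) (by rintro rfl; omega)
          hune.symm (by rintro rfl; omega) a4n.ne (by rintro rfl; omega)
          (by rintro rfl; omega) hnu.symm aum.ne
          hnw3.symm hmw3.symm hnm
    rcases de1_0 with h | h
    · exact killA1 e1 ae1 he1z1 he1z3 de1_2 h
    rcases de2_0 with h2 | h2
    · exact killA1 e2 ae2 he2z1 he2z3 de2_2 h2
    -- A = 0 : six vertices in W(z2,z1)
    have keyB : ∀ e : V, G.Adj z2 e → e ≠ z1 → e ≠ z3 → G.dist e z2 = 1 →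
        G.dist e z0 = 2 → G.dist e z1 = 2 := by
      intro e ae he1 he3 de2 he0
      have hle : G.dist e z1 ≤ 2 := by have := tri hconn e z2 z1; omega
      have h0 : G.dist e z1 ≠ 0 := fun h' => he1 (eq_of_dist0 hconn h')
      have h1 : G.dist e z1 ≠ 1 := by
        intro h'
        rcases hnbr1 e (adj_of_dist1 (by rw [SimpleGraph.dist_comm]; exact h')) with
          rfl | rfl | rfl | rfl
        · omega
        · omega
        · omega
        · omega
      omega
    have de1_1 := keyB e1 ae1 he1z1 he1z3 de1_2 h
    have de2_1 := keyB e2 ae2 he2z1 he2z3 de2_2 h2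
    exact no_six hndb a12.symm z2 z3 e1 e2 z4 u
      (by omega) (by omega) (by omega) (by omega) (by omega) (by omega)
      (by rintro rfl; omega) ae1.ne ae2.ne (by rintro rfl; omega) (by rintro rfl; omega)
      he1z3.symm he2z3.symm (by rintro rfl; omega) (by rintro rfl; omega)
      he12 (by rintro rfl; omega) (by rintro rfl; omega)
      (by rintro rfl; omega) (by rintro rfl; omega) hune.symm
  · -- d(u,z4) = 2 : apply pattern R to the reversed geodesic
    exact kill_R hconn hreg hndb z4 z3 z2 z1 z0 u a34.symm a23.symm a12.symm a01.symm
      (by rw [SimpleGraph.dist_comm]; exact d04) au3.symm du4 hu0 (by rintro rfl; omega)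

include hconn hreg in
/-- structure of the neighbourhood of `z1` when `D^1_2(z1,z0) = {z2}`. -/
lemma z1_pq (z0 z1 z2 : V) (a01 : G.Adj z0 z1) (a12 : G.Adj z1 z2)
    (d10 : G.dist z1 z0 = 1) (d20 : G.dist z2 z0 = 2) (d21 : G.dist z2 z1 = 1)
    (s0 : G.dist z0 z0 = 0) (s1 : G.dist z1 z1 = 0)
    (hD12 : ∀ x : V, G.dist x z1 = 1 → G.dist x z0 = 2 → x = z2) :
    ∃ p q : V, G.Adj z1 p ∧ G.Adj z1 q ∧ p ≠ q ∧
      G.dist p z1 = 1 ∧ G.dist p z0 = 1 ∧ G.dist q z1 = 1 ∧ G.dist q z0 = 1 ∧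
      (∀ x : V, G.Adj z1 x → x = z0 ∨ x = z2 ∨ x = p ∨ x = q) := by
  obtain ⟨p, q, apz, aqz, hpq, hpz0, hpz2, hqz0, hqz2⟩ :=
    nbr_pair hreg z1 z0 z2 a01.symm a12 (by rintro rfl; omega)
  have key : ∀ t : V, G.Adj z1 t → t ≠ z0 → t ≠ z2 → G.dist t z1 = 1 ∧ G.dist t z0 = 1 := by
    intro t at1 ht0 ht2
    have dt1 : G.dist t z1 = 1 := by rw [SimpleGraph.dist_comm]; exact dist1 at1
    refine ⟨dt1, ?_⟩
    have hle := tri hconn t z1 z0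
    have h0 : G.dist t z0 ≠ 0 := fun h => ht0 (eq_of_dist0 hconn h)
    have h2 : G.dist t z0 ≠ 2 := fun h => ht2 (hD12 t dt1 h)
    omega
  obtain ⟨dp1, dp0⟩ := key p apz hpz0 hpz2
  obtain ⟨dq1, dq0⟩ := key q aqz hqz0 hqz2
  refine ⟨p, q, apz, aqz, hpq, dp1, dp0, dq1, dq0, ?_⟩
  intro x hx
  exact nbr_exact hreg z1 z0 z2 p q a01.symm a12 apz aqz
    (by rintro rfl; omega) (by rintro rfl; omega) (by rintro rfl; omega)
    (by rintro rfl; omega) (by rintro rfl; omega) hpq hx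

include hconn hreg in
/-- structure of the neighbourhood of `z1` when `D^1_2(z1,z0) = {z2,u}` with `u ~ z1`. -/
lemma z1_p_single (z0 z1 z2 u : V) (a01 : G.Adj z0 z1) (a12 : G.Adj z1 z2)
    (au1 : G.Adj z1 u) (du1 : G.dist u z1 = 1) (du0 : G.dist u z0 = 2) (hune : u ≠ z2)
    (d10 : G.dist z1 z0 = 1) (d20 : G.dist z2 z0 = 2) (d21 : G.dist z2 z1 = 1)
    (s0 : G.dist z0 z0 = 0) (s1 : G.dist z1 z1 = 0)
    (hD12 : ∀ x : V, G.dist x z1 = 1 → G.dist x z0 = 2 → x = z2 ∨ x = u) :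
    ∃ p : V, G.Adj z1 p ∧ G.dist p z1 = 1 ∧ G.dist p z0 = 1 ∧
      (∀ x : V, G.Adj z1 x → x = z0 ∨ x = z2 ∨ x = u ∨ x = p) := by
  obtain ⟨p, apz, hpz0, hpz2, hpu⟩ := nbr_fourth hreg z1 z0 z2 u a01.symm a12 au1
    (by rintro rfl; omega) (by rintro rfl; omega) hune.symm
  have dp1 : G.dist p z1 = 1 := by rw [SimpleGraph.dist_comm]; exact dist1 apz
  have dp0 : G.dist p z0 = 1 := by
    have hle := tri hconn p z1 z0
    have h0 : G.dist p z0 ≠ 0 := fun h => hpz0 (eq_of_dist0 hconn h)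
    have h2 : G.dist p z0 ≠ 2 := by
      intro h
      rcases hD12 p dp1 h with rfl | rfl
      · exact hpz2 rfl
      · exact hpu rfl
    omega
  refine ⟨p, apz, dp1, dp0, ?_⟩
  intro x hx
  exact nbr_exact hreg z1 z0 z2 u p a01.symm a12 au1 apz
    (by rintro rfl; omega) (by rintro rfl; omega) (by rintro rfl; omega)
    hune.symm (by rintro rfl; omega) (by rintro rfl; omega) hx

set_option maxHeartbeats 1600000 in
include hconn hreg hndb in
/-- pattern C4 is impossible: extra vertex `u ∈ D^2_3` with `d(u,z3) = 2`, `d(u,z4) = 3`. -/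
lemma kill_C4 (z0 z1 z2 z3 z4 u : V)
    (a01 : G.Adj z0 z1) (a12 : G.Adj z1 z2) (a23 : G.Adj z2 z3) (a34 : G.Adj z3 z4)
    (d04 : G.dist z0 z4 = 4)
    (hex : ∀ x : V, G.dist x z1 < G.dist x z0 → x = z1 ∨ x = z2 ∨ x = z3 ∨ x = z4 ∨ x = u)
    (hu1 : G.dist u z1 = 2) (hu0 : G.dist u z0 = 3)
    (du3 : G.dist u z3 = 2) (du4 : G.dist u z4 = 3) : False := by
  obtain ⟨d01, d02, d03, d12, d13, d14, d23, d24, d34, d10, d20, d30, d40, d21, d31, d41,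
    d32, d42, d43, s0, s1, s2, s3, s4⟩ := geo2 hconn a01 a12 a23 a34 d04
  have su : G.dist u u = 0 := SimpleGraph.dist_self
  have hD12 : ∀ x : V, G.dist x z1 = 1 → G.dist x z0 = 2 → x = z2 := by
    intro x h1 h0
    rcases hex x (by omega) with rfl | rfl | rfl | rfl | rfl
    · omega
    · rfl
    · omega
    · omega
    · omega
  have hD23 : ∀ x : V, G.dist x z1 = 2 → G.dist x z0 = 3 → x = z3 ∨ x = u := by
    intro x h1 h0
    rcases hex x (by omega) with rfl | rfl | rfl | rfl | rfl
    · omega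
    · omega
    · exact Or.inl rfl
    · omega
    · exact Or.inr rfl
  -- u is adjacent to z2
  obtain ⟨κ, hκadj, hκ1⟩ := step hconn (show G.dist u z1 = 1 + 1 from hu1)
  have hκ0 : G.dist κ z0 = 2 := by
    have t1 := tri hconn u κ z0
    have t2 := tri hconn κ z1 z0
    rw [dist1 hκadj] at t1
    omega
  have hκz2 : κ = z2 := hD12 κ hκ1 hκ0
  have au2 : G.Adj u z2 := by rw [← hκz2]; exact hκadj
  clear hκadj hκ1 hκ0 hκz2
  have du2 : G.dist u z2 = 1 := by rw [SimpleGraph.dist_comm]; exact dist1 au2.symm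
  -- exactness of W(z3,z4)
  have hex34 : ∀ x : V, G.dist x z3 < G.dist x z4 →
      x = z3 ∨ x = z2 ∨ x = z1 ∨ x = z0 ∨ x = u := by
    intro x hx
    exact exact5 hndb a34 z3 z2 z1 z0 u (by omega) (by omega) (by omega) (by omega)
      (by omega) (by rintro rfl; omega) (by rintro rfl; omega) (by rintro rfl; omega)
      (by rintro rfl; omega) (by rintro rfl; omega) (by rintro rfl; omega)
      (by rintro rfl; omega) (by rintro rfl; omega) (by rintro rfl; omega)
      (by rintro rfl; omega) hx
  obtain ⟨w1, w2, aw1, aw2, hw12, hw1z2, hw1z4, hw2z2, hw2z4⟩ :=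
    nbr_pair hreg z3 z2 z4 a23.symm a34 (by rintro rfl; omega)
  have key : ∀ w : V, G.Adj z3 w → w ≠ z2 → w ≠ z4 →
      G.dist w z3 = 1 ∧ G.dist w z1 = 3 ∧ G.dist w z2 = 2 := by
    intro w aw hwz2 hwz4
    have dw3 : G.dist w z3 = 1 := by rw [SimpleGraph.dist_comm]; exact dist1 aw
    have dw4 : G.dist w z4 = 1 := by
      have hle : G.dist w z4 ≤ 2 := by have := tri hconn w z3 z4; omega
      have h0 : G.dist w z4 ≠ 0 := fun h => hwz4 (eq_of_dist0 hconn h)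
      have h2 : G.dist w z4 ≠ 2 := by
        intro h
        rcases hex34 w (by omega) with rfl | rfl | rfl | rfl | rfl
        · omega
        · exact hwz2 rfl
        · omega
        · omega
        · omega
      omega
    have hc0w : G.dist z0 w = G.dist w z0 := by rw [SimpleGraph.dist_comm]
    have dw0ge : 3 ≤ G.dist w z0 := by
      have t := tri hconn z0 w z4
      omega
    have dw1le : G.dist w z1 ≤ 3 := by have := tri hconn w z3 z1; omega
    have dw1ge : 2 ≤ G.dist w z1 := by have := tri hconn w z1 z0; omega
    have dw1ne2 : G.dist w z1 ≠ 2 := by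
      intro h
      have h0' : G.dist w z0 = 3 := by have := tri hconn w z1 z0; omega
      rcases hD23 w h h0' with rfl | rfl
      · omega
      · omega
    have dw1 : G.dist w z1 = 3 := by omega
    have dw0 : G.dist w z0 = 3 := by
      have hle : G.dist w z0 ≤ 4 := by have := tri hconn w z1 z0; omega
      have h4 : G.dist w z0 ≠ 4 := by
        intro h
        rcases hex w (by omega) with rfl | rfl | rfl | rfl | rfl
        · omega
        · exact hwz2 rfl
        · omega
        · exact hwz4 rfl
        · omega
      omega
    have dw2 : G.dist w z2 = 2 := by
      have t1 := tri hconn w z2 z1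
      have t2 := tri hconn w z3 z2
      omega
    exact ⟨dw3, dw1, dw2⟩
  obtain ⟨dw13, dw11, dw12⟩ := key w1 aw1 hw1z2 hw1z4
  obtain ⟨dw23, dw21, dw22⟩ := key w2 aw2 hw2z2 hw2z4
  exact no_six hndb a12.symm z2 z3 u z4 w1 w2
    (by omega) (by omega) (by omega) (by omega) (by omega) (by omega)
    (by rintro rfl; omega) au2.ne' (by rintro rfl; omega) (by rintro rfl; omega)
    (by rintro rfl; omega) (by rintro rfl; omega) (by rintro rfl; omega)
    (by rintro rfl; omega) (by rintro rfl; omega) (by rintro rfl; omega)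
    (by rintro rfl; omega) (by rintro rfl; omega)
    hw1z4.symm hw2z4.symm hw12

set_option maxHeartbeats 1600000 in
include hconn hreg hndb in
/-- pattern C1 is impossible: extra vertex `u ∈ D^2_3` with `d(u,z3) = 1`, `d(u,z4) = 2`. -/
lemma kill_C1 (z0 z1 z2 z3 z4 u : V)
    (a01 : G.Adj z0 z1) (a12 : G.Adj z1 z2) (a23 : G.Adj z2 z3) (a34 : G.Adj z3 z4)
    (d04 : G.dist z0 z4 = 4)
    (hex : ∀ x : V, G.dist x z1 < G.dist x z0 → x = z1 ∨ x = z2 ∨ x = z3 ∨ x = z4 ∨ x = u)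
    (hu1 : G.dist u z1 = 2) (hu0 : G.dist u z0 = 3)
    (du3 : G.dist u z3 = 1) (du4 : G.dist u z4 = 2) : False := by
  obtain ⟨d01, d02, d03, d12, d13, d14, d23, d24, d34, d10, d20, d30, d40, d21, d31, d41,
    d32, d42, d43, s0, s1, s2, s3, s4⟩ := geo2 hconn a01 a12 a23 a34 d04
  have su : G.dist u u = 0 := SimpleGraph.dist_self
  have hD12 : ∀ x : V, G.dist x z1 = 1 → G.dist x z0 = 2 → x = z2 := by
    intro x h1 h0
    rcases hex x (by omega) with rfl | rfl | rfl | rfl | rfl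
    · omega
    · rfl
    · omega
    · omega
    · omega
  have hD23 : ∀ x : V, G.dist x z1 = 2 → G.dist x z0 = 3 → x = z3 ∨ x = u := by
    intro x h1 h0
    rcases hex x (by omega) with rfl | rfl | rfl | rfl | rfl
    · omega
    · omega
    · exact Or.inl rfl
    · omega
    · exact Or.inr rfl
  obtain ⟨κ, hκadj, hκ1⟩ := step hconn (show G.dist u z1 = 1 + 1 from hu1)
  have hκ0 : G.dist κ z0 = 2 := by
    have t1 := tri hconn u κ z0
    have t2 := tri hconn κ z1 z0
    rw [dist1 hκadj] at t1
    omega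
  have hκz2 : κ = z2 := hD12 κ hκ1 hκ0
  have au2 : G.Adj u z2 := by rw [← hκz2]; exact hκadj
  clear hκadj hκ1 hκ0 hκz2
  have du2 : G.dist u z2 = 1 := by rw [SimpleGraph.dist_comm]; exact dist1 au2.symm
  have au3 : G.Adj u z3 := adj_of_dist1 du3
  have hex34 : ∀ x : V, G.dist x z3 < G.dist x z4 →
      x = z3 ∨ x = z2 ∨ x = z1 ∨ x = z0 ∨ x = u := by
    intro x hx
    exact exact5 hndb a34 z3 z2 z1 z0 u (by omega) (by omega) (by omega) (by omega)
      (by omega) (by rintro rfl; omega) (by rintro rfl; omega) (by rintro rfl; omega)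
      (by rintro rfl; omega) (by rintro rfl; omega) (by rintro rfl; omega)
      (by rintro rfl; omega) (by rintro rfl; omega) (by rintro rfl; omega)
      (by rintro rfl; omega) hx
  obtain ⟨t, a3t, htz2, htz4, htu⟩ := nbr_fourth hreg z3 z2 z4 u a23.symm a34 au3.symm
    (by rintro rfl; omega) au2.ne' (by rintro rfl; omega)
  have dt3 : G.dist t z3 = 1 := by rw [SimpleGraph.dist_comm]; exact dist1 a3t
  have dt4 : G.dist t z4 = 1 := by
    have hle : G.dist t z4 ≤ 2 := by have := tri hconn t z3 z4; omega
    have h0 : G.dist t z4 ≠ 0 := fun h => htz4 (eq_of_dist0 hconn h)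
    have h2 : G.dist t z4 ≠ 2 := by
      intro h
      rcases hex34 t (by omega) with rfl | rfl | rfl | rfl | rfl
      · omega
      · exact htz2 rfl
      · omega
      · omega
      · exact htu rfl
    omega
  have hc0t : G.dist z0 t = G.dist t z0 := by rw [SimpleGraph.dist_comm]
  have dt0ge : 3 ≤ G.dist t z0 := by
    have := tri hconn z0 t z4; omega
  have dt1le : G.dist t z1 ≤ 3 := by have := tri hconn t z3 z1; omega
  have dt1ge : 2 ≤ G.dist t z1 := by have := tri hconn t z1 z0; omega
  have dt1 : G.dist t z1 = 3 := by
    have h2 : G.dist t z1 ≠ 2 := by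
      intro h
      have h0' : G.dist t z0 = 3 := by have := tri hconn t z1 z0; omega
      rcases hD23 t h h0' with rfl | rfl
      · omega
      · exact htu rfl
    omega
  have dt0 : G.dist t z0 = 3 := by
    have hle : G.dist t z0 ≤ 4 := by have := tri hconn t z1 z0; omega
    have h4 : G.dist t z0 ≠ 4 := by
      intro h
      rcases hex t (by omega) with rfl | rfl | rfl | rfl | rfl
      · omega
      · exact htz2 rfl
      · omega
      · exact htz4 rfl
      · exact htu rfl
    omega
  have dt2 : G.dist t z2 = 2 := by
    have t1 := tri hconn t z2 z1
    have t2 := tri hconn t z3 z2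
    omega
  have hex21 : ∀ x : V, G.dist x z2 < G.dist x z1 →
      x = z2 ∨ x = z3 ∨ x = u ∨ x = z4 ∨ x = t := by
    intro x hx
    exact exact5 hndb a12.symm z2 z3 u z4 t (by omega) (by omega) (by omega) (by omega)
      (by omega) (by rintro rfl; omega) au2.ne' (by rintro rfl; omega)
      (by rintro rfl; omega) (by rintro rfl; omega) (by rintro rfl; omega)
      (by rintro rfl; omega) (by rintro rfl; omega) (by rintro rfl; omega)
      (by rintro rfl; omega) hx
  obtain ⟨r, a2r, hrz1, hrz3, hru⟩ := nbr_fourth hreg z2 z1 z3 u a12.symm a23 au2.symm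
    (by rintro rfl; omega) (by rintro rfl; omega) (by rintro rfl; omega)
  have dr2 : G.dist r z2 = 1 := by rw [SimpleGraph.dist_comm]; exact dist1 a2r
  have dr1le : G.dist r z1 ≤ 2 := by have := tri hconn r z2 z1; omega
  have dr1ne0 : G.dist r z1 ≠ 0 := fun h => hrz1 (eq_of_dist0 hconn h)
  have dr1 : G.dist r z1 = 1 := by
    have h2 : G.dist r z1 ≠ 2 := by
      intro h
      rcases hex21 r (by omega) with rfl | rfl | rfl | rfl | rfl
      · omega
      · exact hrz3 rfl
      · exact hru rfl
      · omega
      · omega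
    omega
  -- r is a neighbour of z1, hence at distance 1 from z0
  obtain ⟨p, q, apz, aqz, hpq, dp1, dp0, dq1, dq0, hnbr1⟩ := z1_pq hconn hreg z0 z1 z2
    a01 a12 d10 d20 d21 s0 s1 hD12
  have dr0 : G.dist r z0 = 1 := by
    rcases hnbr1 r (adj_of_dist1 (by rw [SimpleGraph.dist_comm]; exact dr1)) with
      rfl | rfl | rfl | rfl
    · omega
    · omega
    · exact dp0
    · exact dq0
  have hc0r : G.dist z0 r = G.dist r z0 := by rw [SimpleGraph.dist_comm]
  have dr3 : G.dist r z3 = 2 := by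
    have t1 := tri hconn r z2 z3
    have t2 := tri hconn z3 r z0
    have hc3r : G.dist z3 r = G.dist r z3 := by rw [SimpleGraph.dist_comm]
    omega
  have dr4 : 3 ≤ G.dist r z4 := by
    have := tri hconn z0 r z4; omega
  rcases hex34 r (by omega) with rfl | rfl | rfl | rfl | rfl
  · omega
  · omega
  · omega
  · omega
  · exact hru rfl

set_option maxHeartbeats 3200000 in
include hconn hreg hndb in
/-- pattern C3 is impossible: extra vertex `u ∈ D^2_3` with `d(u,z3) = 2`, `d(u,z4) = 2`. -/
lemma kill_C3 (z0 z1 z2 z3 z4 u : V)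
    (a01 : G.Adj z0 z1) (a12 : G.Adj z1 z2) (a23 : G.Adj z2 z3) (a34 : G.Adj z3 z4)
    (d04 : G.dist z0 z4 = 4)
    (hex : ∀ x : V, G.dist x z1 < G.dist x z0 → x = z1 ∨ x = z2 ∨ x = z3 ∨ x = z4 ∨ x = u)
    (hu1 : G.dist u z1 = 2) (hu0 : G.dist u z0 = 3)
    (du3 : G.dist u z3 = 2) (du4 : G.dist u z4 = 2) : False := by
  obtain ⟨d01, d02, d03, d12, d13, d14, d23, d24, d34, d10, d20, d30, d40, d21, d31, d41,
    d32, d42, d43, s0, s1, s2, s3, s4⟩ := geo2 hconn a01 a12 a23 a34 d04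
  have su : G.dist u u = 0 := SimpleGraph.dist_self
  have hD12 : ∀ x : V, G.dist x z1 = 1 → G.dist x z0 = 2 → x = z2 := by
    intro x h1 h0
    rcases hex x (by omega) with rfl | rfl | rfl | rfl | rfl
    · omega
    · rfl
    · omega
    · omega
    · omega
  have hD23 : ∀ x : V, G.dist x z1 = 2 → G.dist x z0 = 3 → x = z3 ∨ x = u := by
    intro x h1 h0
    rcases hex x (by omega) with rfl | rfl | rfl | rfl | rfl
    · omega
    · omega
    · exact Or.inl rfl
    · omega
    · exact Or.inr rfl
  obtain ⟨κ, hκadj, hκ1⟩ := step hconn (show G.dist u z1 = 1 + 1 from hu1)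
  have hκ0 : G.dist κ z0 = 2 := by
    have t1 := tri hconn u κ z0
    have t2 := tri hconn κ z1 z0
    rw [dist1 hκadj] at t1
    omega
  have hκz2 : κ = z2 := hD12 κ hκ1 hκ0
  have au2 : G.Adj u z2 := by rw [← hκz2]; exact hκadj
  clear hκadj hκ1 hκ0 hκz2
  have du2 : G.dist u z2 = 1 := by rw [SimpleGraph.dist_comm]; exact dist1 au2.symm
  obtain ⟨p, q, apz, aqz, hpq, dp1, dp0, dq1, dq0, hnbr1⟩ := z1_pq hconn hreg z0 z1 z2
    a01 a12 d10 d20 d21 s0 s1 hD12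
  -- the fourth neighbour r of z2
  obtain ⟨r, a2r, hrz1, hrz3, hru⟩ := nbr_fourth hreg z2 z1 z3 u a12.symm a23 au2.symm
    (by rintro rfl; omega) (by rintro rfl; omega) (by rintro rfl; omega)
  have dr2 : G.dist r z2 = 1 := by rw [SimpleGraph.dist_comm]; exact dist1 a2r
  have hnbr2 : ∀ x : V, G.Adj z2 x → x = z1 ∨ x = z3 ∨ x = u ∨ x = r := by
    intro x hx
    exact nbr_exact hreg z2 z1 z3 u r a12.symm a23 au2.symm a2r
      (by rintro rfl; omega) (by rintro rfl; omega) hrz1.symm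
      (by rintro rfl; omega) hrz3.symm hru.symm hx
  by_cases hr3adj : G.Adj z3 r
  · -- branch 1 : r ~ z3, so r has type (2,2)
    have dr3 : G.dist r z3 = 1 := by rw [SimpleGraph.dist_comm]; exact dist1 hr3adj
    have dr1 : G.dist r z1 = 2 := by
      have hle : G.dist r z1 ≤ 2 := by have := tri hconn r z2 z1; omega
      have h0 : G.dist r z1 ≠ 0 := fun h => hrz1 (eq_of_dist0 hconn h)
      have h1 : G.dist r z1 ≠ 1 := by
        intro h
        have d3r : G.dist z3 r = 1 := dist1 hr3adj
        have t' := tri hconn z3 r z0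
        rcases hnbr1 r (adj_of_dist1 (by rw [SimpleGraph.dist_comm]; exact h)) with
          rfl | rfl | rfl | rfl
        · omega
        · omega
        · omega
        · omega
      omega
    have dr0 : G.dist r z0 = 2 := by
      have hle : G.dist r z0 ≤ 3 := by have := tri hconn r z2 z0; omega
      have h0 : G.dist r z0 ≠ 0 := by
        intro h
        have := eq_of_dist0 hconn h
        subst this
        omega
      have h1 : G.dist r z0 ≠ 1 := by
        intro h
        have d3r : G.dist z3 r = 1 := dist1 hr3adj
        have t' := tri hconn z3 r z0
        omega
      have h3 : G.dist r z0 ≠ 3 := by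
        intro h
        rcases hD23 r dr1 h with rfl | rfl
        · exact hrz3 rfl
        · exact hru rfl
      omega
    have hc0r : G.dist z0 r = G.dist r z0 := by rw [SimpleGraph.dist_comm]
    have hr4 : 2 ≤ G.dist r z4 := by have := tri hconn z0 r z4; omega
    have hex34 : ∀ x : V, G.dist x z3 < G.dist x z4 →
        x = z3 ∨ x = z2 ∨ x = z1 ∨ x = z0 ∨ x = r := by
      intro x hx
      exact exact5 hndb a34 z3 z2 z1 z0 r (by omega) (by omega) (by omega) (by omega)
        (by omega) (by rintro rfl; omega) (by rintro rfl; omega) (by rintro rfl; omega)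
        hr3adj.ne (by rintro rfl; omega) (by rintro rfl; omega) (by rintro rfl; omega)
        (by rintro rfl; omega) (by rintro rfl; omega) (by rintro rfl; omega) hx
    have key_pq : ∀ t : V, G.Adj z1 t → G.dist t z1 = 1 → G.dist t z0 = 1 → t ≠ r →
        G.dist t z2 = 2 ∧ G.dist t z3 = 3 := by
      intro t at1 dt1 dt0 htr
      have dt2 : G.dist t z2 = 2 := by
        have hle : G.dist t z2 ≤ 2 := by have := tri hconn t z1 z2; omega
        have h0 : G.dist t z2 ≠ 0 := by
          intro h
          have := eq_of_dist0 hconn h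
          subst this
          omega
        have h1 : G.dist t z2 ≠ 1 := by
          intro h
          rcases hnbr2 t (adj_of_dist1 (by rw [SimpleGraph.dist_comm]; exact h)) with
            rfl | rfl | rfl | rfl
          · omega
          · omega
          · omega
          · exact htr rfl
        omega
      refine ⟨dt2, ?_⟩
      have hc3t : G.dist z3 t = G.dist t z3 := by rw [SimpleGraph.dist_comm]
      have hge : 2 ≤ G.dist t z3 := by have := tri hconn z3 t z0; omega
      have hle : G.dist t z3 ≤ 3 := by have := tri hconn t z2 z3; omega
      have h2 : G.dist t z3 ≠ 2 := by
        intro h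
        have hc0t : G.dist z0 t = G.dist t z0 := by rw [SimpleGraph.dist_comm]
        have ht4 : 3 ≤ G.dist t z4 := by have := tri hconn z0 t z4; omega
        rcases hex34 t (by omega) with rfl | rfl | rfl | rfl | rfl
        · omega
        · omega
        · omega
        · omega
        · exact htr rfl
      omega
    obtain ⟨dp2, dp3⟩ := key_pq p apz dp1 dp0 (by rintro rfl; omega)
    obtain ⟨dq2, dq3⟩ := key_pq q aqz dq1 dq0 (by rintro rfl; omega)
    exact no_six hndb a23 z2 z1 z0 u p q
      (by omega) (by omega) (by omega) (by omega) (by omega) (by omega)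
      (by rintro rfl; omega) (by rintro rfl; omega) au2.ne' (by rintro rfl; omega)
      (by rintro rfl; omega) (by rintro rfl; omega) (by rintro rfl; omega)
      apz.ne aqz.ne (by rintro rfl; omega) (by rintro rfl; omega)
      (by rintro rfl; omega) (by rintro rfl; omega) (by rintro rfl; omega) hpq
  · -- branch 2 : r ≁ z3
    have dr3 : G.dist r z3 = 2 := by
      have hle : G.dist r z3 ≤ 2 := by have := tri hconn r z2 z3; omega
      have h0 : G.dist r z3 ≠ 0 := fun h => hrz3 (eq_of_dist0 hconn h)
      have h1 : G.dist r z3 ≠ 1 :=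
        fun h => hr3adj (adj_of_dist1 (by rw [SimpleGraph.dist_comm]; exact h))
      omega
    have hexW23 : ∀ x : V, G.dist x z2 < G.dist x z3 →
        x = z2 ∨ x = z1 ∨ x = z0 ∨ x = u ∨ x = r := by
      intro x hx
      exact exact5 hndb a23 z2 z1 z0 u r (by omega) (by omega) (by omega) (by omega)
        (by omega) (by rintro rfl; omega) (by rintro rfl; omega) au2.ne' a2r.ne
        (by rintro rfl; omega) (by rintro rfl; omega) hrz1.symm
        (by rintro rfl; omega) (by rintro rfl; omega) hru.symm hx
    have key2_pq : ∀ t : V, G.Adj z1 t → G.dist t z1 = 1 → G.dist t z0 = 1 → t ≠ r →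
        G.dist t z2 = 2 ∧ G.dist t z3 = 2 ∧ 3 ≤ G.dist t z4 := by
      intro t at1 dt1 dt0 htr
      have dt2 : G.dist t z2 = 2 := by
        have hle : G.dist t z2 ≤ 2 := by have := tri hconn t z1 z2; omega
        have h0 : G.dist t z2 ≠ 0 := by
          intro h
          have := eq_of_dist0 hconn h
          subst this
          omega
        have h1 : G.dist t z2 ≠ 1 := by
          intro h
          rcases hnbr2 t (adj_of_dist1 (by rw [SimpleGraph.dist_comm]; exact h)) with
            rfl | rfl | rfl | rfl
          · omega
          · omega
          · omega
          · exact htr rfl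
        omega
      have hc3t : G.dist z3 t = G.dist t z3 := by rw [SimpleGraph.dist_comm]
      have hge : 2 ≤ G.dist t z3 := by have := tri hconn z3 t z0; omega
      have hle : G.dist t z3 ≤ 3 := by have := tri hconn t z2 z3; omega
      have h3 : G.dist t z3 ≠ 3 := by
        intro h
        rcases hexW23 t (by omega) with rfl | rfl | rfl | rfl | rfl
        · omega
        · omega
        · omega
        · omega
        · exact htr rfl
      have hc0t : G.dist z0 t = G.dist t z0 := by rw [SimpleGraph.dist_comm]
      have ht4 : 3 ≤ G.dist t z4 := by have := tri hconn z0 t z4; omega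
      exact ⟨dt2, by omega, ht4⟩
    by_cases hrp : r = p
    · -- r = p : use q instead
      subst hrp
      have hqr : q ≠ r := hpq.symm
      obtain ⟨dq2', dq3', dq4'⟩ := key2_pq q aqz dq1 dq0 hqr
      have hex34 : ∀ x : V, G.dist x z3 < G.dist x z4 →
          x = z3 ∨ x = z2 ∨ x = z1 ∨ x = z0 ∨ x = q := by
        intro x hx
        exact exact5 hndb a34 z3 z2 z1 z0 q (by omega) (by omega) (by omega) (by omega)
          (by omega) (by rintro rfl; omega) (by rintro rfl; omega) (by rintro rfl; omega)
          (by rintro rfl; omega) (by rintro rfl; omega) (by rintro rfl; omega)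
          (by rintro rfl; omega) (by rintro rfl; omega) aqz.ne
          (by rintro rfl; omega) hx
      obtain ⟨w1, w2, aw1, aw2, hw12, hw1z2, hw1z4, hw2z2, hw2z4⟩ :=
        nbr_pair hreg z3 z2 z4 a23.symm a34 (by rintro rfl; omega)
      have key_w : ∀ w : V, G.Adj z3 w → w ≠ z2 → w ≠ z4 →
          G.dist w z3 = 1 ∧ G.dist w z2 = 2 ∧ G.dist w z1 = 3 := by
        intro w aw hwz2 hwz4
        have dw3 : G.dist w z3 = 1 := by rw [SimpleGraph.dist_comm]; exact dist1 aw
        have d3w : G.dist z3 w = 1 := dist1 aw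
        have h1 : G.dist w z1 ≠ 1 := by
          intro h
          rcases hnbr1 w (adj_of_dist1 (by rw [SimpleGraph.dist_comm]; exact h)) with
            rfl | rfl | rfl | rfl
          · omega
          · exact hwz2 rfl
          · exact hr3adj aw
          · omega
        have hw1le : G.dist w z1 ≤ 3 := by have := tri hconn w z3 z1; omega
        have hw1ge : 1 ≤ G.dist w z1 := by
          have h0 : G.dist w z1 ≠ 0 := by
            intro h
            have := eq_of_dist0 hconn h
            subst this
            omega
          omega
        have hc0w : G.dist z0 w = G.dist w z0 := by rw [SimpleGraph.dist_comm]
        have hw0ge : 2 ≤ G.dist w z0 := by have := tri hconn z3 w z0; omega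
        have hw0le : G.dist w z0 ≤ 4 := by have := tri hconn w z1 z0; omega
        have h02 : G.dist w z0 ≠ 2 := by
          intro h
          have dw4 : G.dist w z4 = 2 := by
            have t1 := tri hconn w z3 z4
            have t2 := tri hconn z0 w z4
            omega
          rcases hex34 w (by omega) with rfl | rfl | rfl | rfl | rfl
          · omega
          · exact hwz2 rfl
          · omega
          · omega
          · omega
        have h04 : G.dist w z0 ≠ 4 := by
          intro h
          have hw1' : G.dist w z1 = 3 := by have := tri hconn w z1 z0; omega
          rcases hex w (by omega) with rfl | rfl | rfl | rfl | rfl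
          · omega
          · exact hwz2 rfl
          · omega
          · exact hwz4 rfl
          · omega
        have hw0 : G.dist w z0 = 3 := by omega
        have hw1 : G.dist w z1 = 3 := by
          have h2 : G.dist w z1 ≠ 2 := by
            intro h
            rcases hD23 w h hw0 with rfl | rfl
            · omega
            · omega
          have := tri hconn w z1 z0
          omega
        have hw2 : G.dist w z2 = 2 := by
          have t1 := tri hconn w z2 z1
          have t2 := tri hconn w z3 z2
          omega
        exact ⟨dw3, hw2, hw1⟩
      obtain ⟨σ, hσmem, hσ2, hσ3, hσ4, hσu⟩ := exists_extra hndb a12.symm z2 z3 z4 u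
        (by omega) (by omega) (by omega) (by omega)
        (by rintro rfl; omega) (by rintro rfl; omega) (by rintro rfl; omega)
        (by rintro rfl; omega) (by rintro rfl; omega) (by rintro rfl; omega)
      have hex21 : ∀ x : V, G.dist x z2 < G.dist x z1 →
          x = z2 ∨ x = z3 ∨ x = z4 ∨ x = u ∨ x = σ := by
        intro x hx
        exact exact5 hndb a12.symm z2 z3 z4 u σ (by omega) (by omega) (by omega)
          (by omega) hσmem (by rintro rfl; omega) (by rintro rfl; omega)
          (by rintro rfl; omega) hσ2.symm (by rintro rfl; omega)
          (by rintro rfl; omega) hσ3.symm (by rintro rfl; omega) hσ4.symm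
          hσu.symm hx
      obtain ⟨dwa3, dwa2, dwa1⟩ := key_w w1 aw1 hw1z2 hw1z4
      obtain ⟨dwb3, dwb2, dwb1⟩ := key_w w2 aw2 hw2z2 hw2z4
      have e1 : w1 = σ := by
        rcases hex21 w1 (by omega) with rfl | rfl | rfl | rfl | rfl
        · omega
        · omega
        · exact absurd rfl hw1z4
        · omega
        · rfl
      have e2 : w2 = σ := by
        rcases hex21 w2 (by omega) with rfl | rfl | rfl | rfl | rfl
        · omega
        · omega
        · exact absurd rfl hw2z4
        · omega
        · rfl
      exact hw12 (e1.trans e2.symm)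
    · by_cases hrq : r = q
      · -- r = q : use p instead
        subst hrq
        have hpr : p ≠ r := hpq
        obtain ⟨dp2', dp3', dp4'⟩ := key2_pq p apz dp1 dp0 hpr
        have hex34 : ∀ x : V, G.dist x z3 < G.dist x z4 →
            x = z3 ∨ x = z2 ∨ x = z1 ∨ x = z0 ∨ x = p := by
          intro x hx
          exact exact5 hndb a34 z3 z2 z1 z0 p (by omega) (by omega) (by omega) (by omega)
            (by omega) (by rintro rfl; omega) (by rintro rfl; omega)
            (by rintro rfl; omega) (by rintro rfl; omega) (by rintro rfl; omega)
            (by rintro rfl; omega) (by rintro rfl; omega) (by rintro rfl; omega)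
            apz.ne (by rintro rfl; omega) hx
        obtain ⟨w1, w2, aw1, aw2, hw12, hw1z2, hw1z4, hw2z2, hw2z4⟩ :=
          nbr_pair hreg z3 z2 z4 a23.symm a34 (by rintro rfl; omega)
        have key_w : ∀ w : V, G.Adj z3 w → w ≠ z2 → w ≠ z4 →
            G.dist w z3 = 1 ∧ G.dist w z2 = 2 ∧ G.dist w z1 = 3 := by
          intro w aw hwz2 hwz4
          have dw3 : G.dist w z3 = 1 := by rw [SimpleGraph.dist_comm]; exact dist1 aw
          have d3w : G.dist z3 w = 1 := dist1 aw
          have h1 : G.dist w z1 ≠ 1 := by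
            intro h
            rcases hnbr1 w (adj_of_dist1 (by rw [SimpleGraph.dist_comm]; exact h)) with
              rfl | rfl | rfl | rfl
            · omega
            · exact hwz2 rfl
            · omega
            · exact hr3adj aw
          have hw1le : G.dist w z1 ≤ 3 := by have := tri hconn w z3 z1; omega
          have hw1ge : 1 ≤ G.dist w z1 := by
            have h0 : G.dist w z1 ≠ 0 := by
              intro h
              have := eq_of_dist0 hconn h
              subst this
              omega
            omega
          have hc0w : G.dist z0 w = G.dist w z0 := by rw [SimpleGraph.dist_comm]
          have hw0ge : 2 ≤ G.dist w z0 := by have := tri hconn z3 w z0; omega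
          have hw0le : G.dist w z0 ≤ 4 := by have := tri hconn w z1 z0; omega
          have h02 : G.dist w z0 ≠ 2 := by
            intro h
            have dw4 : G.dist w z4 = 2 := by
              have t1 := tri hconn w z3 z4
              have t2 := tri hconn z0 w z4
              omega
            rcases hex34 w (by omega) with rfl | rfl | rfl | rfl | rfl
            · omega
            · exact hwz2 rfl
            · omega
            · omega
            · omega
          have h04 : G.dist w z0 ≠ 4 := by
            intro h
            have hw1' : G.dist w z1 = 3 := by have := tri hconn w z1 z0; omega
            rcases hex w (by omega) with rfl | rfl | rfl | rfl | rfl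
            · omega
            · exact hwz2 rfl
            · omega
            · exact hwz4 rfl
            · omega
          have hw0 : G.dist w z0 = 3 := by omega
          have hw1 : G.dist w z1 = 3 := by
            have h2 : G.dist w z1 ≠ 2 := by
              intro h
              rcases hD23 w h hw0 with rfl | rfl
              · omega
              · omega
            have := tri hconn w z1 z0
            omega
          have hw2 : G.dist w z2 = 2 := by
            have t1 := tri hconn w z2 z1
            have t2 := tri hconn w z3 z2
            omega
          exact ⟨dw3, hw2, hw1⟩
        obtain ⟨σ, hσmem, hσ2, hσ3, hσ4, hσu⟩ := exists_extra hndb a12.symm z2 z3 z4 u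
          (by omega) (by omega) (by omega) (by omega)
          (by rintro rfl; omega) (by rintro rfl; omega) (by rintro rfl; omega)
          (by rintro rfl; omega) (by rintro rfl; omega) (by rintro rfl; omega)
        have hex21 : ∀ x : V, G.dist x z2 < G.dist x z1 →
            x = z2 ∨ x = z3 ∨ x = z4 ∨ x = u ∨ x = σ := by
          intro x hx
          exact exact5 hndb a12.symm z2 z3 z4 u σ (by omega) (by omega) (by omega)
            (by omega) hσmem (by rintro rfl; omega) (by rintro rfl; omega)
            (by rintro rfl; omega) hσ2.symm (by rintro rfl; omega)
            (by rintro rfl; omega) hσ3.symm (by rintro rfl; omega) hσ4.symm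
            hσu.symm hx
        obtain ⟨dwa3, dwa2, dwa1⟩ := key_w w1 aw1 hw1z2 hw1z4
        obtain ⟨dwb3, dwb2, dwb1⟩ := key_w w2 aw2 hw2z2 hw2z4
        have e1 : w1 = σ := by
          rcases hex21 w1 (by omega) with rfl | rfl | rfl | rfl | rfl
          · omega
          · omega
          · exact absurd rfl hw1z4
          · omega
          · rfl
        have e2 : w2 = σ := by
          rcases hex21 w2 (by omega) with rfl | rfl | rfl | rfl | rfl
          · omega
          · omega
          · exact absurd rfl hw2z4
          · omega
          · rfl
        exact hw12 (e1.trans e2.symm)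
      · -- r is neither p nor q : both p and q land in W(z3,z4)
        obtain ⟨dp2', dp3', dp4'⟩ := key2_pq p apz dp1 dp0 (fun h => hrp h.symm)
        obtain ⟨dq2', dq3', dq4'⟩ := key2_pq q aqz dq1 dq0 (fun h => hrq h.symm)
        exact no_six hndb a34 z3 z2 z1 z0 p q
          (by omega) (by omega) (by omega) (by omega) (by omega) (by omega)
          (by rintro rfl; omega) (by rintro rfl; omega) (by rintro rfl; omega)
          (by rintro rfl; omega) (by rintro rfl; omega) (by rintro rfl; omega)
          (by rintro rfl; omega) (by rintro rfl; omega) (by rintro rfl; omega)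
          (by rintro rfl; omega) apz.ne aqz.ne
          (by rintro rfl; omega) (by rintro rfl; omega) hpq

set_option maxHeartbeats 3200000 in
include hconn hreg hndb in
/-- pattern P1 is impossible: extra vertex `u ∈ D^1_2` with `d(u,z3) = 3`. -/
lemma kill_P1 (z0 z1 z2 z3 z4 u : V)
    (a01 : G.Adj z0 z1) (a12 : G.Adj z1 z2) (a23 : G.Adj z2 z3) (a34 : G.Adj z3 z4)
    (d04 : G.dist z0 z4 = 4)
    (hex : ∀ x : V, G.dist x z1 < G.dist x z0 → x = z1 ∨ x = z2 ∨ x = z3 ∨ x = z4 ∨ x = u)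
    (hu1 : G.dist u z1 = 1) (hu0 : G.dist u z0 = 2)
    (du3 : G.dist u z3 = 3) (hune : u ≠ z2) : False := by
  obtain ⟨d01, d02, d03, d12, d13, d14, d23, d24, d34, d10, d20, d30, d40, d21, d31, d41,
    d32, d42, d43, s0, s1, s2, s3, s4⟩ := geo2 hconn a01 a12 a23 a34 d04
  have su : G.dist u u = 0 := SimpleGraph.dist_self
  have hD12 : ∀ x : V, G.dist x z1 = 1 → G.dist x z0 = 2 → x = z2 ∨ x = u := by
    intro x h1 h0
    rcases hex x (by omega) with rfl | rfl | rfl | rfl | rfl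
    · omega
    · exact Or.inl rfl
    · omega
    · omega
    · exact Or.inr rfl
  have hD23 : ∀ x : V, G.dist x z1 = 2 → G.dist x z0 = 3 → x = z3 := by
    intro x h1 h0
    rcases hex x (by omega) with rfl | rfl | rfl | rfl | rfl
    · omega
    · omega
    · rfl
    · omega
    · omega
  have au1 : G.Adj z1 u := adj_of_dist1 (by rw [SimpleGraph.dist_comm]; exact hu1)
  have du2 : G.dist u z2 = 2 := by
    have t1 := tri hconn u z2 z3
    have t2 := tri hconn u z1 z2
    omega
  obtain ⟨p, apz, dp1, dp0, hnbr1⟩ := z1_p_single hconn hreg z0 z1 z2 u a01 a12 au1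
    hu1 hu0 hune d10 d20 d21 s0 s1 hD12
  have dp3ge : 2 ≤ G.dist p z3 := by
    have hc := tri hconn z3 p z0
    have hc2 : G.dist z3 p = G.dist p z3 := by rw [SimpleGraph.dist_comm]
    omega
  by_cases hpz2 : G.Adj p z2
  · -- p ~ z2
    have dp2 : G.dist p z2 = 1 := by rw [SimpleGraph.dist_comm]; exact dist1 hpz2.symm
    have dp3 : G.dist p z3 = 2 := by have := tri hconn p z2 z3; omega
    have dp4 : 3 ≤ G.dist p z4 := by
      have hc : G.dist z0 p = G.dist p z0 := by rw [SimpleGraph.dist_comm]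
      have := tri hconn z0 p z4
      omega
    have hex34 : ∀ x : V, G.dist x z3 < G.dist x z4 →
        x = z3 ∨ x = z2 ∨ x = z1 ∨ x = z0 ∨ x = p := by
      intro x hx
      exact exact5 hndb a34 z3 z2 z1 z0 p (by omega) (by omega) (by omega) (by omega)
        (by omega) (by rintro rfl; omega) (by rintro rfl; omega) (by rintro rfl; omega)
        (by rintro rfl; omega) (by rintro rfl; omega) (by rintro rfl; omega)
        hpz2.ne' (by rintro rfl; omega) apz.ne (by rintro rfl; omega) hx
    obtain ⟨r2, a2r, hrz1, hrz3, hrp⟩ := nbr_fourth hreg z2 z1 z3 p a12.symm a23 hpz2.symm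
      (by rintro rfl; omega) (by rintro rfl; omega) (by rintro rfl; omega)
    have dr2 : G.dist r2 z2 = 1 := by rw [SimpleGraph.dist_comm]; exact dist1 a2r
    have dr1 : G.dist r2 z1 = 2 := by
      have hle : G.dist r2 z1 ≤ 2 := by have := tri hconn r2 z2 z1; omega
      have h0 : G.dist r2 z1 ≠ 0 := fun h => hrz1 (eq_of_dist0 hconn h)
      have h1 : G.dist r2 z1 ≠ 1 := by
        intro h
        rcases hnbr1 r2 (adj_of_dist1 (by rw [SimpleGraph.dist_comm]; exact h)) with
          rfl | rfl | rfl | rfl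
        · omega
        · omega
        · omega
        · exact hrp rfl
      omega
    obtain ⟨w1, w2, aw1, aw2, hw12, hw1z2, hw1z4, hw2z2, hw2z4⟩ :=
      nbr_pair hreg z3 z2 z4 a23.symm a34 (by rintro rfl; omega)
    have key_w : ∀ w : V, G.Adj z3 w → w ≠ z2 → w ≠ z4 →
        G.dist w z3 = 1 ∧ G.dist w z2 = 2 ∧ G.dist w z1 = 3 := by
      intro w aw hwz2 hwz4
      have dw3 : G.dist w z3 = 1 := by rw [SimpleGraph.dist_comm]; exact dist1 aw
      have d3w : G.dist z3 w = 1 := dist1 aw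
      have h1 : G.dist w z1 ≠ 1 := by
        intro h
        have t' := tri hconn z3 w z0
        rcases hnbr1 w (adj_of_dist1 (by rw [SimpleGraph.dist_comm]; exact h)) with
          rfl | rfl | rfl | rfl
        · omega
        · exact hwz2 rfl
        · omega
        · omega
      have hw1le : G.dist w z1 ≤ 3 := by have := tri hconn w z3 z1; omega
      have hw1ge : 1 ≤ G.dist w z1 := by
        have h0 : G.dist w z1 ≠ 0 := by
          intro h
          have := eq_of_dist0 hconn h
          subst this
          omega
        omega
      have hc0w : G.dist z0 w = G.dist w z0 := by rw [SimpleGraph.dist_comm]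
      have hw0ge : 2 ≤ G.dist w z0 := by have := tri hconn z3 w z0; omega
      have hw0le : G.dist w z0 ≤ 4 := by have := tri hconn w z1 z0; omega
      have h04 : G.dist w z0 ≠ 4 := by
        intro h
        have hw1' : G.dist w z1 = 3 := by have := tri hconn w z1 z0; omega
        rcases hex w (by omega) with rfl | rfl | rfl | rfl | rfl
        · omega
        · exact hwz2 rfl
        · omega
        · exact hwz4 rfl
        · omega
      have h02 : G.dist w z0 ≠ 2 := by
        intro h
        have dw4 : G.dist w z4 = 2 := by
          have t1 := tri hconn w z3 z4
          have t2 := tri hconn z0 w z4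
          omega
        rcases hex34 w (by omega) with rfl | rfl | rfl | rfl | rfl
        · omega
        · exact hwz2 rfl
        · omega
        · omega
        · omega
      have hw0 : G.dist w z0 = 3 := by omega
      have hw1 : G.dist w z1 = 3 := by
        have h2 : G.dist w z1 ≠ 2 := by
          intro h
          have heq := hD23 w h hw0
          subst heq
          omega
        have := tri hconn w z1 z0
        omega
      have hw2 : G.dist w z2 = 2 := by
        have t1 := tri hconn w z2 z1
        have t2 := tri hconn w z3 z2
        omega
      exact ⟨dw3, hw2, hw1⟩
    obtain ⟨dwa3, dwa2, dwa1⟩ := key_w w1 aw1 hw1z2 hw1z4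
    obtain ⟨dwb3, dwb2, dwb1⟩ := key_w w2 aw2 hw2z2 hw2z4
    exact no_six hndb a12.symm z2 z3 z4 r2 w1 w2
      (by omega) (by omega) (by omega) (by omega) (by omega) (by omega)
      (by rintro rfl; omega) (by rintro rfl; omega) a2r.ne
      (by rintro rfl; omega) (by rintro rfl; omega) (by rintro rfl; omega)
      hrz3.symm (by rintro rfl; omega) (by rintro rfl; omega)
      (by rintro rfl; omega) hw1z4.symm hw2z4.symm
      (by rintro rfl; omega) (by rintro rfl; omega) hw12
  · -- p ≁ z2
    have dp2 : G.dist p z2 = 2 := by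
      have hle : G.dist p z2 ≤ 2 := by have := tri hconn p z1 z2; omega
      have h0 : G.dist p z2 ≠ 0 := by
        intro h
        have := eq_of_dist0 hconn h
        subst this
        omega
      have h1 : G.dist p z2 ≠ 1 :=
        fun h => hpz2 (adj_of_dist1 h)
      omega
    obtain ⟨r1, r2, ar1, ar2, hr12, hr1z1, hr1z3, hr2z1, hr2z3⟩ :=
      nbr_pair hreg z2 z1 z3 a12.symm a23 (by rintro rfl; omega)
    have key_r : ∀ r : V, G.Adj z2 r → r ≠ z1 → r ≠ z3 →
        G.dist r z2 = 1 ∧ G.dist r z1 = 2 := by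
      intro r ar hrz1 hrz3
      have dr2 : G.dist r z2 = 1 := by rw [SimpleGraph.dist_comm]; exact dist1 ar
      refine ⟨dr2, ?_⟩
      have hle : G.dist r z1 ≤ 2 := by have := tri hconn r z2 z1; omega
      have h0 : G.dist r z1 ≠ 0 := fun h => hrz1 (eq_of_dist0 hconn h)
      have h1 : G.dist r z1 ≠ 1 := by
        intro h
        rcases hnbr1 r (adj_of_dist1 (by rw [SimpleGraph.dist_comm]; exact h)) with
          rfl | rfl | rfl | rfl
        · omega
        · omega
        · omega
        · exact hpz2 (ar.symm)
      omega
    obtain ⟨dr1_2, dr1_1⟩ := key_r r1 ar1 hr1z1 hr1z3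
    obtain ⟨dr2_2, dr2_1⟩ := key_r r2 ar2 hr2z1 hr2z3
    have hex21 : ∀ x : V, G.dist x z2 < G.dist x z1 →
        x = z2 ∨ x = z3 ∨ x = r1 ∨ x = r2 ∨ x = z4 := by
      intro x hx
      exact exact5 hndb a12.symm z2 z3 r1 r2 z4 (by omega) (by omega) (by omega) (by omega)
        (by omega) (by rintro rfl; omega) ar1.ne ar2.ne (by rintro rfl; omega)
        hr1z3.symm hr2z3.symm (by rintro rfl; omega) hr12
        (by rintro rfl; omega) (by rintro rfl; omega) hx
    obtain ⟨w1, w2, aw1, aw2, hw12, hw1z2, hw1z4, hw2z2, hw2z4⟩ :=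
      nbr_pair hreg z3 z2 z4 a23.symm a34 (by rintro rfl; omega)
    have key_w : ∀ w : V, G.Adj z3 w → w ≠ z2 → w ≠ z4 →
        G.dist w z3 = 1 ∧ G.dist w z4 = 2 := by
      intro w aw hwz2 hwz4
      have dw3 : G.dist w z3 = 1 := by rw [SimpleGraph.dist_comm]; exact dist1 aw
      have d3w : G.dist z3 w = 1 := dist1 aw
      have h1 : G.dist w z1 ≠ 1 := by
        intro h
        have t' := tri hconn z3 w z0
        rcases hnbr1 w (adj_of_dist1 (by rw [SimpleGraph.dist_comm]; exact h)) with
          rfl | rfl | rfl | rfl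
        · omega
        · exact hwz2 rfl
        · omega
        · omega
      have hw1le : G.dist w z1 ≤ 3 := by have := tri hconn w z3 z1; omega
      have hw1ge : 1 ≤ G.dist w z1 := by
        have h0 : G.dist w z1 ≠ 0 := by
          intro h
          have := eq_of_dist0 hconn h
          subst this
          omega
        omega
      have hc0w : G.dist z0 w = G.dist w z0 := by rw [SimpleGraph.dist_comm]
      have hw0ge : 2 ≤ G.dist w z0 := by have := tri hconn z3 w z0; omega
      have hw0le : G.dist w z0 ≤ 4 := by have := tri hconn w z1 z0; omega
      have h04 : G.dist w z0 ≠ 4 := by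
        intro h
        have hw1' : G.dist w z1 = 3 := by have := tri hconn w z1 z0; omega
        rcases hex w (by omega) with rfl | rfl | rfl | rfl | rfl
        · omega
        · exact hwz2 rfl
        · omega
        · exact hwz4 rfl
        · omega
      have h03 : G.dist w z0 ≠ 3 := by
        intro h
        have h2 : G.dist w z1 ≠ 2 := by
          intro h'
          have heq := hD23 w h' h
          subst heq
          omega
        have hw1' : G.dist w z1 = 3 := by have := tri hconn w z1 z0; omega
        have hw2' : G.dist w z2 = 2 := by
          have t1 := tri hconn w z2 z1
          have t2 := tri hconn w z3 z2
          omega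
        rcases hex21 w (by omega) with rfl | rfl | rfl | rfl | rfl
        · omega
        · omega
        · omega
        · omega
        · exact hwz4 rfl
      have hw0 : G.dist w z0 = 2 := by omega
      have dw4 : G.dist w z4 = 2 := by
        have t1 := tri hconn w z3 z4
        have t2 := tri hconn z0 w z4
        omega
      exact ⟨dw3, dw4⟩
    obtain ⟨dwa3, dwa4⟩ := key_w w1 aw1 hw1z2 hw1z4
    obtain ⟨dwb3, dwb4⟩ := key_w w2 aw2 hw2z2 hw2z4
    exact no_six hndb a34 z3 z2 z1 z0 w1 w2
      (by omega) (by omega) (by omega) (by omega) (by omega) (by omega)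
      (by rintro rfl; omega) (by rintro rfl; omega) (by rintro rfl; omega)
      (by rintro rfl; omega) (by rintro rfl; omega) (by rintro rfl; omega)
      (by rintro rfl; omega) hw1z2.symm hw2z2.symm (by rintro rfl; omega)
      (by rintro rfl; omega) (by rintro rfl; omega) (by rintro rfl; omega)
      (by rintro rfl; omega) hw12

set_option maxHeartbeats 1600000 in
include hconn hreg hndb in
/-- pattern P3 is impossible: extra vertex `u ∈ D^1_2` with `d(u,z3) = 1`, `d(u,z2) = 2`. -/
lemma kill_P3 (z0 z1 z2 z3 z4 u : V)
    (a01 : G.Adj z0 z1) (a12 : G.Adj z1 z2) (a23 : G.Adj z2 z3) (a34 : G.Adj z3 z4)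
    (d04 : G.dist z0 z4 = 4)
    (hex : ∀ x : V, G.dist x z1 < G.dist x z0 → x = z1 ∨ x = z2 ∨ x = z3 ∨ x = z4 ∨ x = u)
    (hu1 : G.dist u z1 = 1) (hu0 : G.dist u z0 = 2)
    (du3 : G.dist u z3 = 1) (du2 : G.dist u z2 = 2) : False := by
  obtain ⟨d01, d02, d03, d12, d13, d14, d23, d24, d34, d10, d20, d30, d40, d21, d31, d41,
    d32, d42, d43, s0, s1, s2, s3, s4⟩ := geo2 hconn a01 a12 a23 a34 d04
  have su : G.dist u u = 0 := SimpleGraph.dist_self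
  have hune : u ≠ z2 := by rintro rfl; omega
  have hD12 : ∀ x : V, G.dist x z1 = 1 → G.dist x z0 = 2 → x = z2 ∨ x = u := by
    intro x h1 h0
    rcases hex x (by omega) with rfl | rfl | rfl | rfl | rfl
    · omega
    · exact Or.inl rfl
    · omega
    · omega
    · exact Or.inr rfl
  have au1 : G.Adj z1 u := adj_of_dist1 (by rw [SimpleGraph.dist_comm]; exact hu1)
  have au3 : G.Adj u z3 := adj_of_dist1 du3
  have du4 : G.dist u z4 = 2 := by
    have t1 := tri hconn u z3 z4
    have hc : G.dist z0 u = G.dist u z0 := by rw [SimpleGraph.dist_comm]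
    have t2 := tri hconn z0 u z4
    omega
  have hex34 : ∀ x : V, G.dist x z3 < G.dist x z4 →
      x = z3 ∨ x = z2 ∨ x = z1 ∨ x = z0 ∨ x = u := by
    intro x hx
    exact exact5 hndb a34 z3 z2 z1 z0 u (by omega) (by omega) (by omega) (by omega)
      (by omega) (by rintro rfl; omega) (by rintro rfl; omega) (by rintro rfl; omega)
      (by rintro rfl; omega) (by rintro rfl; omega) (by rintro rfl; omega)
      (by rintro rfl; omega) (by rintro rfl; omega) (by rintro rfl; omega)
      (by rintro rfl; omega) hx
  obtain ⟨p, apz, dp1, dp0, hnbr1⟩ := z1_p_single hconn hreg z0 z1 z2 u a01 a12 au1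
    hu1 hu0 hune d10 d20 d21 s0 s1 hD12
  have dp4ge : 3 ≤ G.dist p z4 := by
    have hc : G.dist z0 p = G.dist p z0 := by rw [SimpleGraph.dist_comm]
    have := tri hconn z0 p z4
    omega
  have dp3le : G.dist p z3 ≤ 3 := by have := tri hconn p z1 z3; omega
  have hp34 : ¬ (G.dist p z3 < G.dist p z4) := by
    intro h
    rcases hex34 p h with rfl | rfl | rfl | rfl | rfl
    · omega
    · omega
    · omega
    · omega
    · omega
  have dp3 : G.dist p z3 = 3 := by omega
  have dpu : G.dist p u = 2 := by
    have t1 := tri hconn p u z3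
    have t2 := tri hconn p z1 u
    have hc : G.dist z1 u = 1 := by rw [SimpleGraph.dist_comm]; exact hu1
    omega
  have dp2 : G.dist p z2 = 2 := by
    have t1 := tri hconn p z2 z3
    have t2 := tri hconn p z1 z2
    omega
  obtain ⟨w, aw, hwz2, hwz4, hwu⟩ := nbr_fourth hreg z3 z2 z4 u a23.symm a34 au3.symm
    (by rintro rfl; omega) (by rintro rfl; omega) (by rintro rfl; omega)
  have dw3 : G.dist w z3 = 1 := by rw [SimpleGraph.dist_comm]; exact dist1 aw
  have d3w : G.dist z3 w = 1 := dist1 aw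
  have dw4 : G.dist w z4 = 1 := by
    have hle : G.dist w z4 ≤ 2 := by have := tri hconn w z3 z4; omega
    have h0 : G.dist w z4 ≠ 0 := fun h => hwz4 (eq_of_dist0 hconn h)
    have h2 : G.dist w z4 ≠ 2 := by
      intro h
      rcases hex34 w (by omega) with rfl | rfl | rfl | rfl | rfl
      · omega
      · exact hwz2 rfl
      · omega
      · omega
      · exact hwu rfl
    omega
  have hc0w : G.dist z0 w = G.dist w z0 := by rw [SimpleGraph.dist_comm]
  have dw0ge : 3 ≤ G.dist w z0 := by have := tri hconn z0 w z4; omega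
  have hw10 : ¬ (G.dist w z1 < G.dist w z0) := by
    intro h
    rcases hex w h with rfl | rfl | rfl | rfl | rfl
    · omega
    · exact hwz2 rfl
    · omega
    · exact hwz4 rfl
    · exact hwu rfl
  have dw1le : G.dist w z1 ≤ 3 := by have := tri hconn w z3 z1; omega
  have dw1 : G.dist w z1 = 3 := by omega
  have dw0 : G.dist w z0 = 3 := by omega
  have dw2 : G.dist w z2 = 2 := by
    have t1 := tri hconn w z2 z1
    have t2 := tri hconn w z3 z2
    omega
  obtain ⟨r1, r2, ar1, ar2, hr12, hr1z1, hr1z3, hr2z1, hr2z3⟩ :=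
    nbr_pair hreg z2 z1 z3 a12.symm a23 (by rintro rfl; omega)
  have key_r : ∀ r : V, G.Adj z2 r → r ≠ z1 → r ≠ z3 →
      G.dist r z2 = 1 ∧ G.dist r z1 = 2 := by
    intro r ar hrz1 hrz3
    have dr2 : G.dist r z2 = 1 := by rw [SimpleGraph.dist_comm]; exact dist1 ar
    refine ⟨dr2, ?_⟩
    have hle : G.dist r z1 ≤ 2 := by have := tri hconn r z2 z1; omega
    have h0 : G.dist r z1 ≠ 0 := fun h => hrz1 (eq_of_dist0 hconn h)
    have h1 : G.dist r z1 ≠ 1 := by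
      intro h
      rcases hnbr1 r (adj_of_dist1 (by rw [SimpleGraph.dist_comm]; exact h)) with
        rfl | rfl | rfl | rfl
      · omega
      · omega
      · omega
      · omega
    omega
  obtain ⟨dr1_2, dr1_1⟩ := key_r r1 ar1 hr1z1 hr1z3
  obtain ⟨dr2_2, dr2_1⟩ := key_r r2 ar2 hr2z1 hr2z3
  exact no_six hndb a12.symm z2 z3 z4 r1 r2 w
    (by omega) (by omega) (by omega) (by omega) (by omega) (by omega)
    (by rintro rfl; omega) (by rintro rfl; omega) ar1.ne ar2.ne
    (by rintro rfl; omega) (by rintro rfl; omega) hr1z3.symm hr2z3.symm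
    (by rintro rfl; omega) (by rintro rfl; omega) (by rintro rfl; omega)
    (by rintro rfl; omega) hr12 (by rintro rfl; omega) (by rintro rfl; omega)

set_option maxHeartbeats 4000000 in
include hconn hreg hndb in
/-- pattern T2d1 is impossible: extra vertex `u ∈ D^2_3` with `d(u,z4) = 1`. -/
lemma kill_T2d1 (hdiam : ∀ x y : V, G.dist x y ≤ 4) (z0 z1 z2 z3 z4 u : V)
    (a01 : G.Adj z0 z1) (a12 : G.Adj z1 z2) (a23 : G.Adj z2 z3) (a34 : G.Adj z3 z4)
    (d04 : G.dist z0 z4 = 4)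
    (hex : ∀ x : V, G.dist x z1 < G.dist x z0 → x = z1 ∨ x = z2 ∨ x = z3 ∨ x = z4 ∨ x = u)
    (hu1 : G.dist u z1 = 2) (hu0 : G.dist u z0 = 3)
    (du4 : G.dist u z4 = 1) (hunez3 : u ≠ z3) : False := by
  obtain ⟨d01, d02, d03, d12, d13, d14, d23, d24, d34, d10, d20, d30, d40, d21, d31, d41,
    d32, d42, d43, s0, s1, s2, s3, s4⟩ := geo2 hconn a01 a12 a23 a34 d04
  have su : G.dist u u = 0 := SimpleGraph.dist_self
  have hD12 : ∀ x : V, G.dist x z1 = 1 → G.dist x z0 = 2 → x = z2 := by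
    intro x h1 h0
    rcases hex x (by omega) with rfl | rfl | rfl | rfl | rfl
    · omega
    · rfl
    · omega
    · omega
    · omega
  have hD23 : ∀ x : V, G.dist x z1 = 2 → G.dist x z0 = 3 → x = z3 ∨ x = u := by
    intro x h1 h0
    rcases hex x (by omega) with rfl | rfl | rfl | rfl | rfl
    · omega
    · omega
    · exact Or.inl rfl
    · omega
    · exact Or.inr rfl
  obtain ⟨κ₀, hκadj, hκ1⟩ := step hconn (show G.dist u z1 = 1 + 1 from hu1)
  have hκ0 : G.dist κ₀ z0 = 2 := by
    have t1 := tri hconn u κ₀ z0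
    have t2 := tri hconn κ₀ z1 z0
    rw [dist1 hκadj] at t1
    omega
  have hκz2 : κ₀ = z2 := hD12 κ₀ hκ1 hκ0
  have au2 : G.Adj u z2 := by rw [← hκz2]; exact hκadj
  clear hκadj hκ1 hκ0 hκz2
  have du2 : G.dist u z2 = 1 := by rw [SimpleGraph.dist_comm]; exact dist1 au2.symm
  have d2u : G.dist z2 u = 1 := dist1 au2.symm
  have d1u : G.dist z1 u = 2 := by rw [SimpleGraph.dist_comm]; exact hu1
  have d0u : G.dist z0 u = 3 := by rw [SimpleGraph.dist_comm]; exact hu0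
  have au4 : G.Adj u z4 := adj_of_dist1 du4
  have d4u : G.dist z4 u = 1 := by rw [SimpleGraph.dist_comm]; exact du4
  have du3le : G.dist u z3 ≤ 2 := by have := tri hconn u z4 z3; omega
  have du3ge : G.dist u z3 ≠ 0 := fun h => hunez3 (eq_of_dist0 hconn h)
  have d3u : G.dist z3 u = G.dist u z3 := by rw [SimpleGraph.dist_comm]
  obtain ⟨p, q, apz, aqz, hpq, dp1, dp0, dq1, dq0, hnbr1⟩ := z1_pq hconn hreg z0 z1 z2
    a01 a12 d10 d20 d21 s0 s1 hD12
  obtain ⟨r, a2r, hrz1, hrz3, hru⟩ := nbr_fourth hreg z2 z1 z3 u a12.symm a23 au2.symm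
    (by rintro rfl; omega) (by rintro rfl; omega) (by rintro rfl; omega)
  have dr2 : G.dist r z2 = 1 := by rw [SimpleGraph.dist_comm]; exact dist1 a2r
  have hnbr2 : ∀ x : V, G.Adj z2 x → x = z1 ∨ x = z3 ∨ x = u ∨ x = r := by
    intro x hx
    exact nbr_exact hreg z2 z1 z3 u r a12.symm a23 au2.symm a2r
      (by rintro rfl; omega) (by rintro rfl; omega) hrz1.symm
      (fun h => hunez3 h.symm) hrz3.symm hru.symm hx
  -- the extra vertices of W(z3,z4), W(u,z4) and W(z2,z1)
  obtain ⟨v, hv, hvz3, hvz2, hvz1, hvz0⟩ := exists_extra hndb a34 z3 z2 z1 z0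
    (by omega) (by omega) (by omega) (by omega) (by rintro rfl; omega)
    (by rintro rfl; omega) (by rintro rfl; omega) (by rintro rfl; omega)
    (by rintro rfl; omega) (by rintro rfl; omega)
  have hex34v : ∀ x : V, G.dist x z3 < G.dist x z4 →
      x = z3 ∨ x = z2 ∨ x = z1 ∨ x = z0 ∨ x = v := by
    intro x hx
    exact exact5 hndb a34 z3 z2 z1 z0 v (by omega) (by omega) (by omega) (by omega) hv
      (by rintro rfl; omega) (by rintro rfl; omega) (by rintro rfl; omega) hvz3.symm
      (by rintro rfl; omega) (by rintro rfl; omega) hvz2.symm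
      (by rintro rfl; omega) hvz1.symm hvz0.symm hx
  obtain ⟨v', hv', hv'u, hv'z2, hv'z1, hv'z0⟩ := exists_extra hndb au4 u z2 z1 z0
    (by omega) (by omega) (by omega) (by omega) au2.ne (by rintro rfl; omega)
    (by rintro rfl; omega) (by rintro rfl; omega) (by rintro rfl; omega)
    (by rintro rfl; omega)
  have hexu4 : ∀ x : V, G.dist x u < G.dist x z4 →
      x = u ∨ x = z2 ∨ x = z1 ∨ x = z0 ∨ x = v' := by
    intro x hx
    exact exact5 hndb au4 u z2 z1 z0 v' (by omega) (by omega) (by omega) (by omega) hv'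
      au2.ne (by rintro rfl; omega) (by rintro rfl; omega) hv'u.symm
      (by rintro rfl; omega) (by rintro rfl; omega) hv'z2.symm
      (by rintro rfl; omega) hv'z1.symm hv'z0.symm hx
  obtain ⟨σ, hσmem, hσz2, hσz3, hσu, hσz4⟩ := exists_extra hndb a12.symm z2 z3 u z4
    (by omega) (by omega) (by omega) (by omega) (by rintro rfl; omega) au2.ne'
    (by rintro rfl; omega) (fun h => hunez3 h.symm) (by rintro rfl; omega)
    (by rintro rfl; omega)
  have hex21σ : ∀ x : V, G.dist x z2 < G.dist x z1 →
      x = z2 ∨ x = z3 ∨ x = u ∨ x = z4 ∨ x = σ := by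
    intro x hx
    exact exact5 hndb a12.symm z2 z3 u z4 σ (by omega) (by omega) (by omega) (by omega)
      hσmem (by rintro rfl; omega) au2.ne' (by rintro rfl; omega) hσz2.symm
      (fun h => hunez3 h.symm) (by rintro rfl; omega) hσz3.symm
      (by rintro rfl; omega) hσu.symm hσz4.symm hx
  -- a neighbour of z2 at distance 1 from z0
  have key_e : ∀ e : V, G.Adj z2 e → G.dist e z2 = 1 → G.dist e z0 = 1 →
      G.dist e z3 = 2 ∧ G.dist e u = 2 ∧ 3 ≤ G.dist e z4 := by
    intro e ae de2 de0
    have hc0e : G.dist z0 e = G.dist e z0 := by rw [SimpleGraph.dist_comm]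
    have hc3e : G.dist z3 e = G.dist e z3 := by rw [SimpleGraph.dist_comm]
    have h3 : G.dist e z3 = 2 := by
      have t1 := tri hconn e z2 z3
      have t2 := tri hconn z3 e z0
      omega
    have hu' : G.dist e u = 2 := by
      have t1 := tri hconn e z2 u
      have hcue : G.dist u e = G.dist e u := by rw [SimpleGraph.dist_comm]
      have t2 := tri hconn u e z0
      omega
    have h4 : 3 ≤ G.dist e z4 := by
      have := tri hconn z0 e z4
      omega
    exact ⟨h3, hu', h4⟩
  -- basic facts about the fourth neighbour r of z2
  have dr1le : G.dist r z1 ≤ 2 := by have := tri hconn r z2 z1; omega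
  have dr1ne0 : G.dist r z1 ≠ 0 := fun h => hrz1 (eq_of_dist0 hconn h)
  -- killer when r is at distance 1 from z1 : r ∈ {p,q}, then key_e and hex34v
  have kill_r1 : G.dist r z1 = 1 → (∀ y : V, G.dist y z3 < G.dist y z4 →
      y = z3 ∨ y = z2 ∨ y = z1 ∨ y = z0 ∨ y = v) → G.dist v z0 = 2 → False := by
    intro h hexv dv0
    have har : G.Adj z1 r := adj_of_dist1 (by rw [SimpleGraph.dist_comm]; exact h)
    have dr0 : G.dist r z0 = 1 := by
      rcases hnbr1 r har with rfl | rfl | rfl | rfl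
      · omega
      · omega
      · exact dp0
      · exact dq0
    obtain ⟨hr3, hruu, hr4⟩ := key_e r a2r dr2 dr0
    rcases hexv r (by omega) with rfl | rfl | rfl | rfl | rfl
    · omega
    · omega
    · omega
    · omega
    · omega
  rcases (show G.dist u z3 = 1 ∨ G.dist u z3 = 2 by omega) with du3 | du3
  · -- z3 ~ u
    have au3 : G.Adj u z3 := adj_of_dist1 du3
    have d3u1 : G.dist z3 u = 1 := by omega
    obtain ⟨w, aw3, hwz2, hwz4, hwu⟩ := nbr_fourth hreg z3 z2 z4 u a23.symm a34 au3.symm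
      (by rintro rfl; omega) au2.ne' (by rintro rfl; omega)
    have dw3 : G.dist w z3 = 1 := by rw [SimpleGraph.dist_comm]; exact dist1 aw3
    have d3w : G.dist z3 w = 1 := dist1 aw3
    have hnbr3 : ∀ x : V, G.Adj z3 x → x = z2 ∨ x = z4 ∨ x = u ∨ x = w := by
      intro x hx
      exact nbr_exact hreg z3 z2 z4 u w a23.symm a34 au3.symm aw3
        (by rintro rfl; omega) au2.ne' hwz2.symm (by rintro rfl; omega)
        hwz4.symm hwu.symm hx
    obtain ⟨m, aum, hmz2, hmz3, hmz4⟩ := nbr_fourth hreg u z2 z3 z4 au2 au3 au4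
      (by rintro rfl; omega) (by rintro rfl; omega) (by rintro rfl; omega)
    have dmu : G.dist m u = 1 := by rw [SimpleGraph.dist_comm]; exact dist1 aum
    have dum : G.dist u m = 1 := dist1 aum
    -- classification of w
    have hcw : (w = v ∧ G.dist w z0 = 2 ∧ G.dist w z4 = 2) ∨
        (w = σ ∧ G.dist w z1 = 3) := by
      have h1 : G.dist w z1 ≠ 1 := by
        intro h
        have t' := tri hconn z3 w z0
        rcases hnbr1 w (adj_of_dist1 (by rw [SimpleGraph.dist_comm]; exact h)) with
          rfl | rfl | rfl | rfl
        · omega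
        · exact hwz2 rfl
        · omega
        · omega
      have hw1le : G.dist w z1 ≤ 3 := by have := tri hconn w z3 z1; omega
      have hw1ge : 1 ≤ G.dist w z1 := by
        have h0 : G.dist w z1 ≠ 0 := by
          intro h
          have := eq_of_dist0 hconn h
          subst this
          omega
        omega
      have hc0w : G.dist z0 w = G.dist w z0 := by rw [SimpleGraph.dist_comm]
      have hw0ge : 2 ≤ G.dist w z0 := by have := tri hconn z3 w z0; omega
      have hw0le : G.dist w z0 ≤ 4 := by have := tri hconn w z1 z0; omega
      have h23 : ¬ (G.dist w z1 = 2 ∧ G.dist w z0 = 3) := by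
        rintro ⟨ha', hb'⟩
        rcases hD23 w ha' hb' with rfl | rfl
        · omega
        · exact hwu rfl
      have h04 : G.dist w z0 ≠ 4 := by
        intro h
        have hw1' : G.dist w z1 = 3 := by have := tri hconn w z1 z0; omega
        rcases hex w (by omega) with rfl | rfl | rfl | rfl | rfl
        · omega
        · exact hwz2 rfl
        · omega
        · exact hwz4 rfl
        · exact hwu rfl
      by_cases h33 : G.dist w z1 = 3 ∧ G.dist w z0 = 3
      · have hw2 : G.dist w z2 = 2 := by
          have t1 := tri hconn w z2 z1
          have t2 := tri hconn w z3 z2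
          omega
        right
        rcases hex21σ w (by omega) with rfl | rfl | rfl | rfl | rfl
        · omega
        · omega
        · exact absurd rfl hwu
        · omega
        · exact ⟨rfl, h33.1⟩
      · have hw0 : G.dist w z0 = 2 := by
          rcases (show G.dist w z1 = 2 ∨ G.dist w z1 = 3 by omega) with h' | h'
          · rcases (show G.dist w z0 = 2 ∨ G.dist w z0 = 3 by omega) with h'' | h''
            · exact h''
            · exact absurd ⟨h', h''⟩ h23
          · rcases (show G.dist w z0 = 2 ∨ G.dist w z0 = 3 by omega) with h'' | h''
            · exact h''
            · exact absurd ⟨h', h''⟩ h33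
        have dw4 : G.dist w z4 = 2 := by
          have t1 := tri hconn w z3 z4
          have t2 := tri hconn z0 w z4
          omega
        left
        rcases hex34v w (by omega) with rfl | rfl | rfl | rfl | rfl
        · omega
        · exact absurd rfl hwz2
        · omega
        · omega
        · exact ⟨rfl, hw0, dw4⟩
    -- classification of m
    have hcm : (m = v' ∧ G.dist m z0 = 2 ∧ 2 ≤ G.dist m z1) ∨
        (m = σ ∧ G.dist m z1 = 3) := by
      have h1 : G.dist m z1 ≠ 1 := by
        intro h
        have t' := tri hconn u m z0
        rcases hnbr1 m (adj_of_dist1 (by rw [SimpleGraph.dist_comm]; exact h)) with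
          rfl | rfl | rfl | rfl
        · omega
        · exact hmz2 rfl
        · omega
        · omega
      have hm1le : G.dist m z1 ≤ 3 := by have := tri hconn m u z1; omega
      have hm1ge : 1 ≤ G.dist m z1 := by
        have h0 : G.dist m z1 ≠ 0 := by
          intro h
          have := eq_of_dist0 hconn h
          subst this
          omega
        omega
      have hc0m : G.dist z0 m = G.dist m z0 := by rw [SimpleGraph.dist_comm]
      have hm0ge : 2 ≤ G.dist m z0 := by have := tri hconn u m z0; omega
      have hm0le : G.dist m z0 ≤ 4 := by have := tri hconn m z1 z0; omega
      have h23 : ¬ (G.dist m z1 = 2 ∧ G.dist m z0 = 3) := by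
        rintro ⟨ha', hb'⟩
        rcases hD23 m ha' hb' with rfl | rfl
        · exact hmz3 rfl
        · omega
      have h04 : G.dist m z0 ≠ 4 := by
        intro h
        have hm1' : G.dist m z1 = 3 := by have := tri hconn m z1 z0; omega
        rcases hex m (by omega) with rfl | rfl | rfl | rfl | rfl
        · omega
        · exact hmz2 rfl
        · exact hmz3 rfl
        · exact hmz4 rfl
        · omega
      by_cases h33 : G.dist m z1 = 3 ∧ G.dist m z0 = 3
      · have hm2 : G.dist m z2 = 2 := by
          have t1 := tri hconn m z2 z1
          have t2 := tri hconn m u z2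
          omega
        right
        rcases hex21σ m (by omega) with rfl | rfl | rfl | rfl | rfl
        · omega
        · exact absurd rfl hmz3
        · omega
        · exact absurd rfl hmz4
        · exact ⟨rfl, h33.1⟩
      · have hm0 : G.dist m z0 = 2 := by
          rcases (show G.dist m z1 = 2 ∨ G.dist m z1 = 3 by omega) with h' | h'
          · rcases (show G.dist m z0 = 2 ∨ G.dist m z0 = 3 by omega) with h'' | h''
            · exact h''
            · exact absurd ⟨h', h''⟩ h23
          · rcases (show G.dist m z0 = 2 ∨ G.dist m z0 = 3 by omega) with h'' | h''
            · exact h''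
            · exact absurd ⟨h', h''⟩ h33
        have dm4 : G.dist m z4 = 2 := by
          have t1 := tri hconn m u z4
          have t2 := tri hconn z0 m z4
          omega
        left
        rcases hexu4 m (by omega) with rfl | rfl | rfl | rfl | rfl
        · omega
        · exact absurd rfl hmz2
        · omega
        · omega
        · exact ⟨rfl, hm0, by omega⟩
    rcases hcw with ⟨ew, fw0, fw4⟩ | ⟨ew, fw1⟩
    · rcases hcm with ⟨em, fm0, fm1⟩ | ⟨em, fm1⟩
      · -- w = v and m = v' : the θ-argument
        subst ew; subst em
        have hdwu_le : G.dist w u ≤ 2 := by have := tri hconn w z3 u; omega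
        have hdwu_ne : G.dist w u ≠ 0 := fun h => hwu (eq_of_dist0 hconn h)
        rcases (show G.dist w u = 1 ∨ G.dist w u = 2 by omega) with dwu | dwu2
        · -- w ~ u : no gateway from z3 towards u
          obtain ⟨x, hx, hxne⟩ := exists_ne_mem hndb au3.symm
          obtain ⟨κ, hκa, hκ3, hκu⟩ := gateway hconn au3.symm hx hxne
          rcases hnbr3 κ hκa with rfl | rfl | rfl | rfl
          · omega
          · omega
          · omega
          · omega
        · rcases (show G.dist r z1 = 1 ∨ G.dist r z1 = 2 by omega) with h | h
          · exact kill_r1 h hex34v fw0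
          · have hr0le : G.dist r z0 ≤ 3 := by have := tri hconn r z2 z0; omega
            have hr0ne : G.dist r z0 ≠ 0 := by
              intro h'
              have := eq_of_dist0 hconn h'
              subst this
              omega
            have hr0ne3 : G.dist r z0 ≠ 3 := by
              intro h'
              rcases hD23 r h h' with rfl | rfl
              · exact hrz3 rfl
              · exact hru rfl
            rcases (show G.dist r z0 = 1 ∨ G.dist r z0 = 2 by omega) with h0' | h0'
            · obtain ⟨hr3, hruu, hr4⟩ := key_e r a2r dr2 h0'
              rcases hex34v r (by omega) with rfl | rfl | rfl | rfl | rfl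
              · omega
              · omega
              · exact hrz1 rfl
              · omega
              · omega
            · by_cases hrw : r = w
              · -- the θ-geodesic argument
                replace hrw := hrw.symm
                subst hrw
                -- facts about p and q
                have key_t : ∀ t : V, G.Adj z1 t → G.dist t z1 = 1 → G.dist t z0 = 1 →
                    G.dist t z2 = 2 ∧ G.dist t z3 = 3 ∧ G.dist t u = 3 := by
                  intro t at1 dt1 dt0
                  have hct : G.dist z0 t = G.dist t z0 := by rw [SimpleGraph.dist_comm]
                  have dt2 : G.dist t z2 = 2 := by
                    have hle : G.dist t z2 ≤ 2 := by have := tri hconn t z1 z2; omega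
                    have h0 : G.dist t z2 ≠ 0 := by
                      intro h'
                      have := eq_of_dist0 hconn h'
                      subst this
                      omega
                    have h1 : G.dist t z2 ≠ 1 := by
                      intro h'
                      rcases hnbr2 t (adj_of_dist1 (by rw [SimpleGraph.dist_comm]; exact h')) with
                        rfl | rfl | rfl | rfl
                      · omega
                      · omega
                      · omega
                      · omega
                    omega
                  have dt4 : 3 ≤ G.dist t z4 := by
                    have := tri hconn z0 t z4; omega
                  have dt3 : G.dist t z3 = 3 := by
                    have hc3t : G.dist z3 t = G.dist t z3 := by rw [SimpleGraph.dist_comm]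
                    have hge : 2 ≤ G.dist t z3 := by have := tri hconn z3 t z0; omega
                    have hle : G.dist t z3 ≤ 3 := by have := tri hconn t z1 z3; omega
                    have h2 : G.dist t z3 ≠ 2 := by
                      intro h'
                      rcases hex34v t (by omega) with rfl | rfl | rfl | rfl | rfl
                      · omega
                      · omega
                      · omega
                      · omega
                      · omega
                    omega
                  have dtu : G.dist t u = 3 := by
                    have hcut : G.dist u t = G.dist t u := by rw [SimpleGraph.dist_comm]
                    have hge : 2 ≤ G.dist t u := by have := tri hconn u t z0; omega
                    have hle : G.dist t u ≤ 3 := by have := tri hconn t z1 u; omega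
                    have h2 : G.dist t u ≠ 2 := by
                      intro h'
                      rcases hexu4 t (by omega) with rfl | rfl | rfl | rfl | rfl
                      · omega
                      · omega
                      · omega
                      · omega
                      · omega
                    omega
                  exact ⟨dt2, dt3, dtu⟩
                obtain ⟨dp2', dp3', dpu'⟩ := key_t p apz dp1 dp0
                obtain ⟨dq2', dq3', dqu'⟩ := key_t q aqz dq1 dq0
                -- the fourth neighbour z of z0
                obtain ⟨z, a0z, hzz1, hzp, hzq⟩ := nbr_fourth hreg z0 z1 p q a01
                  (adj_of_dist1 dp0).symm (adj_of_dist1 dq0).symm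
                  apz.ne aqz.ne hpq
                have dz0 : G.dist z z0 = 1 := by rw [SimpleGraph.dist_comm]; exact dist1 a0z
                have hnbr0 : ∀ x : V, G.Adj z0 x → x = z1 ∨ x = p ∨ x = q ∨ x = z := by
                  intro x hx
                  exact nbr_exact hreg z0 z1 p q z a01 (adj_of_dist1 dp0).symm
                    (adj_of_dist1 dq0).symm a0z apz.ne aqz.ne hzz1.symm hpq
                    hzp.symm hzq.symm hx
                -- z is adjacent to w
                have hc0w' : G.dist z0 w = 2 := by rw [SimpleGraph.dist_comm]; exact h0'
                obtain ⟨κ, hκ0a, hκw⟩ := step hconn (show G.dist z0 w = 1 + 1 from hc0w')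
                have hκ3 : G.dist κ z3 = 2 := by
                  have t1 := tri hconn z0 κ z3
                  have t2 := tri hconn κ w z3
                  rw [dist1 hκ0a] at t1
                  omega
                have hcw1 : G.dist z1 w = 2 := by rw [SimpleGraph.dist_comm]; exact h
                have hκz : κ = z := by
                  have t' := tri hconn κ w z3
                  rcases hnbr0 κ hκ0a with rfl | rfl | rfl | rfl
                  · omega
                  · omega
                  · omega
                  · rfl
                replace hκz := hκz.symm
                subst hκz
                -- z is adjacent to m, and d(z,u) = 2
                have hc0m' : G.dist z0 m = 2 := by rw [SimpleGraph.dist_comm]; exact fm0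
                obtain ⟨κ', hκ'a, hκ'm⟩ := step hconn (show G.dist z0 m = 1 + 1 from hc0m')
                have hκ'u : G.dist κ' u = 2 := by
                  have t1 := tri hconn z0 κ' u
                  have t2 := tri hconn κ' m u
                  rw [dist1 hκ'a] at t1
                  omega
                have hκ'z : κ' = z := by
                  have hcm1 : G.dist z1 m = G.dist m z1 := by rw [SimpleGraph.dist_comm]
                  rcases hnbr0 κ' hκ'a with rfl | rfl | rfl | rfl
                  · omega
                  · omega
                  · omega
                  · rfl
                replace hκ'z := hκ'z.symm
                subst hκ'z
                -- the fourth neighbour w₃ of w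
                have azw : G.Adj w z := (adj_of_dist1 hκw).symm
                obtain ⟨w₃, aww3, hw3z2, hw3z3, hw3z⟩ := nbr_fourth hreg w z2 z3 z
                  a2r.symm aw3.symm azw (by rintro rfl; omega) (by rintro rfl; omega)
                  (by rintro rfl; omega)
                have hnbrw : ∀ x : V, G.Adj w x → x = z2 ∨ x = z3 ∨ x = z ∨ x = w₃ := by
                  intro x hx
                  exact nbr_exact hreg w z2 z3 z w₃ a2r.symm aw3.symm azw aww3
                    (by rintro rfl; omega) (by rintro rfl; omega) hw3z2.symm
                    (by rintro rfl; omega) hw3z3.symm hw3z.symm hx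
                have sww : G.dist w w = 0 := SimpleGraph.dist_self
                have dw33 : G.dist w₃ z3 = 2 := by
                  have hcw3 : G.dist w₃ w = 1 := by rw [SimpleGraph.dist_comm]; exact dist1 aww3
                  have hle : G.dist w₃ z3 ≤ 2 := by have := tri hconn w₃ w z3; omega
                  have h0 : G.dist w₃ z3 ≠ 0 := fun h' => hw3z3 (eq_of_dist0 hconn h')
                  have h1 : G.dist w₃ z3 ≠ 1 := by
                    intro h'
                    rcases hnbr3 w₃ (adj_of_dist1 (by rw [SimpleGraph.dist_comm]; exact h')) with
                      rfl | rfl | rfl | rfl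
                    · exact hw3z2 rfl
                    · have := dist1 aww3; omega
                    · have := dist1 aww3; omega
                    · have := dist1 aww3; omega
                  omega
                have key_k2 : ∀ x : V, G.dist x z3 = 2 → G.dist x u = 3 → x = w₃ := by
                  intro x hx3 hxu
                  obtain ⟨y, hxy, hy3⟩ := step hconn (show G.dist x z3 = 1 + 1 from hx3)
                  have hyu : G.dist y u = 2 := by
                    have t1 := tri hconn x y u
                    have t2 := tri hconn y z3 u
                    rw [dist1 hxy] at t1
                    omega
                  rcases hnbr3 y (adj_of_dist1 (by rw [SimpleGraph.dist_comm]; exact hy3)) with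
                    rfl | rfl | rfl | rfl
                  · omega
                  · omega
                  · omega
                  · rcases hnbrw x hxy.symm with rfl | rfl | rfl | rfl
                    · omega
                    · omega
                    · omega
                    · rfl
                -- the three remaining members of W(z3,u)
                have hsub : ({z3, w} : Finset V) ⊆ ndbW G z3 u := by
                  intro y hy
                  simp only [Finset.mem_insert, Finset.mem_singleton] at hy
                  rw [mem_W]
                  rcases hy with rfl | rfl
                  · omega
                  · omega
                have hcard : ((ndbW G z3 u) \ ({z3, w} : Finset V)).card = 3 := by
                  rw [Finset.card_sdiff_of_subset hsub, Wcard hndb au3.symm,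
                    Finset.card_insert_of_notMem (by simp [aw3.ne]), Finset.card_singleton]
                obtain ⟨a, b, c, hab, hac, hbc, hS⟩ := Finset.card_eq_three.mp hcard
                have hmem3 : ∀ y : V, y ∈ ({a, b, c} : Finset V) →
                    G.dist y z3 < G.dist y u ∧ y ≠ z3 ∧ y ≠ w := by
                  intro y hy
                  rw [← hS] at hy
                  simp only [Finset.mem_sdiff, Finset.mem_insert, Finset.mem_singleton,
                    not_or] at hy
                  exact ⟨(mem_W).mp hy.1, hy.2.1, hy.2.2⟩
                obtain ⟨ha1, ha2, ha3⟩ := hmem3 a (by simp)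
                obtain ⟨hb1, hb2, hb3⟩ := hmem3 b (by simp)
                obtain ⟨hc1, hc2, hc3⟩ := hmem3 c (by simp)
                have cls : ∀ x : V, G.dist x z3 < G.dist x u → x ≠ z3 → x ≠ w →
                    (x = w₃ ∧ G.dist x z3 = 2 ∧ G.dist x u = 3) ∨
                    (G.dist x z3 = 3 ∧ G.dist x u = 4) := by
                  intro x hx hxz3 hxw
                  have hxu_le : G.dist x u ≤ G.dist x z3 + 1 := by
                    have := tri hconn x z3 u; omega
                  have hd : G.dist x u ≤ 4 := hdiam x u
                  have h0 : G.dist x z3 ≠ 0 := fun h' => hxz3 (eq_of_dist0 hconn h')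
                  have h1 : G.dist x z3 ≠ 1 := by
                    intro h'
                    rcases hnbr3 x (adj_of_dist1 (by rw [SimpleGraph.dist_comm]; exact h')) with
                      rfl | rfl | rfl | rfl
                    · omega
                    · omega
                    · omega
                    · exact hxw rfl
                  rcases (show G.dist x z3 = 2 ∨ G.dist x z3 = 3 by omega) with h' | h'
                  · exact Or.inl ⟨key_k2 x h' (by omega), h', by omega⟩
                  · exact Or.inr ⟨h', by omega⟩
                have hexS : ∀ x : V, G.dist x z3 < G.dist x u →
                    x = z3 ∨ x = w ∨ x = a ∨ x = b ∨ x = c := by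
                  intro x hx
                  by_cases h3 : x = z3
                  · exact Or.inl h3
                  by_cases hw' : x = w
                  · exact Or.inr (Or.inl hw')
                  have hxm : x ∈ (ndbW G z3 u) \ ({z3, w} : Finset V) := by
                    simp only [Finset.mem_sdiff, Finset.mem_insert, Finset.mem_singleton,
                      not_or]
                    exact ⟨(mem_W).mpr hx, h3, hw'⟩
                  rw [hS] at hxm
                  simp only [Finset.mem_insert, Finset.mem_singleton] at hxm
                  tauto
                have fin : ∀ θ1 θ2 : V, θ1 ≠ θ2 → G.dist θ1 z3 = 3 → G.dist θ1 u = 4 →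
                    G.dist θ2 z3 = 3 → G.dist θ2 u = 4 →
                    (∀ x : V, G.dist x z3 < G.dist x u →
                      x = z3 ∨ x = w ∨ x = w₃ ∨ x = θ1 ∨ x = θ2) → False := by
                  intro θ1 θ2 hne h13 h1u h23' h2u hexθ
                  obtain ⟨y, hθy, hy3⟩ := step hconn (show G.dist θ1 z3 = 2 + 1 from h13)
                  have hyu : G.dist y u = 3 := by
                    have t1 := tri hconn θ1 y u
                    have t2 := tri hconn y z3 u
                    rw [dist1 hθy] at t1
                    omega
                  have hyw3 : w₃ = y := (key_k2 y hy3 hyu).symm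
                  subst hyw3
                  exact kill_D34 hconn hreg hndb u z3 w w₃ θ1 θ2 au3 aw3 aww3 hθy.symm
                    (by rw [SimpleGraph.dist_comm]; exact h1u) hexθ h23' h2u hne.symm
                rcases cls a ha1 ha2 ha3 with ⟨haw, _, _⟩ | ⟨ha3', hau4⟩
                · rcases cls b hb1 hb2 hb3 with ⟨hbw, _, _⟩ | ⟨hb3', hbu4⟩
                  · exact absurd (haw.trans hbw.symm) hab
                  rcases cls c hc1 hc2 hc3 with ⟨hcw, _, _⟩ | ⟨hc3', hcu4⟩
                  · exact absurd (haw.trans hcw.symm) hac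
                  replace haw := haw.symm
                  subst haw
                  refine fin b c hbc hb3' hbu4 hc3' hcu4 ?_
                  intro x hx
                  rcases hexS x hx with h' | h' | h' | h' | h' <;> tauto
                · rcases cls b hb1 hb2 hb3 with ⟨hbw, _, _⟩ | ⟨hb3', hbu4⟩
                  · rcases cls c hc1 hc2 hc3 with ⟨hcw, _, _⟩ | ⟨hc3', hcu4⟩
                    · exact absurd (hbw.trans hcw.symm) hbc
                    replace hbw := hbw.symm
                    subst hbw
                    refine fin a c hac ha3' hau4 hc3' hcu4 ?_
                    intro x hx
                    rcases hexS x hx with h' | h' | h' | h' | h' <;> tauto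
                  · rcases cls c hc1 hc2 hc3 with ⟨hcw, hcw3, hcwu⟩ | ⟨hc3', hcu4⟩
                    · replace hcw := hcw.symm
                      subst hcw
                      refine fin a b hab ha3' hau4 hb3' hbu4 ?_
                      intro x hx
                      rcases hexS x hx with h' | h' | h' | h' | h' <;> tauto
                    · -- all three of a, b, c are at (3,4) : then w₃ itself lies in W(z3,u)
                      obtain ⟨y, hay, hy3⟩ := step hconn (show G.dist a z3 = 2 + 1 from ha3')
                      have hyu : G.dist y u = 3 := by
                        have t1 := tri hconn a y u
                        have t2 := tri hconn y z3 u
                        rw [dist1 hay] at t1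
                        omega
                      have hyw3 : w₃ = y := (key_k2 y hy3 hyu).symm
                      subst hyw3
                      rcases hexS w₃ (by omega) with h' | h' | h' | h' | h'
                      · rw [h'] at dw33; omega
                      · rw [h'] at dw33; omega
                      · rw [h'] at dw33; omega
                      · rw [h'] at dw33; omega
                      · rw [h'] at dw33; omega
              · -- r ≠ w : six vertices in W(z2,z3)
                have dr3 : G.dist r z3 = 2 := by
                  have hle : G.dist r z3 ≤ 2 := by have := tri hconn r z2 z3; omega
                  have h0 : G.dist r z3 ≠ 0 := fun h' => hrz3 (eq_of_dist0 hconn h')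
                  have h1 : G.dist r z3 ≠ 1 := by
                    intro h'
                    rcases hnbr3 r (adj_of_dist1 (by rw [SimpleGraph.dist_comm]; exact h')) with
                      rfl | rfl | rfl | rfl
                    · omega
                    · omega
                    · exact hru rfl
                    · exact hrw rfl
                  omega
                have key_t2 : ∀ t : V, G.Adj z1 t → G.dist t z1 = 1 → G.dist t z0 = 1 →
                    G.dist t z2 = 2 ∧ G.dist t z3 = 3 := by
                  intro t at1 dt1 dt0
                  have hct : G.dist z0 t = G.dist t z0 := by rw [SimpleGraph.dist_comm]
                  have dt2 : G.dist t z2 = 2 := by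
                    have hle : G.dist t z2 ≤ 2 := by have := tri hconn t z1 z2; omega
                    have h0 : G.dist t z2 ≠ 0 := by
                      intro h'
                      have := eq_of_dist0 hconn h'
                      subst this
                      omega
                    have h1 : G.dist t z2 ≠ 1 := by
                      intro h'
                      rcases hnbr2 t (adj_of_dist1 (by rw [SimpleGraph.dist_comm]; exact h')) with
                        rfl | rfl | rfl | rfl
                      · omega
                      · omega
                      · omega
                      · omega
                    omega
                  have dt4 : 3 ≤ G.dist t z4 := by
                    have := tri hconn z0 t z4; omega
                  have dt3 : G.dist t z3 = 3 := by
                    have hc3t : G.dist z3 t = G.dist t z3 := by rw [SimpleGraph.dist_comm]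
                    have hge : 2 ≤ G.dist t z3 := by have := tri hconn z3 t z0; omega
                    have hle : G.dist t z3 ≤ 3 := by have := tri hconn t z1 z3; omega
                    have h2 : G.dist t z3 ≠ 2 := by
                      intro h'
                      rcases hex34v t (by omega) with rfl | rfl | rfl | rfl | rfl
                      · omega
                      · omega
                      · omega
                      · omega
                      · omega
                    omega
                  exact ⟨dt2, dt3⟩
                obtain ⟨dp2'', dp3''⟩ := key_t2 p apz dp1 dp0
                obtain ⟨dq2'', dq3''⟩ := key_t2 q aqz dq1 dq0
                exact no_six hndb a23 z2 z1 z0 p q r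
                  (by omega) (by omega) (by omega) (by omega) (by omega) (by omega)
                  (by rintro rfl; omega) (by rintro rfl; omega) (by rintro rfl; omega)
                  (by rintro rfl; omega) a2r.ne (by rintro rfl; omega)
                  apz.ne aqz.ne hrz1.symm (by rintro rfl; omega) (by rintro rfl; omega)
                  (by rintro rfl; omega) hpq (by rintro rfl; omega) (by rintro rfl; omega)
      · -- w = v and m = σ
        subst ew; subst em
        rcases (show G.dist r z1 = 1 ∨ G.dist r z1 = 2 by omega) with h | h
        · exact kill_r1 h hex34v fw0
        · rcases hex21σ r (by omega) with rfl | rfl | rfl | rfl | rfl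
          · omega
          · exact hrz3 rfl
          · exact hru rfl
          · omega
          · omega
    · rcases hcm with ⟨em, fm0, fm1⟩ | ⟨em, fm1⟩
      · -- w = σ and m = v'
        subst ew; subst em
        rcases (show G.dist r z1 = 1 ∨ G.dist r z1 = 2 by omega) with h | h
        · have har : G.Adj z1 r := adj_of_dist1 (by rw [SimpleGraph.dist_comm]; exact h)
          have dr0 : G.dist r z0 = 1 := by
            rcases hnbr1 r har with rfl | rfl | rfl | rfl
            · omega
            · omega
            · exact dp0
            · exact dq0
          obtain ⟨hr3, hruu, hr4⟩ := key_e r a2r dr2 dr0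
          rcases hexu4 r (by omega) with rfl | rfl | rfl | rfl | rfl
          · omega
          · omega
          · exact hrz1 rfl
          · omega
          · omega
        · rcases hex21σ r (by omega) with rfl | rfl | rfl | rfl | rfl
          · omega
          · exact hrz3 rfl
          · exact hru rfl
          · omega
          · omega
      · -- w = σ = m
        have hwm : w = m := by rw [ew, em]
        have dwu : G.dist w u = 1 := by
          rw [hwm, SimpleGraph.dist_comm]
          exact dist1 aum
        obtain ⟨x, hx, hxne⟩ := exists_ne_mem hndb au3.symm
        obtain ⟨κ, hκa, hκ3, hκu⟩ := gateway hconn au3.symm hx hxne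
        rcases hnbr3 κ hκa with rfl | rfl | rfl | rfl
        · omega
        · omega
        · omega
        · omega
  · -- d(u,z3) = 2
    obtain ⟨w1, w2, aw1, aw2, hw12, hw1z2, hw1z4, hw2z2, hw2z4⟩ :=
      nbr_pair hreg z3 z2 z4 a23.symm a34 (by rintro rfl; omega)
    have key_w : ∀ w : V, G.Adj z3 w → w ≠ z2 → w ≠ z4 →
        (w = v ∧ G.dist w z0 = 2) ∨ (w = σ ∧ G.dist w z1 = 3) := by
      intro w aw hwz2 hwz4
      have dw3 : G.dist w z3 = 1 := by rw [SimpleGraph.dist_comm]; exact dist1 aw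
      have d3w : G.dist z3 w = 1 := dist1 aw
      have h1 : G.dist w z1 ≠ 1 := by
        intro h
        have t' := tri hconn z3 w z0
        rcases hnbr1 w (adj_of_dist1 (by rw [SimpleGraph.dist_comm]; exact h)) with
          rfl | rfl | rfl | rfl
        · omega
        · exact hwz2 rfl
        · omega
        · omega
      have hw1le : G.dist w z1 ≤ 3 := by have := tri hconn w z3 z1; omega
      have hw1ge : 1 ≤ G.dist w z1 := by
        have h0 : G.dist w z1 ≠ 0 := by
          intro h
          have := eq_of_dist0 hconn h
          subst this
          omega
        omega
      have hc0w : G.dist z0 w = G.dist w z0 := by rw [SimpleGraph.dist_comm]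
      have hw0ge : 2 ≤ G.dist w z0 := by have := tri hconn z3 w z0; omega
      have hw0le : G.dist w z0 ≤ 4 := by have := tri hconn w z1 z0; omega
      have h23 : ¬ (G.dist w z1 = 2 ∧ G.dist w z0 = 3) := by
        rintro ⟨ha', hb'⟩
        rcases hD23 w ha' hb' with rfl | rfl
        · omega
        · omega
      have h04 : G.dist w z0 ≠ 4 := by
        intro h
        have hw1' : G.dist w z1 = 3 := by have := tri hconn w z1 z0; omega
        rcases hex w (by omega) with rfl | rfl | rfl | rfl | rfl
        · omega
        · exact hwz2 rfl
        · omega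
        · exact hwz4 rfl
        · omega
      by_cases h33 : G.dist w z1 = 3 ∧ G.dist w z0 = 3
      · -- (3,3) : w = σ
        have hw2 : G.dist w z2 = 2 := by
          have t1 := tri hconn w z2 z1
          have t2 := tri hconn w z3 z2
          omega
        right
        rcases hex21σ w (by omega) with rfl | rfl | rfl | rfl | rfl
        · omega
        · omega
        · omega
        · omega
        · exact ⟨rfl, h33.1⟩
      · -- remaining: d(w,z0) = 2, w = v
        have hw0 : G.dist w z0 = 2 := by
          rcases (show G.dist w z1 = 2 ∨ G.dist w z1 = 3 by omega) with h' | h' <;> omega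
        have dw4 : G.dist w z4 = 2 := by
          have t1 := tri hconn w z3 z4
          have t2 := tri hconn z0 w z4
          omega
        left
        rcases hex34v w (by omega) with rfl | rfl | rfl | rfl | rfl
        · omega
        · exact absurd rfl hwz2
        · omega
        · omega
        · exact ⟨rfl, hw0⟩
    rcases key_w w1 aw1 hw1z2 hw1z4 with ⟨e1, f1⟩ | ⟨e1, f1⟩ <;>
      rcases key_w w2 aw2 hw2z2 hw2z4 with ⟨e2, f2⟩ | ⟨e2, f2⟩
    · exact hw12 (e1.trans e2.symm)
    · -- w1 = v, w2 = σ
      subst e1; subst e2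
      rcases (show G.dist r z1 = 1 ∨ G.dist r z1 = 2 by omega) with h | h
      · exact kill_r1 h hex34v f1
      · rcases hex21σ r (by omega) with rfl | rfl | rfl | rfl | rfl
        · omega
        · exact hrz3 rfl
        · exact hru rfl
        · omega
        · omega
    · -- w1 = σ, w2 = v
      subst e1; subst e2
      rcases (show G.dist r z1 = 1 ∨ G.dist r z1 = 2 by omega) with h | h
      · exact kill_r1 h hex34v f2
      · rcases hex21σ r (by omega) with rfl | rfl | rfl | rfl | rfl
        · omega
        · exact hrz3 rfl
        · exact hru rfl
        · omega
        · omega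
    · exact hw12 (e1.trans e2.symm)

end Patterns

end NDB14

open NDB14 in
set_option maxHeartbeats 1600000 in
/-- Let `Γ` be a regular NDB graph with valency `4`, diameter `4`
and `γ = 5`, and let `x 0, x 1, x 2, x 3, x 4` be a shortest path between
vertices at distance `4`. Then `|D^1_2(x 1, x 0)| = 2`,
`|D^2_3(x 1, x 0)| = |D^3_4(x 1, x 0)| = 1`, and the unique vertex `u` of
`D^1_2(x 1, x 0)` different from `x 2` is adjacent to both `x 2` and `x 3`. -/
theorem stmt_14 {V : Type*} [Fintype V] (G : SimpleGraph V) [DecidableRel G.Adj]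
    (hconn : G.Connected) (hreg : G.IsRegularOfDegree 4)
    (hdiam : HasDiam G 4) (hndb : IsNDB G 5) (x : ℕ → V)
    (hadj : ∀ i < 4, G.Adj (x i) (x (i + 1)))
    (hgeo : G.dist (x 0) (x 4) = 4) :
    (ndbD G (x 1) (x 0) 1 2).card = 2 ∧
    (ndbD G (x 1) (x 0) 2 3).card = 1 ∧
    (ndbD G (x 1) (x 0) 3 4).card = 1 ∧
    ∀ u ∈ ndbD G (x 1) (x 0) 1 2, u ≠ x 2 → G.Adj u (x 2) ∧ G.Adj u (x 3) := by
  classical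
  have a01 : G.Adj (x 0) (x 1) := hadj 0 (by norm_num)
  have a12 : G.Adj (x 1) (x 2) := hadj 1 (by norm_num)
  have a23 : G.Adj (x 2) (x 3) := hadj 2 (by norm_num)
  have a34 : G.Adj (x 3) (x 4) := hadj 3 (by norm_num)
  obtain ⟨d01, d02, d03, d12, d13, d14, d23, d24, d34, d10, d20, d30, d40, d21, d31, d41,
    d32, d42, d43, s0, s1, s2, s3, s4⟩ := geo2 hconn a01 a12 a23 a34 hgeo
  have hdiam' : ∀ u v : V, G.dist u v ≤ 4 := hdiam.1
  -- the extra vertex u of W(x1, x0)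
  obtain ⟨u, humem, huy1, huy2, huy3, huy4⟩ := exists_extra hndb a01.symm
    (x 1) (x 2) (x 3) (x 4) (by omega) (by omega) (by omega) (by omega)
    (by intro h; rw [h] at d21; omega) (by intro h; rw [h] at d31; omega)
    (by intro h; rw [h] at d41; omega) (by intro h; rw [h] at d32; omega)
    (by intro h; rw [h] at d42; omega) (by intro h; rw [h] at d43; omega)
  have hex : ∀ t : V, G.dist t (x 1) < G.dist t (x 0) →
      t = x 1 ∨ t = x 2 ∨ t = x 3 ∨ t = x 4 ∨ t = u := by
    intro t ht
    exact exact5 hndb a01.symm (x 1) (x 2) (x 3) (x 4) u (by omega) (by omega) (by omega)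
      (by omega) humem (by intro h; rw [h] at d21; omega) (by intro h; rw [h] at d31; omega)
      (by intro h; rw [h] at d41; omega) (fun h => huy1 h.symm)
      (by intro h; rw [h] at d32; omega) (by intro h; rw [h] at d42; omega)
      (fun h => huy2 h.symm) (by intro h; rw [h] at d43; omega)
      (fun h => huy3 h.symm) (fun h => huy4 h.symm) ht
  have su : G.dist u u = 0 := SimpleGraph.dist_self
  have hu0le : G.dist u (x 0) ≤ G.dist u (x 1) + 1 := by
    have := tri hconn u (x 1) (x 0); omega
  have hu0' : G.dist u (x 0) = G.dist u (x 1) + 1 := by omega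
  have hu1ne : G.dist u (x 1) ≠ 0 := fun h => huy1 (eq_of_dist0 hconn h)
  have hu0d : G.dist u (x 0) ≤ 4 := hdiam' u (x 0)
  have hu1cases : G.dist u (x 1) = 1 ∨ G.dist u (x 1) = 2 ∨ G.dist u (x 1) = 3 := by omega
  rcases hu1cases with hu1 | hu1 | hu1
  · -- u ∈ D^1_2 : this is the desired case once we rule out the bad sub-patterns
    have hu0 : G.dist u (x 0) = 2 := by omega
    have du2le : G.dist u (x 2) ≤ 2 := by have := tri hconn u (x 1) (x 2); omega
    have du2ne : G.dist u (x 2) ≠ 0 := fun h => huy2 (eq_of_dist0 hconn h)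
    have du3le : G.dist u (x 3) ≤ 3 := by have := tri hconn u (x 1) (x 3); omega
    have du3ne : G.dist u (x 3) ≠ 0 := fun h => huy3 (eq_of_dist0 hconn h)
    have du3 : G.dist u (x 3) = 1 := by
      rcases (show G.dist u (x 3) = 1 ∨ G.dist u (x 3) = 2 ∨ G.dist u (x 3) = 3 by omega)
        with h3 | h3 | h3
      · exact h3
      · -- d(u, x3) = 2
        exfalso
        have du4ge : 2 ≤ G.dist u (x 4) := by
          have hc : G.dist (x 0) u = G.dist u (x 0) := by rw [SimpleGraph.dist_comm]
          have := tri hconn (x 0) u (x 4); omega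
        have du4le : G.dist u (x 4) ≤ 3 := by have := tri hconn u (x 3) (x 4); omega
        rcases (show G.dist u (x 4) = 2 ∨ G.dist u (x 4) = 3 by omega) with h4 | h4
        · -- κ-argument
          obtain ⟨κ, hκa, hκu⟩ := step hconn
            (show G.dist (x 4) u = 1 + 1 by rw [SimpleGraph.dist_comm]; exact h4)
          have hκ1 : G.dist κ (x 1) ≤ 2 := by
            have := tri hconn κ u (x 1); omega
          have hκ4 : G.dist κ (x 4) = 1 := by rw [SimpleGraph.dist_comm]; exact dist1 hκa
          have hκ0 : 3 ≤ G.dist κ (x 0) := by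
            have hc : G.dist (x 0) κ = G.dist κ (x 0) := by rw [SimpleGraph.dist_comm]
            have := tri hconn (x 0) κ (x 4); omega
          have hκ0' : G.dist κ (x 0) = 3 := by
            have := tri hconn κ (x 1) (x 0); omega
          have hκ1' : G.dist κ (x 1) = 2 := by
            have := tri hconn κ (x 1) (x 0); omega
          rcases hex κ (by omega) with rfl | rfl | rfl | rfl | rfl
          · omega
          · omega
          · -- κ = x 3 : then d(x3, u) = 1, contradiction with h3
            rw [SimpleGraph.dist_comm] at hκu; omega
          · omega
          · omega
        · -- reversed C1
          have hex34 : ∀ t : V, G.dist t (x 3) < G.dist t (x 4) →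
              t = x 3 ∨ t = x 2 ∨ t = x 1 ∨ t = x 0 ∨ t = u := by
            intro t ht
            exact exact5 hndb a34 (x 3) (x 2) (x 1) (x 0) u (by omega) (by omega)
              (by omega) (by omega) (by omega) (by rintro h; rw [h] at d32; omega)
              (by rintro h; rw [h] at d31; omega) (by rintro h; rw [h] at d30; omega)
              (fun h => huy3 h.symm) (by rintro h; rw [h] at d21; omega)
              (by rintro h; rw [h] at d20; omega) (fun h => huy2 h.symm)
              (by rintro h; rw [h] at d10; omega) (fun h => huy1 h.symm)
              (by intro h; rw [← h] at h3; omega) ht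
          exact kill_C1 hconn hreg hndb (x 4) (x 3) (x 2) (x 1) (x 0) u a34.symm a23.symm
            a12.symm a01.symm (by rw [SimpleGraph.dist_comm]; exact hgeo) hex34
            h3 h4 hu1 hu0
      · exact (kill_P1 hconn hreg hndb (x 0) (x 1) (x 2) (x 3) (x 4) u a01 a12 a23 a34
          hgeo hex hu1 hu0 h3 huy2).elim
    have du2 : G.dist u (x 2) = 1 := by
      rcases (show G.dist u (x 2) = 1 ∨ G.dist u (x 2) = 2 by omega) with h2 | h2
      · exact h2
      · exact (kill_P3 hconn hreg hndb (x 0) (x 1) (x 2) (x 3) (x 4) u a01 a12 a23 a34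
          hgeo hex hu1 hu0 du3 h2).elim
    -- now compute the three sets
    have h12set : ndbD G (x 1) (x 0) 1 2 = {x 2, u} := by
      ext t
      simp only [ndbD, Finset.mem_filter, Finset.mem_univ, true_and, Finset.mem_insert,
        Finset.mem_singleton]
      constructor
      · rintro ⟨h1, h0⟩
        rcases hex t (by omega) with rfl | rfl | rfl | rfl | rfl
        · exact (by omega : False).elim
        · exact Or.inl rfl
        · exact (by omega : False).elim
        · exact (by omega : False).elim
        · exact Or.inr rfl
      · rintro (rfl | rfl)
        · exact ⟨d21, d20⟩
        · exact ⟨hu1, hu0⟩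
    have h23set : ndbD G (x 1) (x 0) 2 3 = {x 3} := by
      ext t
      simp only [ndbD, Finset.mem_filter, Finset.mem_univ, true_and, Finset.mem_singleton]
      constructor
      · rintro ⟨h1, h0⟩
        rcases hex t (by omega) with rfl | rfl | rfl | rfl | rfl
        · exact (by omega : False).elim
        · exact (by omega : False).elim
        · rfl
        · exact (by omega : False).elim
        · exact (by omega : False).elim
      · rintro rfl
        exact ⟨d31, d30⟩
    have h34set : ndbD G (x 1) (x 0) 3 4 = {x 4} := by
      ext t
      simp only [ndbD, Finset.mem_filter, Finset.mem_univ, true_and, Finset.mem_singleton]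
      constructor
      · rintro ⟨h1, h0⟩
        rcases hex t (by omega) with rfl | rfl | rfl | rfl | rfl
        · exact (by omega : False).elim
        · exact (by omega : False).elim
        · exact (by omega : False).elim
        · rfl
        · exact (by omega : False).elim
      · rintro rfl
        exact ⟨d41, d40⟩
    refine ⟨?_, ?_, ?_, ?_⟩
    · rw [h12set, Finset.card_insert_of_notMem (by simp; exact fun h => huy2 h.symm),
        Finset.card_singleton]
    · rw [h23set, Finset.card_singleton]
    · rw [h34set, Finset.card_singleton]
    · intro t ht htne
      rw [h12set] at ht
      simp only [Finset.mem_insert, Finset.mem_singleton] at ht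
      rcases ht with rfl | rfl
      · exact absurd rfl htne
      · exact ⟨adj_of_dist1 du2, adj_of_dist1 du3⟩
  · -- u ∈ D^2_3 : impossible
    exfalso
    have hu0 : G.dist u (x 0) = 3 := by omega
    -- u is adjacent to x 2
    obtain ⟨κ, hκa, hκ1⟩ := step hconn (show G.dist u (x 1) = 1 + 1 from hu1)
    have hκ0 : G.dist κ (x 0) = 2 := by
      have t1 := tri hconn u κ (x 0)
      have t2 := tri hconn κ (x 1) (x 0)
      rw [dist1 hκa] at t1
      omega
    have hκ2 : κ = x 2 := by
      rcases hex κ (by omega) with rfl | rfl | rfl | rfl | rfl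
      · omega
      · rfl
      · omega
      · omega
      · rw [dist1 hκa] at su; omega
    have au2 : G.Adj u (x 2) := by rw [← hκ2]; exact hκa
    clear hκa hκ1 hκ0 hκ2
    have du2 : G.dist u (x 2) = 1 := by rw [SimpleGraph.dist_comm]; exact dist1 au2.symm
    have du3le : G.dist u (x 3) ≤ 2 := by have := tri hconn u (x 2) (x 3); omega
    have du3ne : G.dist u (x 3) ≠ 0 := fun h => huy3 (eq_of_dist0 hconn h)
    have du4ge : 1 ≤ G.dist u (x 4) := by
      have h0 : G.dist u (x 4) ≠ 0 := fun h => huy4 (eq_of_dist0 hconn h)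
      omega
    have du4le : G.dist u (x 4) ≤ 3 := by have := tri hconn u (x 3) (x 4); omega
    rcases (show G.dist u (x 4) = 1 ∨ G.dist u (x 4) = 2 ∨ G.dist u (x 4) = 3 by omega)
      with h4 | h4 | h4
    · exact kill_T2d1 hconn hreg hndb hdiam' (x 0) (x 1) (x 2) (x 3) (x 4) u a01 a12 a23
        a34 hgeo hex hu1 hu0 h4 huy3
    · rcases (show G.dist u (x 3) = 1 ∨ G.dist u (x 3) = 2 by omega) with h3 | h3
      · exact kill_C1 hconn hreg hndb (x 0) (x 1) (x 2) (x 3) (x 4) u a01 a12 a23 a34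
          hgeo hex hu1 hu0 h3 h4
      · exact kill_C3 hconn hreg hndb (x 0) (x 1) (x 2) (x 3) (x 4) u a01 a12 a23 a34
          hgeo hex hu1 hu0 h3 h4
    · have h3 : G.dist u (x 3) = 2 := by
        have := tri hconn u (x 3) (x 4); omega
      exact kill_C4 hconn hreg hndb (x 0) (x 1) (x 2) (x 3) (x 4) u a01 a12 a23 a34
        hgeo hex hu1 hu0 h3 h4
  · -- u ∈ D^3_4 : impossible
    exact (kill_D34 hconn hreg hndb (x 0) (x 1) (x 2) (x 3) (x 4) u a01 a12 a23 a34
      hgeo hex hu1 (by omega) huy4).elim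
end

section
/- Let Γ be a regular nicely distance-balanced graph with valency k = 5, diameter d = 3 and γ(Γ) = 4. Then for every edge x_0 x_1 of Γ we have |D^1_2(x_1,x_0)| = |D^2_1(x_1,x_0)| = 2. -/
set_option linter.unusedSectionVars false

open SimpleGraph Finset

section NDBAux

variable {V : Type*} [Fintype V] [DecidableEq V] {G : SimpleGraph V} [DecidableRel G.Adj]

lemma mem_ndbD {u v x : V} {i j : ℕ} :
    x ∈ ndbD G u v i j ↔ G.dist x u = i ∧ G.dist x v = j := by
  simp [ndbD]

lemma ndbD_swap (u v : V) (i j : ℕ) : ndbD G u v i j = ndbD G v u j i := by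
  ext x; simp [ndbD, and_comm]

lemma adj_dist_one {a b : V} (h : G.Adj a b) : G.dist a b = 1 :=
  SimpleGraph.dist_eq_one_iff_adj.mpr h

lemma dist_one_adj {a b : V} (h : G.dist a b = 1) : G.Adj a b :=
  SimpleGraph.dist_eq_one_iff_adj.mp h

lemma exists_step (hconn : G.Connected) {x u : V} {n : ℕ} (hd : G.dist x u = n + 1) :
    ∃ p, G.Adj x p ∧ G.dist p u = n := by
  obtain ⟨w, hw⟩ := hconn.exists_walk_length_eq_dist x u
  cases w with
  | nil => simp [SimpleGraph.dist_self] at hd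
  | @cons _ p _ hadj q =>
    refine ⟨p, hadj, ?_⟩
    have h1 : G.dist p u ≤ n := by
      have hle := SimpleGraph.dist_le q
      have hl : q.length + 1 = n + 1 := by
        simpa [SimpleGraph.Walk.length_cons, hd] using hw
      omega
    have h2 : n + 1 ≤ 1 + G.dist p u := by
      calc n + 1 = G.dist x u := hd.symm
        _ ≤ G.dist x p + G.dist p u := hconn.dist_triangle
        _ = 1 + G.dist p u := by rw [adj_dist_one hadj]
    omega

lemma W_card (hconn : G.Connected) (hd3 : ∀ x y : V, G.dist x y ≤ 3) {u v : V}
    (h : G.Adj u v) :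
    (ndbW G u v).card = 1 + (ndbD G u v 1 2).card + (ndbD G u v 2 3).card := by
  have hset : ndbW G u v = ndbD G u v 0 1 ∪ (ndbD G u v 1 2 ∪ ndbD G u v 2 3) := by
    ext x
    have e1 : G.dist x v ≤ G.dist x u + 1 := by
      have := hconn.dist_triangle (u := x) (v := u) (w := v)
      rwa [adj_dist_one h] at this
    have e2 : G.dist x u ≤ G.dist x v + 1 := by
      have := hconn.dist_triangle (u := x) (v := v) (w := u)
      rwa [adj_dist_one h.symm] at this
    have e3 := hd3 x v
    simp only [ndbW, ndbD, mem_filter, mem_univ, true_and, mem_union]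
    omega
  have d1 : Disjoint (ndbD G u v 1 2) (ndbD G u v 2 3) := by
    rw [Finset.disjoint_left]; intro x h1 h2
    rw [mem_ndbD] at h1 h2; omega
  have d2 : Disjoint (ndbD G u v 0 1) (ndbD G u v 1 2 ∪ ndbD G u v 2 3) := by
    rw [Finset.disjoint_left]; intro x h1 h2
    rw [mem_union] at h2; rw [mem_ndbD] at h1
    rcases h2 with h2 | h2 <;> rw [mem_ndbD] at h2 <;> omega
  have hu : ndbD G u v 0 1 = {u} := by
    ext x; rw [mem_ndbD, mem_singleton]
    constructor
    · rintro ⟨h0, -⟩; exact hconn.dist_eq_zero_iff.mp h0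
    · rintro rfl; exact ⟨SimpleGraph.dist_self, adj_dist_one h⟩
  rw [hset, card_union_of_disjoint d2, card_union_of_disjoint d1, hu, card_singleton]
  omega

lemma key1 (hconn : G.Connected) (hdiam : HasDiam G 3) (hndb : IsNDB G 4) {u v : V}
    (h : G.Adj u v) :
    1 + (ndbD G u v 1 2).card + (ndbD G u v 2 3).card = 4 := by
  rw [← W_card hconn hdiam.1 h]; exact (hndb u v h).1

lemma N_card (hconn : G.Connected) (hreg : G.IsRegularOfDegree 5) {u v : V}
    (h : G.Adj u v) :
    1 + (ndbD G u v 1 1).card + (ndbD G u v 1 2).card = 5 := by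
  have hset : G.neighborFinset u = ndbD G u v 1 0 ∪ (ndbD G u v 1 1 ∪ ndbD G u v 1 2) := by
    ext x
    have e1 : G.dist x v ≤ G.dist x u + 1 := by
      have := hconn.dist_triangle (u := x) (v := u) (w := v)
      rwa [adj_dist_one h] at this
    have hadj : x ∈ G.neighborFinset u ↔ G.dist x u = 1 := by
      rw [mem_neighborFinset]
      constructor
      · intro ha; exact adj_dist_one ha.symm
      · intro hd; exact (dist_one_adj hd).symm
    rw [hadj]
    simp only [ndbD, mem_filter, mem_univ, true_and, mem_union]
    omega
  have d1 : Disjoint (ndbD G u v 1 1) (ndbD G u v 1 2) := by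
    rw [Finset.disjoint_left]; intro x h1 h2
    rw [mem_ndbD] at h1 h2; omega
  have d2 : Disjoint (ndbD G u v 1 0) (ndbD G u v 1 1 ∪ ndbD G u v 1 2) := by
    rw [Finset.disjoint_left]; intro x h1 h2
    rw [mem_union] at h2; rw [mem_ndbD] at h1
    rcases h2 with h2 | h2 <;> rw [mem_ndbD] at h2 <;> omega
  have hv : ndbD G u v 1 0 = {v} := by
    ext x; rw [mem_ndbD, mem_singleton]
    constructor
    · rintro ⟨-, h0⟩; exact hconn.dist_eq_zero_iff.mp h0
    · rintro rfl; exact ⟨adj_dist_one h.symm, SimpleGraph.dist_self⟩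
  have hdeg : (G.neighborFinset u).card = 5 := hreg u
  rw [hset, card_union_of_disjoint d2, card_union_of_disjoint d1, hv, card_singleton] at hdeg
  omega

lemma D23_nbr (hconn : G.Connected) {u v : V} (h : G.Adj u v) {w : V}
    (hw : w ∈ ndbD G u v 2 3) :
    ∃ t, t ∈ ndbD G u v 1 2 ∧ G.Adj w t := by
  rw [mem_ndbD] at hw
  obtain ⟨p, hadj, hp⟩ := exists_step hconn (show G.dist w u = 1 + 1 from hw.1)
  refine ⟨p, ?_, hadj⟩
  rw [mem_ndbD]
  have h1 : G.dist p v ≤ 2 := by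
    have := hconn.dist_triangle (u := p) (v := u) (w := v)
    rw [hp, adj_dist_one h] at this; omega
  have h2 : 2 ≤ G.dist p v := by
    have := hconn.dist_triangle (u := w) (v := p) (w := v)
    rw [adj_dist_one hadj, hw.2] at this; omega
  exact ⟨hp, by omega⟩

lemma b_pos (hconn : G.Connected) (hdiam : HasDiam G 3) (hndb : IsNDB G 4) {u v : V}
    (h : G.Adj u v) : 1 ≤ (ndbD G u v 1 2).card := by
  by_contra h0
  push_neg at h0
  have he : (ndbD G u v 2 3).card = 3 := by
    have := key1 hconn hdiam hndb h; omega
  obtain ⟨w, hw⟩ := card_pos.mp (by omega : 0 < (ndbD G u v 2 3).card)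
  obtain ⟨t, ht, -⟩ := D23_nbr hconn h hw
  have : (ndbD G u v 1 2).Nonempty := ⟨t, ht⟩
  rw [← card_pos] at this; omega

lemma b_symm (hconn : G.Connected) (hreg : G.IsRegularOfDegree 5) {u v : V}
    (h : G.Adj u v) : (ndbD G u v 1 2).card = (ndbD G v u 1 2).card := by
  have k1 := N_card hconn hreg h
  have k2 := N_card hconn hreg h.symm
  rw [ndbD_swap u v 1 1] at k1
  omega

lemma bOne_struct (hconn : G.Connected) (hreg : G.IsRegularOfDegree 5)
    (hdiam : HasDiam G 3) (hndb : IsNDB G 4) {u v : V} (huv : G.Adj u v)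
    (hb : (ndbD G u v 1 2).card = 1) :
    ∃ Y W1 W2 P : V, ndbD G u v 2 3 = {W1, W2} ∧ W1 ≠ W2 ∧ Y ≠ P ∧
      G.Adj W1 Y ∧ G.Adj W2 Y ∧ G.Adj W1 P ∧ G.Adj W2 P ∧
      (ndbD G u Y 1 1).card = 1 ∧ G.Adj u Y ∧
      ndbD G u Y 2 3 = ∅ ∧ ndbD G Y u 2 3 = ∅ := by
  obtain ⟨Y, hYset⟩ := Finset.card_eq_one.mp hb
  have hYmem : Y ∈ ndbD G u v 1 2 := hYset ▸ mem_singleton_self Y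
  rw [mem_ndbD] at hYmem
  obtain ⟨hYu, hYv⟩ := hYmem
  have hadjYu : G.Adj Y u := dist_one_adj hYu
  have hadjuY : G.Adj u Y := hadjYu.symm
  -- the two vertices of D23
  have he : (ndbD G u v 2 3).card = 2 := by have := key1 hconn hdiam hndb huv; omega
  obtain ⟨W1, W2, hW12, hWset⟩ := Finset.card_eq_two.mp he
  have hW1 : W1 ∈ ndbD G u v 2 3 := by rw [hWset]; exact mem_insert_self _ _
  have hW2 : W2 ∈ ndbD G u v 2 3 := by rw [hWset]; simp
  have hW1' := mem_ndbD.mp hW1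
  have hW2' := mem_ndbD.mp hW2
  have hadjW1Y : G.Adj W1 Y := by
    obtain ⟨t, ht, hadj⟩ := D23_nbr hconn huv hW1
    rw [hYset, mem_singleton] at ht; rwa [ht] at hadj
  have hadjW2Y : G.Adj W2 Y := by
    obtain ⟨t, ht, hadj⟩ := D23_nbr hconn huv hW2
    rw [hYset, mem_singleton] at ht; rwa [ht] at hadj
  -- |D11(u,v)| = 3
  have ha3 : (ndbD G u v 1 1).card = 3 := by
    have := N_card hconn hreg huv; omega
  -- Y has a neighbour z1 in D11(u,v)
  have hz1 : ∃ z1 ∈ ndbD G u v 1 1, G.Adj Y z1 := by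
    by_contra hno
    push_neg at hno
    have hsub : insert v (ndbD G u v 1 1) ⊆ ndbD G u Y 1 2 := by
      intro z hz
      rw [mem_insert] at hz
      rcases hz with rfl | hz
      · rw [mem_ndbD]
        exact ⟨adj_dist_one huv.symm, by rw [SimpleGraph.dist_comm]; exact hYv⟩
      · have hz' := mem_ndbD.mp hz
        rw [mem_ndbD]
        refine ⟨hz'.1, ?_⟩
        have hne : z ≠ Y := by
          rintro rfl
          rw [hz'.2] at hYv
          exact absurd hYv (by omega)
        have h1 : G.dist z Y ≤ 2 := by
          have := hconn.dist_triangle (u := z) (v := u) (w := Y)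
          rw [hz'.1, adj_dist_one hadjuY] at this; omega
        have h2 : G.dist z Y ≠ 1 := fun hh => hno z hz (dist_one_adj hh).symm
        have h0 : G.dist z Y ≠ 0 := fun hh => hne (hconn.dist_eq_zero_iff.mp hh)
        omega
    have hvZ : v ∉ ndbD G u v 1 1 := by
      rw [mem_ndbD]; intro hc
      have := hc.2; rw [SimpleGraph.dist_self] at this; omega
    have hcard : 4 ≤ (ndbD G u Y 1 2).card := by
      calc 4 = (insert v (ndbD G u v 1 1)).card := by
              rw [card_insert_of_notMem hvZ, ha3]
        _ ≤ _ := card_le_card hsub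
    have := key1 hconn hdiam hndb hadjuY
    omega
  obtain ⟨z1, hz1Z, hadjYz1⟩ := hz1
  have hz1' := mem_ndbD.mp hz1Z
  -- distinctness
  have hne_uW1 : u ≠ W1 := by
    rintro rfl; have := hW1'.1; rw [SimpleGraph.dist_self] at this; omega
  have hne_uW2 : u ≠ W2 := by
    rintro rfl; have := hW2'.1; rw [SimpleGraph.dist_self] at this; omega
  have hne_uz1 : u ≠ z1 := by
    rintro rfl; have := hz1'.1; rw [SimpleGraph.dist_self] at this; omega
  have hne_W1z1 : W1 ≠ z1 := by
    rintro rfl; have h1 := hW1'.2; have h2 := hz1'.2; omega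
  have hne_W2z1 : W2 ≠ z1 := by
    rintro rfl; have h1 := hW2'.2; have h2 := hz1'.2; omega
  -- the fifth neighbour P of Y
  set S : Finset V := {u, W1, W2, z1} with hS
  have hScard : S.card = 4 := by
    rw [hS, card_insert_of_notMem (by simp [hne_uW1, hne_uW2, hne_uz1]),
      card_insert_of_notMem (by simp [hW12, hne_W1z1]),
      card_insert_of_notMem (by simp [hne_W2z1]), card_singleton]
  have hSsub : S ⊆ G.neighborFinset Y := by
    intro t ht
    rw [mem_neighborFinset]
    rw [hS] at ht; simp only [mem_insert, mem_singleton] at ht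
    rcases ht with rfl | rfl | rfl | rfl
    · exact hadjYu
    · exact hadjW1Y.symm
    · exact hadjW2Y.symm
    · exact hadjYz1
  have hNcard : (G.neighborFinset Y).card = 5 := hreg Y
  have hdiff : (G.neighborFinset Y \ S).card = 1 := by
    rw [card_sdiff_of_subset hSsub, hNcard, hScard]
  obtain ⟨P, hPset⟩ := card_eq_one.mp hdiff
  have hPmem : P ∈ G.neighborFinset Y \ S := hPset ▸ mem_singleton_self P
  rw [mem_sdiff, mem_neighborFinset] at hPmem
  obtain ⟨hadjYP, hPnotS⟩ := hPmem
  rw [hS] at hPnotS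
  simp only [mem_insert, mem_singleton, not_or] at hPnotS
  obtain ⟨hPu', hPW1, hPW2, hPz1⟩ := hPnotS
  have hNY : G.neighborFinset Y = insert P S := by
    refine (Finset.eq_of_subset_of_card_le ?_ ?_).symm
    · intro t ht
      rw [mem_insert] at ht
      rcases ht with rfl | ht
      · rw [mem_neighborFinset]; exact hadjYP
      · exact hSsub ht
    · rw [hNcard, card_insert_of_notMem (by rw [hS]; simp [hPu', hPW1, hPW2, hPz1]),
        hScard]
  -- common neighbours of Y and W1 are exactly {W2, P}
  have hexcl : ∀ (W : V), W ∈ ndbD G u v 2 3 → ∀ t, t ∈ ndbD G Y W 1 1 →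
      t = W2 ∨ t = W1 ∨ t = P := by
    intro W hW t ht
    have hW' := mem_ndbD.mp hW
    have ht' := mem_ndbD.mp ht
    have htN : t ∈ G.neighborFinset Y := by
      rw [mem_neighborFinset]; exact (dist_one_adj ht'.1).symm
    rw [hNY, mem_insert] at htN
    rcases htN with rfl | htS
    · right; right; rfl
    · rw [hS] at htS; simp only [mem_insert, mem_singleton] at htS
      rcases htS with rfl | rfl | rfl | rfl
      · -- t = u : but dist u W = 2, contradiction with dist t W = 1
        exfalso
        have : G.dist t W = 2 := by rw [SimpleGraph.dist_comm]; exact hW'.1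
        omega
      · right; left; rfl
      · left; rfl
      · -- t = z1 : dist z1 v = 1, dist W v = 3, dist z1 W = 1 impossible
        exfalso
        have htri := hconn.dist_triangle (u := W) (v := t) (w := v)
        have h1 : G.dist W t = 1 := by rw [SimpleGraph.dist_comm]; exact ht'.2
        rw [h1, hz1'.2, hW'.2] at htri
        omega
  have hcommon : ∀ (W W' : V), W ∈ ndbD G u v 2 3 → W' ∈ ndbD G u v 2 3 →
      W ≠ W' → G.Adj W Y → 2 ≤ (ndbD G Y W 1 1).card := by
    intro W W' hW hW' hne hadjWY
    have hadjYW : G.Adj Y W := hadjWY.symm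
    have hWd := mem_ndbD.mp hW
    have hvin : v ∈ ndbD G Y W 2 3 := by
      rw [mem_ndbD]
      constructor
      · rw [SimpleGraph.dist_comm]; exact hYv
      · rw [SimpleGraph.dist_comm]; exact hWd.2
    have hepos : 1 ≤ (ndbD G Y W 2 3).card := card_pos.mpr ⟨v, hvin⟩
    have hk1 := key1 hconn hdiam hndb hadjYW
    have hk2 := N_card hconn hreg hadjYW
    omega
  -- Adjacencies of P and W1 W2
  have hsub1 : ndbD G Y W1 1 1 ⊆ {W2, P} := by
    intro t ht
    have := hexcl W1 hW1 t ht
    have ht' := mem_ndbD.mp ht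
    simp only [mem_insert, mem_singleton]
    rcases this with h' | h' | h'
    · left; exact h'
    · exfalso; rw [h'] at ht'; have := ht'.2; rw [SimpleGraph.dist_self] at this; omega
    · right; exact h'
  have heq1 : ndbD G Y W1 1 1 = {W2, P} := by
    refine Finset.eq_of_subset_of_card_le hsub1 ?_
    have : ({W2, P} : Finset V).card ≤ 2 := card_insert_le _ _ |>.trans (by simp)
    have h2 := hcommon W1 W2 hW1 hW2 hW12 hadjW1Y
    omega
  have hadjW1P : G.Adj W1 P := by
    have : P ∈ ndbD G Y W1 1 1 := by rw [heq1]; simp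
    exact (dist_one_adj (mem_ndbD.mp this).2).symm
  have hadjW1W2 : G.Adj W1 W2 := by
    have : W2 ∈ ndbD G Y W1 1 1 := by rw [heq1]; simp
    exact (dist_one_adj (mem_ndbD.mp this).2).symm
  have hsub2 : ndbD G Y W2 1 1 ⊆ {W1, P} := by
    intro t ht
    have := hexcl W2 hW2 t ht
    have ht' := mem_ndbD.mp ht
    simp only [mem_insert, mem_singleton]
    rcases this with h' | h' | h'
    · exfalso; rw [h'] at ht'; have := ht'.2; rw [SimpleGraph.dist_self] at this; omega
    · left; exact h'
    · right; exact h'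
  have heq2 : ndbD G Y W2 1 1 = {W1, P} := by
    refine Finset.eq_of_subset_of_card_le hsub2 ?_
    have : ({W1, P} : Finset V).card ≤ 2 := card_insert_le _ _ |>.trans (by simp)
    have h2 := hcommon W2 W1 hW2 hW1 hW12.symm hadjW2Y
    omega
  have hadjW2P : G.Adj W2 P := by
    have : P ∈ ndbD G Y W2 1 1 := by rw [heq2]; simp
    exact (dist_one_adj (mem_ndbD.mp this).2).symm
  -- P is not adjacent to u
  have hPu : ¬ G.Adj u P := by
    intro hadj
    have hd1 : G.dist P u = 1 := adj_dist_one hadj.symm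
    have hge : 2 ≤ G.dist P v := by
      have htri := hconn.dist_triangle (u := W1) (v := P) (w := v)
      rw [adj_dist_one hadjW1P] at htri
      have := hW1'.2
      omega
    have hle : G.dist P v ≤ 2 := by
      have htri := hconn.dist_triangle (u := P) (v := u) (w := v)
      rw [hd1, adj_dist_one huv] at htri; omega
    have hmem : P ∈ ndbD G u v 1 2 := mem_ndbD.mpr ⟨hd1, by omega⟩
    rw [hYset, mem_singleton] at hmem
    exact G.irrefl (hmem ▸ hadjYP)
  -- common neighbours of u and Y are exactly {z1}
  have hsubz : ndbD G u Y 1 1 ⊆ {z1} := by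
    intro t ht
    have ht' := mem_ndbD.mp ht
    have htN : t ∈ G.neighborFinset Y := by
      rw [mem_neighborFinset]; exact (dist_one_adj ht'.2).symm
    rw [hNY, mem_insert] at htN
    rw [mem_singleton]
    rcases htN with rfl | htS
    · exact absurd (dist_one_adj ht'.1).symm hPu
    · rw [hS] at htS; simp only [mem_insert, mem_singleton] at htS
      rcases htS with rfl | rfl | rfl | rfl
      · exfalso; have := ht'.1; rw [SimpleGraph.dist_self] at this; omega
      · exfalso; have h1 := ht'.1; have h2 := hW1'.1; omega
      · exfalso; have h1 := ht'.1; have h2 := hW2'.1; omega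
      · rfl
  have hz1in : z1 ∈ ndbD G u Y 1 1 :=
    mem_ndbD.mpr ⟨hz1'.1, adj_dist_one hadjYz1.symm⟩
  have hcsz : (ndbD G u Y 1 1).card = 1 := by
    have heqz : ndbD G u Y 1 1 = {z1} :=
      Finset.Subset.antisymm hsubz (singleton_subset_iff.mpr hz1in)
    rw [heqz, card_singleton]
  -- D23(u,Y) and D23(Y,u) are empty
  have hbuY : (ndbD G u Y 1 2).card = 3 := by
    have := N_card hconn hreg hadjuY; omega
  have heuY : ndbD G u Y 2 3 = ∅ := by
    have hk := key1 hconn hdiam hndb hadjuY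
    exact card_eq_zero.mp (by omega)
  have hbYu : (ndbD G Y u 1 2).card = 3 := by
    have h1 := N_card hconn hreg hadjYu
    rw [ndbD_swap Y u 1 1] at h1
    omega
  have heYu : ndbD G Y u 2 3 = ∅ := by
    have hk := key1 hconn hdiam hndb hadjYu
    exact card_eq_zero.mp (by omega)
  exact ⟨Y, W1, W2, P, hWset, hW12, hadjYP.ne, hadjW1Y, hadjW2Y, hadjW1P, hadjW2P,
    hcsz, hadjuY, heuY, heYu⟩

lemma no_b_one (hconn : G.Connected) (hreg : G.IsRegularOfDegree 5)
    (hdiam : HasDiam G 3) (hndb : IsNDB G 4) {u v : V} (huv : G.Adj u v)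
    (hb : (ndbD G u v 1 2).card = 1) : False := by
  obtain ⟨Y, W1, W2, P, hWset, hW12, hYP, hW1Y, hW2Y, hW1P, hW2P, hcsz, hadjuY, heuY, heYu⟩ :=
    bOne_struct hconn hreg hdiam hndb huv hb
  -- a vertex x with d(x,v)=2, d(x,u)=3
  have hbvu : (ndbD G v u 1 2).card = 1 := by
    rw [← b_symm hconn hreg huv]; exact hb
  have hevu : 1 ≤ (ndbD G v u 2 3).card := by
    have := key1 hconn hdiam hndb huv.symm; omega
  obtain ⟨x, hx⟩ := card_pos.mp (by omega : 0 < (ndbD G v u 2 3).card)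
  have hx' := mem_ndbD.mp hx
  have hdYu : G.dist Y u = 1 := adj_dist_one hadjuY.symm
  have hdxY : G.dist x Y = 3 := by
    have hge : 2 ≤ G.dist x Y := by
      have htri := hconn.dist_triangle (u := x) (v := Y) (w := u)
      rw [hdYu] at htri
      have := hx'.2; omega
    have hle := hdiam.1 x Y
    have hne2 : G.dist x Y ≠ 2 := by
      intro h2
      have : x ∈ ndbD G Y u 2 3 := mem_ndbD.mpr ⟨h2, hx'.2⟩
      rw [heYu] at this
      exact absurd this (notMem_empty x)
    omega
  obtain ⟨p, hadjxp, hpu⟩ := exists_step hconn (show G.dist x u = 2 + 1 from hx'.2)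
  have hpY : G.dist p Y = 2 := by
    have hge : 2 ≤ G.dist p Y := by
      have htri := hconn.dist_triangle (u := x) (v := p) (w := Y)
      rw [adj_dist_one hadjxp, hdxY] at htri; omega
    have hle := hdiam.1 p Y
    have hne3 : G.dist p Y ≠ 3 := by
      intro h3
      have : p ∈ ndbD G u Y 2 3 := mem_ndbD.mpr ⟨hpu, h3⟩
      rw [heuY] at this
      exact absurd this (notMem_empty p)
    omega
  have hadjpx : G.Adj p x := hadjxp.symm
  have hu_in : u ∈ ndbD G p x 2 3 :=
    mem_ndbD.mpr ⟨by rw [SimpleGraph.dist_comm]; exact hpu,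
      by rw [SimpleGraph.dist_comm]; exact hx'.2⟩
  have hY_in : Y ∈ ndbD G p x 2 3 :=
    mem_ndbD.mpr ⟨by rw [SimpleGraph.dist_comm]; exact hpY,
      by rw [SimpleGraph.dist_comm]; exact hdxY⟩
  have huY : u ≠ Y := hadjuY.ne
  have he2 : 2 ≤ (ndbD G p x 2 3).card := by
    have hsub : ({u, Y} : Finset V) ⊆ ndbD G p x 2 3 := by
      intro t ht
      simp only [mem_insert, mem_singleton] at ht
      rcases ht with rfl | rfl
      · exact hu_in
      · exact hY_in
    calc 2 = ({u, Y} : Finset V).card := (card_pair huY).symm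
      _ ≤ _ := card_le_card hsub
  have hbpx : (ndbD G p x 1 2).card = 1 := by
    have h1 := key1 hconn hdiam hndb hadjpx
    have h2 := b_pos hconn hdiam hndb hadjpx
    omega
  obtain ⟨Y2, W1', W2', P2, hWset2, hW12', hYP2, hW1Y2, hW2Y2, hW1P2, hW2P2, -, -, -, -⟩ :=
    bOne_struct hconn hreg hdiam hndb hadjpx hbpx
  have hu2 : u ∈ ({W1', W2'} : Finset V) := hWset2 ▸ hu_in
  have hY2 : Y ∈ ({W1', W2'} : Finset V) := hWset2 ▸ hY_in
  simp only [mem_insert, mem_singleton] at hu2 hY2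
  have hAdj : G.Adj u Y2 ∧ G.Adj Y Y2 ∧ G.Adj u P2 ∧ G.Adj Y P2 := by
    rcases hu2 with rfl | rfl <;> rcases hY2 with h' | h'
    · exact absurd h'.symm huY
    · rw [← h'] at hW2Y2 hW2P2; exact ⟨hW1Y2, hW2Y2, hW1P2, hW2P2⟩
    · rw [← h'] at hW1Y2 hW1P2; exact ⟨hW2Y2, hW1Y2, hW2P2, hW1P2⟩
    · exact absurd h'.symm huY
  have hY2mem : Y2 ∈ ndbD G u Y 1 1 :=
    mem_ndbD.mpr ⟨adj_dist_one hAdj.1.symm, adj_dist_one hAdj.2.1.symm⟩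
  have hP2mem : P2 ∈ ndbD G u Y 1 1 :=
    mem_ndbD.mpr ⟨adj_dist_one hAdj.2.2.1.symm, adj_dist_one hAdj.2.2.2.symm⟩
  obtain ⟨c, hc⟩ := card_eq_one.mp hcsz
  rw [hc, mem_singleton] at hY2mem hP2mem
  exact hYP2 (hY2mem.trans hP2mem.symm)

lemma s3_adj (hconn : G.Connected) (hreg : G.IsRegularOfDegree 5)
    (hdiam : HasDiam G 3) (hndb : IsNDB G 4) {a b : V} (h : G.Adj a b) :
    (univ.filter fun x => G.dist x a = 3).card =
      (univ.filter fun x => G.dist x b = 3).card := by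
  have hsplit : ∀ (c d : V), G.Adj c d →
      (univ.filter fun x => G.dist x c = 3) = ndbD G c d 3 2 ∪ ndbD G c d 3 3 := by
    intro c d hcd
    ext x
    have e1 : G.dist x d ≤ G.dist x c + 1 := by
      have := hconn.dist_triangle (u := x) (v := c) (w := d)
      rwa [adj_dist_one hcd] at this
    have e2 : G.dist x c ≤ G.dist x d + 1 := by
      have := hconn.dist_triangle (u := x) (v := d) (w := c)
      rwa [adj_dist_one hcd.symm] at this
    have e3 := hdiam.1 x d
    simp only [ndbD, mem_filter, mem_univ, true_and, mem_union]
    omega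
  have hdisj : ∀ (c d : V), Disjoint (ndbD G c d 3 2) (ndbD G c d 3 3) := by
    intro c d
    rw [Finset.disjoint_left]; intro x h1 h2
    rw [mem_ndbD] at h1 h2; omega
  have hb' := b_symm hconn hreg h
  have hk1 := key1 hconn hdiam hndb h
  have hk2 := key1 hconn hdiam hndb h.symm
  have hswap1 : ndbD G a b 3 2 = ndbD G b a 2 3 := ndbD_swap a b 3 2
  have hswap2 : ndbD G b a 3 2 = ndbD G a b 2 3 := ndbD_swap b a 3 2
  have hswap3 : ndbD G a b 3 3 = ndbD G b a 3 3 := ndbD_swap a b 3 3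
  rw [hsplit a b h, hsplit b a h.symm, card_union_of_disjoint (hdisj a b),
    card_union_of_disjoint (hdisj b a), hswap1, hswap2, hswap3]
  omega

lemma exists_dist3 (hconn : G.Connected) (hreg : G.IsRegularOfDegree 5)
    (hdiam : HasDiam G 3) (hndb : IsNDB G 4) (u : V) :
    ∃ x, G.dist x u = 3 := by
  obtain ⟨u0, v0, h3⟩ := hdiam.2
  have hkey : ∀ {a b : V}, G.Reachable a b →
      (univ.filter fun x => G.dist x a = 3).card =
        (univ.filter fun x => G.dist x b = 3).card := by
    intro a b hr
    obtain ⟨w⟩ := hr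
    induction w with
    | nil => rfl
    | cons hadj _ ih => exact (s3_adj hconn hreg hdiam hndb hadj).trans ih
  have hne : (univ.filter fun x => G.dist x u0 = 3).Nonempty :=
    ⟨v0, by simp [SimpleGraph.dist_comm, h3]⟩
  have h1 : 1 ≤ (univ.filter fun x => G.dist x u0 = 3).card := card_pos.mpr hne
  have h2 := hkey (hconn.preconnected u u0)
  obtain ⟨x, hx⟩ := card_pos.mp (by omega : 0 < (univ.filter fun x => G.dist x u = 3).card)
  rw [mem_filter] at hx
  exact ⟨x, hx.2⟩

lemma no_b_three (hconn : G.Connected) (hreg : G.IsRegularOfDegree 5)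
    (hdiam : HasDiam G 3) (hndb : IsNDB G 4) {u v : V} (huv : G.Adj u v)
    (hb : (ndbD G u v 1 2).card = 3) : False := by
  have he0 : ndbD G u v 2 3 = ∅ := by
    have := key1 hconn hdiam hndb huv
    exact card_eq_zero.mp (by omega)
  have hbvu : (ndbD G v u 1 2).card = 3 := by
    rw [← b_symm hconn hreg huv]; exact hb
  have he0' : ndbD G v u 2 3 = ∅ := by
    have := key1 hconn hdiam hndb huv.symm
    exact card_eq_zero.mp (by omega)
  obtain ⟨x, hxu⟩ := exists_dist3 hconn hreg hdiam hndb u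
  have hxv : G.dist x v = 3 := by
    have hge : 2 ≤ G.dist x v := by
      have htri := hconn.dist_triangle (u := x) (v := v) (w := u)
      rw [adj_dist_one huv.symm] at htri; omega
    have hle := hdiam.1 x v
    have hne2 : G.dist x v ≠ 2 := by
      intro h2
      have : x ∈ ndbD G v u 2 3 := mem_ndbD.mpr ⟨h2, hxu⟩
      rw [he0'] at this
      exact absurd this (notMem_empty x)
    omega
  obtain ⟨p, hadjxp, hpu⟩ := exists_step hconn (show G.dist x u = 2 + 1 from hxu)
  have hpv : G.dist p v = 2 := by
    have hge : 2 ≤ G.dist p v := by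
      have htri := hconn.dist_triangle (u := x) (v := p) (w := v)
      rw [adj_dist_one hadjxp, hxv] at htri; omega
    have hle := hdiam.1 p v
    have hne3 : G.dist p v ≠ 3 := by
      intro h3
      have : p ∈ ndbD G u v 2 3 := mem_ndbD.mpr ⟨hpu, h3⟩
      rw [he0] at this
      exact absurd this (notMem_empty p)
    omega
  have hadjpx : G.Adj p x := hadjxp.symm
  have hu_in : u ∈ ndbD G p x 2 3 :=
    mem_ndbD.mpr ⟨by rw [SimpleGraph.dist_comm]; exact hpu,
      by rw [SimpleGraph.dist_comm]; exact hxu⟩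
  have hv_in : v ∈ ndbD G p x 2 3 :=
    mem_ndbD.mpr ⟨by rw [SimpleGraph.dist_comm]; exact hpv,
      by rw [SimpleGraph.dist_comm]; exact hxv⟩
  have he2 : 2 ≤ (ndbD G p x 2 3).card := by
    have hsub : ({u, v} : Finset V) ⊆ ndbD G p x 2 3 := by
      intro t ht
      simp only [mem_insert, mem_singleton] at ht
      rcases ht with rfl | rfl
      · exact hu_in
      · exact hv_in
    calc 2 = ({u, v} : Finset V).card := (card_pair huv.ne).symm
      _ ≤ _ := card_le_card hsub
  have hbpx : (ndbD G p x 1 2).card = 1 := by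
    have h1 := key1 hconn hdiam hndb hadjpx
    have h2 := b_pos hconn hdiam hndb hadjpx
    omega
  exact no_b_one hconn hreg hdiam hndb hadjpx hbpx

lemma b_eq_two (hconn : G.Connected) (hreg : G.IsRegularOfDegree 5)
    (hdiam : HasDiam G 3) (hndb : IsNDB G 4) {u v : V} (huv : G.Adj u v) :
    (ndbD G u v 1 2).card = 2 := by
  have hk := key1 hconn hdiam hndb huv
  have h1 := b_pos hconn hdiam hndb huv
  have hne1 : (ndbD G u v 1 2).card ≠ 1 := fun hh =>
    no_b_one hconn hreg hdiam hndb huv hh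
  have hne3 : (ndbD G u v 1 2).card ≠ 3 := fun hh =>
    no_b_three hconn hreg hdiam hndb huv hh
  omega

end NDBAux

/-- In a regular NDB graph with valency `5`, diameter `3` and
`γ = 4`, for every edge `x₀x₁` we have `|D^1_2(x₁,x₀)| = |D^2_1(x₁,x₀)| = 2`. -/
theorem stmt_18 {V : Type*} [Fintype V] (G : SimpleGraph V) [DecidableRel G.Adj]
    (hconn : G.Connected) (hreg : G.IsRegularOfDegree 5)
    (hdiam : HasDiam G 3) (hndb : IsNDB G 4)
    (x₀ x₁ : V) (h : G.Adj x₀ x₁) :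
    (ndbD G x₁ x₀ 1 2).card = 2 ∧ (ndbD G x₁ x₀ 2 1).card = 2 := by
  classical
  constructor
  · exact b_eq_two hconn hreg hdiam hndb h.symm
  · rw [← ndbD_swap x₀ x₁ 1 2]
    exact b_eq_two hconn hreg hdiam hndb h
end
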